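/- arXiv:2410.08002 — 7 statements merged into one kernel-verified Lean document; each statement's English description precedes it below -/
import Mathlib

section
/- For every integer d ≥ 1, the pellytope 𝒫_d has exactly n_{d+1} vertices; that is, the set of extreme points of 𝒫_d has cardinality equal to the Pell number n_{d+1}. -/
open Pointwise

/-- Pell's numbers: `pellN 1 = 1`, `pellN 2 = 2`, `pellN k = 2 * pellN (k-1) + pellN (k-2)`. -/
def pellN : ℕ → ℕ
  | 0 => 0
  | 1 => 1
  | n + 2 => 2 * pellN (n + 1) + pellN n

/-- The standard basis vector `e_i` of `ℝ^d` (0-indexed). -/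
noncomputable def stdBasisVec (d i : ℕ) : Fin d → ℝ := fun k => if (k : ℕ) = i then 1 else 0

/-- The pellytope `𝒫_d`, the Minkowski sum
`∑_{i=1}^d Conv{0, e_i} + ∑_{j=1}^{d-1} Conv{0, e_j, e_j + e_{j+1}}` (0-indexed). -/
noncomputable def pellytope (d : ℕ) : Set (Fin d → ℝ) :=
  (∑ i ∈ Finset.range d, convexHull ℝ {0, stdBasisVec d i}) +
    ∑ j ∈ Finset.range (d - 1),
      convexHull ℝ {0, stdBasisVec d j, stdBasisVec d j + stdBasisVec d (j + 1)}

namespace PellAux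

noncomputable def segPt (d i : ℕ) : Bool → (Fin d → ℝ) := fun b => if b then stdBasisVec d i else 0

noncomputable def triPt (d j : ℕ) : Fin 3 → (Fin d → ℝ) := fun v =>
  if v = 0 then 0 else if v = 1 then stdBasisVec d j else stdBasisVec d j + stdBasisVec d (j + 1)

noncomputable def phi (d : ℕ) (ε : ℕ → Bool) (t : ℕ → Fin 3) : Fin d → ℝ :=
  ∑ i ∈ Finset.range d, segPt d i (ε i) + ∑ j ∈ Finset.range (d - 1), triPt d j (t j)

def genSet (d : ℕ) : Set (Fin d → ℝ) := {x | ∃ ε t, phi d ε t = x}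

-- generic: finset-sum of ranges of point maps
lemma sum_range_sets {X ι : Type*} [AddCommMonoid X] [Nonempty ι] (s : Finset ℕ)
    (P : ℕ → ι → X) :
    (∑ i ∈ s, Set.range (P i)) = {x | ∃ f : ℕ → ι, ∑ i ∈ s, P i (f i) = x} := by
  classical
  induction s using Finset.induction_on with
  | empty =>
      ext x
      simp only [Finset.sum_empty, Set.mem_setOf_eq, Set.mem_zero]
      constructor
      · rintro rfl; exact ⟨fun _ => Classical.arbitrary ι, rfl⟩
      · rintro ⟨f, rfl⟩; rfl
  | @insert a s ha ih =>
      ext x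
      simp only [Finset.sum_insert ha, Set.mem_add, ih, Set.mem_range, Set.mem_setOf_eq]
      constructor
      · rintro ⟨y, ⟨v, rfl⟩, z, ⟨f, rfl⟩, rfl⟩
        refine ⟨Function.update f a v, ?_⟩
        rw [Function.update_self]
        congr 1
        exact Finset.sum_congr rfl fun i hi => by
          rw [Function.update_of_ne (by rintro rfl; exact ha hi)]
      · rintro ⟨f, rfl⟩
        exact ⟨P a (f a), ⟨f a, rfl⟩, _, ⟨f, rfl⟩, rfl⟩

end PellAux

namespace PellAux

lemma range_segPt (d i : ℕ) : Set.range (segPt d i) = {0, stdBasisVec d i} := by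
  ext x
  constructor
  · rintro ⟨b, rfl⟩; cases b <;> simp [segPt]
  · rintro (rfl | rfl)
    · exact ⟨false, by simp [segPt]⟩
    · exact ⟨true, by simp [segPt]⟩

lemma range_triPt (d j : ℕ) :
    Set.range (triPt d j) = {0, stdBasisVec d j, stdBasisVec d j + stdBasisVec d (j + 1)} := by
  ext x
  constructor
  · rintro ⟨v, rfl⟩; fin_cases v <;> simp [triPt]
  · rintro (rfl | rfl | rfl)
    · exact ⟨0, by simp [triPt]⟩
    · exact ⟨1, by simp [triPt]⟩
    · exact ⟨2, by simp [triPt]⟩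

lemma pellytope_eq (d : ℕ) : pellytope d = convexHull ℝ (genSet d) := by
  have h1 : (∑ i ∈ Finset.range d, convexHull ℝ ({0, stdBasisVec d i} : Set (Fin d → ℝ)))
      = convexHull ℝ (∑ i ∈ Finset.range d, ({0, stdBasisVec d i} : Set (Fin d → ℝ))) :=
    (convexHull_sum _ _).symm
  have h2 : (∑ j ∈ Finset.range (d - 1),
        convexHull ℝ ({0, stdBasisVec d j, stdBasisVec d j + stdBasisVec d (j + 1)}
          : Set (Fin d → ℝ)))
      = convexHull ℝ (∑ j ∈ Finset.range (d - 1),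
          ({0, stdBasisVec d j, stdBasisVec d j + stdBasisVec d (j + 1)} : Set (Fin d → ℝ))) :=
    (convexHull_sum _ _).symm
  rw [pellytope, h1, h2, ← convexHull_add]
  congr 1
  have e1 : (∑ i ∈ Finset.range d, ({0, stdBasisVec d i} : Set (Fin d → ℝ)))
      = {x | ∃ f : ℕ → Bool, ∑ i ∈ Finset.range d, segPt d i (f i) = x} := by
    rw [← sum_range_sets]
    exact Finset.sum_congr rfl fun i _ => (range_segPt d i).symm
  have e2 : (∑ j ∈ Finset.range (d - 1),
        ({0, stdBasisVec d j, stdBasisVec d j + stdBasisVec d (j + 1)} : Set (Fin d → ℝ)))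
      = {x | ∃ g : ℕ → Fin 3, ∑ j ∈ Finset.range (d - 1), triPt d j (g j) = x} := by
    rw [← sum_range_sets]
    exact Finset.sum_congr rfl fun j _ => (range_triPt d j).symm
  rw [e1, e2]
  ext x
  simp only [Set.mem_add, Set.mem_setOf_eq, genSet, phi]
  constructor
  · rintro ⟨y, ⟨ε, rfl⟩, z, ⟨t, rfl⟩, rfl⟩; exact ⟨ε, t, rfl⟩
  · rintro ⟨ε, t, rfl⟩; exact ⟨_, ⟨ε, rfl⟩, _, ⟨t, rfl⟩, rfl⟩

end PellAux

namespace PellAux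

def Ok (a b : Bool) (v : Fin 3) : Prop :=
  match a, b with
  | true, true => v = 2
  | true, false => v = 1
  | false, true => v ≠ 1
  | false, false => v = 0

instance (a b : Bool) (v : Fin 3) : Decidable (Ok a b v) := by
  cases a <;> cases b <;> simp only [Ok] <;> infer_instance

def ValidP (d : ℕ) (ε : ℕ → Bool) (t : ℕ → Fin 3) : Prop :=
  ∀ j, j < d - 1 → Ok (ε j) (ε (j + 1)) (t j)

noncomputable def wt (ε : ℕ → Bool) (t : ℕ → Fin 3) (i : ℕ) : ℝ :=
  if ε i then (if 0 < i ∧ ε (i - 1) = false then (if t (i - 1) = 2 then 2 else 1) else 1)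
  else (if ε (i + 1) then (if t i = 2 then 1 else 2) else 1)

noncomputable def cf (ε : ℕ → Bool) (t : ℕ → Fin 3) (i : ℕ) : ℝ :=
  (if ε i then 1 else -1) * wt ε t i

lemma wt_pos (ε : ℕ → Bool) (t : ℕ → Fin 3) (i : ℕ) : 0 < wt ε t i := by
  unfold wt; split_ifs <;> norm_num

lemma cf_pos {ε : ℕ → Bool} {t : ℕ → Fin 3} {i : ℕ} (h : ε i = true) : 0 < cf ε t i := by
  simpa [cf, h] using wt_pos ε t i

lemma cf_neg {ε : ℕ → Bool} {t : ℕ → Fin 3} {i : ℕ} (h : ε i = false) : cf ε t i < 0 := by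
  simpa [cf, h] using wt_pos ε t i

noncomputable def lfun (d : ℕ) (c : ℕ → ℝ) (x : Fin d → ℝ) : ℝ := ∑ k : Fin d, c k * x k

lemma lfun_add (d : ℕ) (c : ℕ → ℝ) (x y : Fin d → ℝ) :
    lfun d c (x + y) = lfun d c x + lfun d c y := by
  unfold lfun
  rw [← Finset.sum_add_distrib]
  exact Finset.sum_congr rfl fun k _ => by simp [mul_add]

lemma lfun_zero (d : ℕ) (c : ℕ → ℝ) : lfun d c 0 = 0 := by simp [lfun]

lemma lfun_smul (d : ℕ) (c : ℕ → ℝ) (a : ℝ) (x : Fin d → ℝ) :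
    lfun d c (a • x) = a * lfun d c x := by
  unfold lfun
  rw [Finset.mul_sum]
  exact Finset.sum_congr rfl fun k _ => by simp [Pi.smul_apply]; ring

lemma lfun_sum (d : ℕ) (c : ℕ → ℝ) {ι : Type*} (s : Finset ι) (F : ι → Fin d → ℝ) :
    lfun d c (∑ i ∈ s, F i) = ∑ i ∈ s, lfun d c (F i) := by
  classical
  induction s using Finset.induction_on with
  | empty => simp [lfun_zero]
  | @insert a s ha ih => rw [Finset.sum_insert ha, lfun_add, ih, Finset.sum_insert ha]

lemma lfun_e (d : ℕ) (c : ℕ → ℝ) {i : ℕ} (h : i < d) : lfun d c (stdBasisVec d i) = c i := by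
  unfold lfun stdBasisVec
  rw [Finset.sum_eq_single ⟨i, h⟩]
  · simp
  · intro k _ hk
    have : (k : ℕ) ≠ i := fun hki => hk (Fin.ext hki)
    simp [this]
  · simp

lemma lfun_segPt (d : ℕ) (c : ℕ → ℝ) {i : ℕ} (h : i < d) (b : Bool) :
    lfun d c (segPt d i b) = if b then c i else 0 := by
  cases b <;> simp [segPt, lfun_zero, lfun_e d c h]

noncomputable def triVal (c : ℕ → ℝ) (j : ℕ) : Fin 3 → ℝ := fun v =>
  if v = 0 then 0 else if v = 1 then c j else c j + c (j + 1)

lemma lfun_triPt (d : ℕ) (c : ℕ → ℝ) {j : ℕ} (h : j + 1 < d) (v : Fin 3) :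
    lfun d c (triPt d j v) = triVal c j v := by
  have hj : j < d := Nat.lt_of_succ_lt h
  fin_cases v <;>
    simp [triPt, triVal, lfun_zero, lfun_add, lfun_e d c hj, lfun_e d c h]

lemma lfun_phi (d : ℕ) (c : ℕ → ℝ) (ε : ℕ → Bool) (t : ℕ → Fin 3) :
    lfun d c (phi d ε t) =
      (∑ i ∈ Finset.range d, if ε i then c i else 0) +
        ∑ j ∈ Finset.range (d - 1), triVal c j (t j) := by
  unfold phi
  rw [lfun_add, lfun_sum, lfun_sum]
  congr 1
  · exact Finset.sum_congr rfl fun i hi => lfun_segPt d c (Finset.mem_range.1 hi) _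
  · exact Finset.sum_congr rfl fun j hj =>
      lfun_triPt d c (by have := Finset.mem_range.1 hj; omega) _

end PellAux

namespace PellAux

lemma seg_strict {ε : ℕ → Bool} {t : ℕ → Fin 3} {i : ℕ} {b : Bool} (hb : b ≠ ε i) :
    (if b then cf ε t i else 0) < if ε i then cf ε t i else 0 := by
  cases hεi : ε i
  · have : b = true := by cases b <;> simp_all
    subst this
    simpa using cf_neg hεi
  · have : b = false := by cases b <;> simp_all
    subst this
    simpa using cf_pos hεi

lemma tri_strict {ε : ℕ → Bool} {t : ℕ → Fin 3} {j : ℕ}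
    (hOk : Ok (ε j) (ε (j + 1)) (t j)) {v : Fin 3} (hv : v ≠ t j) :
    triVal (cf ε t) j v < triVal (cf ε t) j (t j) := by
  have hwj := wt_pos ε t j
  have hwj1 := wt_pos ε t (j + 1)
  cases hεj : ε j <;> cases hεj1 : ε (j + 1) <;>
    simp only [Ok, hεj, hεj1] at hOk
  · -- false false : t j = 0
    rw [hOk] at hv ⊢
    have h1 : cf ε t j < 0 := cf_neg hεj
    have h2 : cf ε t (j + 1) < 0 := cf_neg hεj1
    fin_cases v <;> simp_all [triVal] <;> linarith
  · -- false true : t j ≠ 1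
    have h02 : t j = 0 ∨ t j = 2 := by
      have h3 := (t j).isLt
      have h1 : (t j).val ≠ 1 := fun h => hOk (Fin.ext (by simpa using h))
      have : (t j).val = 0 ∨ (t j).val = 2 := by omega
      rcases this with h | h
      · exact Or.inl (Fin.ext (by simpa using h))
      · exact Or.inr (Fin.ext (by simpa using h))
    rcases h02 with h | h
    · have hcj : cf ε t j = -2 := by
        simp [cf, wt, hεj, hεj1, h, show (0 : Fin 3) ≠ 2 by decide]
      have hcj1 : cf ε t (j + 1) = 1 := by
        simp [cf, wt, hεj1, hεj, h, Nat.add_sub_cancel, Nat.succ_pos,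
          show (0 : Fin 3) ≠ 2 by decide]
      rw [h] at hv ⊢
      fin_cases v <;> simp_all [triVal] <;> linarith
    · have hcj : cf ε t j = -1 := by simp [cf, wt, hεj, hεj1, h]
      have hcj1 : cf ε t (j + 1) = 2 := by
        simp [cf, wt, hεj1, hεj, h, Nat.add_sub_cancel, Nat.succ_pos]
      rw [h] at hv ⊢
      fin_cases v <;> simp_all [triVal] <;> linarith
  · -- true false : t j = 1
    rw [hOk] at hv ⊢
    have h1 : 0 < cf ε t j := cf_pos hεj
    have h2 : cf ε t (j + 1) < 0 := cf_neg hεj1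
    fin_cases v <;> simp_all [triVal] <;> linarith
  · -- true true : t j = 2
    rw [hOk] at hv ⊢
    have h1 : 0 < cf ε t j := cf_pos hεj
    have h2 : 0 < cf ε t (j + 1) := cf_pos hεj1
    fin_cases v <;> simp_all [triVal] <;> linarith

end PellAux

namespace PellAux

lemma key {d : ℕ} {ε : ℕ → Bool} {t : ℕ → Fin 3} (hv : ValidP d ε t) (ε' : ℕ → Bool)
    (t' : ℕ → Fin 3) :
    lfun d (cf ε t) (phi d ε' t') ≤ lfun d (cf ε t) (phi d ε t) ∧
      (lfun d (cf ε t) (phi d ε' t') = lfun d (cf ε t) (phi d ε t) →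
        (∀ i < d, ε' i = ε i) ∧ ∀ j < d - 1, t' j = t j) := by
  set c := cf ε t with hc
  have hseg : ∀ i ∈ Finset.range d,
      (if ε' i then c i else 0) ≤ (if ε i then c i else 0) := by
    intro i _
    by_cases h : ε' i = ε i
    · rw [h]
    · exact le_of_lt (seg_strict h)
  have htri : ∀ j ∈ Finset.range (d - 1), triVal c j (t' j) ≤ triVal c j (t j) := by
    intro j hj
    by_cases h : t' j = t j
    · rw [h]
    · exact le_of_lt (tri_strict (hv j (Finset.mem_range.1 hj)) h)
  rw [lfun_phi, lfun_phi]
  have hA := Finset.sum_le_sum hseg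
  have hB := Finset.sum_le_sum htri
  refine ⟨add_le_add hA hB, fun heq => ?_⟩
  have hA' : (∑ i ∈ Finset.range d, if ε' i then c i else 0)
      = ∑ i ∈ Finset.range d, if ε i then c i else 0 := by linarith
  have hB' : (∑ j ∈ Finset.range (d - 1), triVal c j (t' j))
      = ∑ j ∈ Finset.range (d - 1), triVal c j (t j) := by linarith
  constructor
  · intro i hi
    by_contra h
    have := ((Finset.sum_eq_sum_iff_of_le hseg).1 hA') i (Finset.mem_range.2 hi)
    exact absurd this (ne_of_lt (seg_strict h))
  · intro j hj
    by_contra h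
    have := ((Finset.sum_eq_sum_iff_of_le htri).1 hB') j (Finset.mem_range.2 hj)
    exact absurd this (ne_of_lt (tri_strict (hv j hj) h))

lemma phi_congr {d : ℕ} {ε ε' : ℕ → Bool} {t t' : ℕ → Fin 3}
    (hε : ∀ i < d, ε i = ε' i) (ht : ∀ j < d - 1, t j = t' j) :
    phi d ε t = phi d ε' t' := by
  unfold phi
  congr 1
  · exact Finset.sum_congr rfl fun i hi => by rw [hε i (Finset.mem_range.1 hi)]
  · exact Finset.sum_congr rfl fun j hj => by rw [ht j (Finset.mem_range.1 hj)]

/-- A valid configuration gives an extreme point. -/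
lemma valid_mem_extremePoints {d : ℕ} {ε : ℕ → Bool} {t : ℕ → Fin 3} (hv : ValidP d ε t) :
    phi d ε t ∈ (pellytope d).extremePoints ℝ := by
  classical
  set c := cf ε t with hc
  set x := phi d ε t with hx
  set M := lfun d c x with hM
  -- the trap set
  set T : Set (Fin d → ℝ) := {y | lfun d c y ≤ M ∧ (lfun d c y = M → y = x)} with hT
  have hconv : Convex ℝ T := by
    rintro y ⟨hy1, hy2⟩ z ⟨hz1, hz2⟩ a b ha hb hab
    have hl : lfun d c (a • y + b • z) = a * lfun d c y + b * lfun d c z := by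
      rw [lfun_add, lfun_smul, lfun_smul]
    constructor
    · rw [hl]
      calc a * lfun d c y + b * lfun d c z ≤ a * M + b * M := by
            apply add_le_add <;> apply mul_le_mul_of_nonneg_left <;> assumption
        _ = M := by rw [← add_mul, hab, one_mul]
    · intro hEq
      rcases eq_or_lt_of_le ha with ha0 | ha0
      · have hb1 : b = 1 := by linarith
        rw [← ha0, hb1] at hEq ⊢
        simp only [zero_smul, one_smul, zero_add] at hEq ⊢
        exact hz2 hEq
      rcases eq_or_lt_of_le hb with hb0 | hb0
      · have ha1 : a = 1 := by linarith
        rw [← hb0, ha1] at hEq ⊢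
        simp only [zero_smul, one_smul, add_zero] at hEq ⊢
        exact hy2 hEq
      rw [hl] at hEq
      have habM : a * M + b * M = M := by rw [← add_mul, hab, one_mul]
      have hu : a * lfun d c y ≤ a * M := mul_le_mul_of_nonneg_left hy1 ha
      have hw : b * lfun d c z ≤ b * M := mul_le_mul_of_nonneg_left hz1 hb
      have hyM : lfun d c y = M := by
        by_contra hne
        have : a * lfun d c y < a * M :=
          mul_lt_mul_of_pos_left (lt_of_le_of_ne hy1 hne) ha0
        linarith
      have hzM : lfun d c z = M := by
        by_contra hne
        have : b * lfun d c z < b * M :=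
          mul_lt_mul_of_pos_left (lt_of_le_of_ne hz1 hne) hb0
        linarith
      rw [hy2 hyM, hz2 hzM, ← add_smul, hab, one_smul]
  have hgen : genSet d ⊆ T := by
    rintro y ⟨ε', t', rfl⟩
    obtain ⟨hle, heq⟩ := key hv ε' t'
    refine ⟨hle, fun hEq => ?_⟩
    obtain ⟨h1, h2⟩ := heq hEq
    exact phi_congr h1 h2
  have hhull : pellytope d ⊆ T := by
    rw [pellytope_eq]
    exact convexHull_min hgen hconv
  have hxmem : x ∈ pellytope d := by
    rw [pellytope_eq]
    exact subset_convexHull ℝ _ ⟨ε, t, rfl⟩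
  rw [mem_extremePoints]
  refine ⟨hxmem, fun x₁ h₁ x₂ h₂ hseg => ?_⟩
  obtain ⟨a, b, ha, hb, hab, hsum⟩ := hseg
  have h₁T := hhull h₁
  have h₂T := hhull h₂
  have hl : a * lfun d c x₁ + b * lfun d c x₂ = M := by
    rw [← lfun_smul d c a x₁, ← lfun_smul d c b x₂, ← lfun_add, hsum]
  have habM : a * M + b * M = M := by rw [← add_mul, hab, one_mul]
  have hu : a * lfun d c x₁ ≤ a * M := mul_le_mul_of_nonneg_left h₁T.1 ha.le
  have hw : b * lfun d c x₂ ≤ b * M := mul_le_mul_of_nonneg_left h₂T.1 hb.le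
  have h1M : lfun d c x₁ = M := by
    by_contra hne
    have : a * lfun d c x₁ < a * M :=
      mul_lt_mul_of_pos_left (lt_of_le_of_ne h₁T.1 hne) ha
    linarith
  have h2M : lfun d c x₂ = M := by
    by_contra hne
    have : b * lfun d c x₂ < b * M :=
      mul_lt_mul_of_pos_left (lt_of_le_of_ne h₂T.1 hne) hb
    linarith
  exact ⟨h₁T.2 h1M, h₂T.2 h2M⟩

end PellAux

namespace PellAux

lemma sum_comp_update {X ι' : Type*} [AddCommGroup X] (s : Finset ℕ)
    (F : ℕ → ι' → X) (u : ℕ → ι') {i : ℕ} (hi : i ∈ s) (v : ι') :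
    ∑ k ∈ s, F k (Function.update u i v k) = (∑ k ∈ s, F k (u k)) + (F i v - F i (u i)) := by
  classical
  have h : ∀ k ∈ s, F k (Function.update u i v k) =
      Function.update (fun k => F k (u k)) i (F i v) k := by
    intro k _
    by_cases hk : k = i
    · subst hk; rw [Function.update_self, Function.update_self]
    · rw [Function.update_of_ne hk, Function.update_of_ne hk]
  rw [Finset.sum_congr rfl h, Finset.sum_update_of_mem hi, Finset.sdiff_singleton_eq_erase,
    ← Finset.add_sum_erase s _ hi]
  abel

lemma phi_update_eps {d : ℕ} (ε : ℕ → Bool) (t : ℕ → Fin 3) {i : ℕ} (hi : i < d) (b : Bool) :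
    phi d (Function.update ε i b) t = phi d ε t + (segPt d i b - segPt d i (ε i)) := by
  unfold phi
  rw [sum_comp_update (Finset.range d) (fun k => segPt d k) ε (Finset.mem_range.2 hi) b]
  abel

lemma phi_update_t {d : ℕ} (ε : ℕ → Bool) (t : ℕ → Fin 3) {j : ℕ} (hj : j < d - 1) (v : Fin 3) :
    phi d ε (Function.update t j v) = phi d ε t + (triPt d j v - triPt d j (t j)) := by
  unfold phi
  rw [sum_comp_update (Finset.range (d - 1)) (fun k => triPt d k) t (Finset.mem_range.2 hj) v]
  abel

lemma tri10 (d j : ℕ) : triPt d j 1 - triPt d j 0 = stdBasisVec d j := by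
  simp [triPt]

lemma tri21 (d j : ℕ) : triPt d j 2 - triPt d j 1 = stdBasisVec d (j + 1) := by
  simp [triPt, show (2 : Fin 3) ≠ 0 by decide, show (2 : Fin 3) ≠ 1 by decide]

lemma segTF (d i : ℕ) : segPt d i true - segPt d i false = stdBasisVec d i := by
  simp [segPt]

lemma e_ne_zero {d k : ℕ} (hk : k < d) : stdBasisVec d k ≠ 0 := by
  intro h
  have := congrFun h ⟨k, hk⟩
  simp [stdBasisVec] at this

lemma phi_mem (d : ℕ) (ε : ℕ → Bool) (t : ℕ → Fin 3) : phi d ε t ∈ pellytope d := by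
  rw [pellytope_eq]
  exact subset_convexHull ℝ _ ⟨ε, t, rfl⟩

lemma midpoint_contra {d : ℕ} {x p q : Fin d → ℝ} {k : ℕ} (hk : k < d)
    (hx : x ∈ (pellytope d).extremePoints ℝ)
    (hp : p ∈ pellytope d) (hq : q ∈ pellytope d)
    (hpx : p = x + stdBasisVec d k) (hqx : q = x - stdBasisVec d k) : False := by
  have hseg : x ∈ openSegment ℝ p q := by
    refine ⟨1/2, 1/2, by norm_num, by norm_num, by norm_num, ?_⟩
    rw [hpx, hqx]
    module
  obtain ⟨hpe, -⟩ := (mem_extremePoints.1 hx).2 _ hp _ hq hseg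
  rw [hpx] at hpe
  have : stdBasisVec d k = 0 := by
    have := congrArg (fun y => y - x) hpe
    simpa using this
  exact e_ne_zero hk this

lemma bad_cases {a b : Bool} {v : Fin 3} (h : ¬ Ok a b v) :
    (v = 0 ∧ a = true) ∨ (v = 1 ∧ a = false) ∨ (v = 1 ∧ a = true ∧ b = true) ∨
      (v = 2 ∧ b = false) := by
  fin_cases v <;> cases a <;> cases b <;> simp_all [Ok]

lemma extreme_rep {d : ℕ} {x : Fin d → ℝ} (hx : x ∈ (pellytope d).extremePoints ℝ) :
    ∃ ε t, ValidP d ε t ∧ phi d ε t = x := by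
  classical
  have hxg : x ∈ genSet d := by
    have h := hx
    rw [pellytope_eq] at h
    exact extremePoints_convexHull_subset h
  obtain ⟨ε, t, rfl⟩ := hxg
  by_cases hv : ValidP d ε t
  · exact ⟨ε, t, hv, rfl⟩
  exfalso
  obtain ⟨j, hj, hbad⟩ : ∃ j, j < d - 1 ∧ ¬ Ok (ε j) (ε (j + 1)) (t j) := by
    by_contra h
    push_neg at h
    exact hv fun j hj => h j hj
  have hjd : j < d := by omega
  have hj1d : j + 1 < d := by omega
  rcases bad_cases hbad with ⟨hv0, hεj⟩ | ⟨hv1, hεj⟩ | ⟨hv1, hεj, hεj1⟩ | ⟨hv2, hεj1⟩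
  · -- t j = 0, ε j = true : x ± e j
    refine midpoint_contra hjd hx (phi_mem d ε (Function.update t j 1))
      (phi_mem d (Function.update ε j false) t) ?_ ?_
    · rw [phi_update_t ε t hj 1, hv0, tri10]
    · rw [phi_update_eps ε t hjd false, hεj]
      rw [show segPt d j false - segPt d j true = -stdBasisVec d j by
        rw [← neg_sub, segTF]]
      module
  · -- t j = 1, ε j = false : x ± e j
    refine midpoint_contra hjd hx (phi_mem d (Function.update ε j true) t)
      (phi_mem d ε (Function.update t j 0)) ?_ ?_
    · rw [phi_update_eps ε t hjd true, hεj, segTF]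
    · rw [phi_update_t ε t hj 0, hv1]
      rw [show triPt d j 0 - triPt d j 1 = -stdBasisVec d j by rw [← neg_sub, tri10]]
      module
  · -- t j = 1, ε j = true, ε (j+1) = true : x ± e (j+1)
    refine midpoint_contra hj1d hx (phi_mem d ε (Function.update t j 2))
      (phi_mem d (Function.update ε (j + 1) false) t) ?_ ?_
    · rw [phi_update_t ε t hj 2, hv1, tri21]
    · rw [phi_update_eps ε t hj1d false, hεj1]
      rw [show segPt d (j + 1) false - segPt d (j + 1) true = -stdBasisVec d (j + 1) by
        rw [← neg_sub, segTF]]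
      module
  · -- t j = 2, ε (j+1) = false : x ± e (j+1)
    refine midpoint_contra hj1d hx (phi_mem d (Function.update ε (j + 1) true) t)
      (phi_mem d ε (Function.update t j 1)) ?_ ?_
    · rw [phi_update_eps ε t hj1d true, hεj1, segTF]
    · rw [phi_update_t ε t hj 1, hv2]
      rw [show triPt d j 1 - triPt d j 2 = -stdBasisVec d (j + 1) by rw [← neg_sub, tri21]]
      module

end PellAux

namespace PellAux

def extB (d : ℕ) (f : Fin d → Bool) : ℕ → Bool := fun i => if h : i < d then f ⟨i, h⟩ else false

def extT (d : ℕ) (g : Fin (d - 1) → Fin 3) : ℕ → Fin 3 := fun j =>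
  if h : j < d - 1 then g ⟨j, h⟩ else 0

def ValidF {d : ℕ} (p : (Fin d → Bool) × (Fin (d - 1) → Fin 3)) : Prop :=
  ∀ j : ℕ, ∀ hj : j < d - 1,
    Ok (p.1 ⟨j, by omega⟩) (p.1 ⟨j + 1, by omega⟩) (p.2 ⟨j, hj⟩)

instance {d : ℕ} : DecidablePred (@ValidF d) := fun _ => by unfold ValidF; infer_instance

abbrev CfgT (d : ℕ) := {p : (Fin d → Bool) × (Fin (d - 1) → Fin 3) // ValidF p}

noncomputable def gmap {d : ℕ} (c : CfgT d) : Fin d → ℝ := phi d (extB d c.1.1) (extT d c.1.2)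

lemma validP_of_validF {d : ℕ} (c : CfgT d) : ValidP d (extB d c.1.1) (extT d c.1.2) := by
  intro j hj
  have h1 : j < d := by omega
  have h2 : j + 1 < d := by omega
  simp only [extB, extT, dif_pos hj, dif_pos h1, dif_pos h2]
  exact c.2 j hj

lemma gmap_extreme {d : ℕ} (c : CfgT d) : gmap c ∈ (pellytope d).extremePoints ℝ :=
  valid_mem_extremePoints (validP_of_validF c)

lemma gmap_injective {d : ℕ} : Function.Injective (@gmap d) := by
  intro c c' h
  have hv := validP_of_validF c
  have hkey := key hv (extB d c'.1.1) (extT d c'.1.2)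
  have hEq : lfun d (cf (extB d c.1.1) (extT d c.1.2)) (gmap c')
      = lfun d (cf (extB d c.1.1) (extT d c.1.2)) (gmap c) := by rw [h]
  obtain ⟨h1, h2⟩ := hkey.2 hEq
  apply Subtype.ext
  apply Prod.ext
  · funext i
    have := (h1 i i.isLt).symm
    simpa [extB, dif_pos i.isLt] using this
  · funext j
    have := (h2 j j.isLt).symm
    simpa [extT, dif_pos j.isLt] using this

lemma gmap_surjOn {d : ℕ} {x : Fin d → ℝ} (hx : x ∈ (pellytope d).extremePoints ℝ) :
    ∃ c : CfgT d, gmap c = x := by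
  obtain ⟨ε, t, hv, rfl⟩ := extreme_rep hx
  refine ⟨⟨⟨fun i => ε i, fun j => t j⟩, ?_⟩, ?_⟩
  · intro j hj
    exact hv j hj
  · apply phi_congr
    · intro i hi
      simp [extB, dif_pos hi]
    · intro j hj
      simp [extT, dif_pos hj]

lemma extremePoints_eq_range (d : ℕ) :
    (pellytope d).extremePoints ℝ = Set.range (@gmap d) := by
  ext x
  constructor
  · intro hx
    obtain ⟨c, hc⟩ := gmap_surjOn hx
    exact ⟨c, hc⟩
  · rintro ⟨c, rfl⟩
    exact gmap_extreme c

lemma ncard_extremePoints_eq_card (d : ℕ) :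
    ((pellytope d).extremePoints ℝ).ncard = Fintype.card (CfgT d) := by
  rw [extremePoints_eq_range, ← Set.image_univ,
    Set.ncard_image_of_injective _ gmap_injective, Set.ncard_univ, Nat.card_eq_fintype_card]

end PellAux

namespace PellAux

lemma snoc_mk_lt {α : Type*} {m : ℕ} (p : Fin m → α) (x : α) {j : ℕ} (hj : j < m)
    (hj2 : j < m + 1) : (Fin.snoc p x : Fin (m + 1) → α) ⟨j, hj2⟩ = p ⟨j, hj⟩ := by
  have h : (⟨j, hj2⟩ : Fin (m + 1)) = Fin.castSucc ⟨j, hj⟩ := rfl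
  rw [h, Fin.snoc_castSucc]

lemma snoc_mk_last {α : Type*} {m : ℕ} (p : Fin m → α) (x : α) (hj2 : m < m + 1) :
    (Fin.snoc p x : Fin (m + 1) → α) ⟨m, hj2⟩ = x := by
  have h : (⟨m, hj2⟩ : Fin (m + 1)) = Fin.last m := rfl
  rw [h, Fin.snoc_last]

def lastE {n : ℕ} (c : CfgT (n + 1)) : Bool := c.1.1 (Fin.last n)

def stepF (n : ℕ) (b : Bool) (c : {c : CfgT (n + 2) // lastE c = b}) :
    {q : CfgT (n + 1) × Fin 3 // Ok (lastE q.1) b q.2} := by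
  obtain ⟨⟨⟨ε, t⟩, hval⟩, hlast⟩ := c
  refine ⟨⟨⟨⟨Fin.init ε, Fin.init t⟩, ?_⟩, t (Fin.last n)⟩, ?_⟩
  · intro j hj
    exact hval j (by omega)
  · have h := hval n (by omega)
    have e1 : (⟨n + 1, by omega⟩ : Fin (n + 2)) = Fin.last (n + 1) := rfl
    rw [e1] at h
    have hb : (ε, t).1 (Fin.last (n + 1)) = b := hlast
    rw [hb] at h
    exact h

def stepG (n : ℕ) (b : Bool) (q : {q : CfgT (n + 1) × Fin 3 // Ok (lastE q.1) b q.2}) :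
    {c : CfgT (n + 2) // lastE c = b} := by
  obtain ⟨⟨⟨⟨ε, t⟩, hval⟩, v⟩, hok⟩ := q
  refine ⟨⟨⟨Fin.snoc ε b, Fin.snoc t v⟩, ?_⟩, ?_⟩
  · intro j hj
    by_cases hjn : j < n
    · have h := hval j (by omega : j < (n + 1) - 1)
      have e1 : (Fin.snoc ε b : Fin (n + 2) → Bool) ⟨j, by omega⟩
          = ε ⟨j, by omega⟩ := snoc_mk_lt _ _ (by omega) _
      have e2 : (Fin.snoc ε b : Fin (n + 2) → Bool) ⟨j + 1, by omega⟩
          = ε ⟨j + 1, by omega⟩ := snoc_mk_lt _ _ (by omega) _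
      have e3 : (Fin.snoc t v : Fin (n + 1) → Fin 3) ⟨j, hj⟩
          = t ⟨j, by omega⟩ := snoc_mk_lt _ _ (by omega) _
      show Ok ((Fin.snoc ε b : Fin (n + 2) → Bool) ⟨j, by omega⟩)
        ((Fin.snoc ε b : Fin (n + 2) → Bool) ⟨j + 1, by omega⟩)
        ((Fin.snoc t v : Fin (n + 1) → Fin 3) ⟨j, hj⟩)
      rw [e1, e2, e3]
      exact h
    · have hjn' : j = n := by omega
      subst hjn'
      have e1 : (Fin.snoc ε b : Fin (j + 2) → Bool) ⟨j, by omega⟩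
          = ε ⟨j, by omega⟩ := snoc_mk_lt _ _ (by omega) _
      have e2 : (Fin.snoc ε b : Fin (j + 2) → Bool) ⟨j + 1, by omega⟩ = b :=
        snoc_mk_last _ _ _
      have e3 : (Fin.snoc t v : Fin (j + 1) → Fin 3) ⟨j, hj⟩ = v :=
        snoc_mk_last _ _ _
      show Ok ((Fin.snoc ε b : Fin (j + 2) → Bool) ⟨j, by omega⟩)
        ((Fin.snoc ε b : Fin (j + 2) → Bool) ⟨j + 1, by omega⟩)
        ((Fin.snoc t v : Fin (j + 1) → Fin 3) ⟨j, hj⟩)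
      rw [e1, e2, e3]
      exact hok
  · show (Fin.snoc ε b : Fin (n + 2) → Bool) (Fin.last (n + 1)) = b
    rw [Fin.snoc_last]

def stepEquiv (n : ℕ) (b : Bool) :
    {c : CfgT (n + 2) // lastE c = b} ≃ {q : CfgT (n + 1) × Fin 3 // Ok (lastE q.1) b q.2} where
  toFun := stepF n b
  invFun := stepG n b
  left_inv := by
    rintro ⟨⟨⟨ε, t⟩, hval⟩, hlast⟩
    apply Subtype.ext
    apply Subtype.ext
    apply Prod.ext
    · show (Fin.snoc (Fin.init ε) b : Fin (n + 2) → Bool) = ε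
      have hb : ε (Fin.last (n + 1)) = b := hlast
      rw [← hb]
      exact Fin.snoc_init_self (α := fun _ : Fin (n + 2) => Bool) ε
    · show (Fin.snoc (Fin.init t) (t (Fin.last n)) : Fin (n + 1) → Fin 3) = t
      exact Fin.snoc_init_self (α := fun _ : Fin (n + 1) => Fin 3) t
  right_inv := by
    rintro ⟨⟨⟨⟨ε, t⟩, hval⟩, v⟩, hok⟩
    apply Subtype.ext
    apply Prod.ext
    · apply Subtype.ext
      apply Prod.ext
      · show Fin.init (Fin.snoc ε b : Fin (n + 2) → Bool) = ε
        exact Fin.init_snoc (α := fun _ : Fin (n + 2) => Bool) b ε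
      · show Fin.init (Fin.snoc t v : Fin (n + 1) → Fin 3) = t
        exact Fin.init_snoc (α := fun _ : Fin (n + 1) => Fin 3) v t
    · show (Fin.snoc t v : Fin (n + 1) → Fin 3) (Fin.last n) = v
      exact Fin.snoc_last (α := fun _ : Fin (n + 1) => Fin 3) v t

end PellAux

namespace PellAux

lemma okCard (a b : Bool) :
    Fintype.card {v : Fin 3 // Ok a b v} = if a then 1 else if b then 2 else 1 := by
  cases a <;> cases b
  · rw [Fintype.card_congr (Equiv.subtypeEquivRight (q := fun v : Fin 3 => v = 0)
      (fun v => by simp [Ok])), Fintype.card_subtype_eq]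
    simp
  · rw [Fintype.card_congr (Equiv.subtypeEquivRight (q := fun v : Fin 3 => ¬ v = 1)
      (fun v => by simp [Ok])), Fintype.card_subtype_compl, Fintype.card_subtype_eq]
    simp
  · rw [Fintype.card_congr (Equiv.subtypeEquivRight (q := fun v : Fin 3 => v = 1)
      (fun v => by simp [Ok])), Fintype.card_subtype_eq]
    simp
  · rw [Fintype.card_congr (Equiv.subtypeEquivRight (q := fun v : Fin 3 => v = 2)
      (fun v => by simp [Ok])), Fintype.card_subtype_eq]
    simp

lemma sum_split {α : Type*} [Fintype α] (p : α → Prop) [DecidablePred p] (f : α → ℕ) :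
    ∑ a : α, f a = (∑ a : {a // p a}, f a.1) + ∑ a : {a // ¬ p a}, f a.1 := by
  rw [← Equiv.sum_comp (Equiv.sumCompl p) f, Fintype.sum_sum_type]
  congr 1 <;> refine Finset.sum_congr rfl fun x _ => ?_ <;> simp

def aCnt (n : ℕ) : ℕ := Fintype.card {c : CfgT (n + 1) // lastE c = true}
def bCnt (n : ℕ) : ℕ := Fintype.card {c : CfgT (n + 1) // lastE c = false}

lemma cfg_card (n : ℕ) : Fintype.card (CfgT (n + 1)) = aCnt n + bCnt n := by
  rw [← Fintype.card_congr (Equiv.sumCompl (fun c : CfgT (n + 1) => lastE c = true)),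
    Fintype.card_sum]
  congr 1
  exact Fintype.card_congr (Equiv.subtypeEquivRight (fun c => by simp))

lemma card_not_true (n : ℕ) :
    Fintype.card {c : CfgT (n + 1) // ¬ lastE c = true} = bCnt n :=
  Fintype.card_congr (Equiv.subtypeEquivRight (fun c => by simp))

lemma step_card (n : ℕ) (b : Bool) :
    Fintype.card {c : CfgT (n + 2) // lastE c = b}
      = ∑ c : CfgT (n + 1), Fintype.card {v : Fin 3 // Ok (lastE c) b v} := by
  rw [Fintype.card_congr (stepEquiv n b),
    Fintype.card_congr
      (Equiv.subtypeProdEquivSigmaSubtype (fun (c : CfgT (n + 1)) (v : Fin 3) => Ok (lastE c) b v)),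
    Fintype.card_sigma]

lemma aCnt_succ (n : ℕ) : aCnt (n + 1) = aCnt n * 1 + bCnt n * 2 := by
  rw [aCnt, step_card n true,
    sum_split (fun c : CfgT (n + 1) => lastE c = true)
      (fun c => Fintype.card {v : Fin 3 // Ok (lastE c) true v})]
  have h1 : (∑ c : {c : CfgT (n + 1) // lastE c = true},
      Fintype.card {v : Fin 3 // Ok (lastE c.1) true v}) = aCnt n * 1 := by
    rw [Finset.sum_congr rfl (fun c _ => by rw [okCard, if_pos c.2]),
      Finset.sum_const, Finset.card_univ, smul_eq_mul]
    rfl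
  have h2 : (∑ c : {c : CfgT (n + 1) // ¬ lastE c = true},
      Fintype.card {v : Fin 3 // Ok (lastE c.1) true v}) = bCnt n * 2 := by
    rw [Finset.sum_congr rfl (fun c _ => by
        rw [okCard, if_neg c.2, if_pos rfl]),
      Finset.sum_const, Finset.card_univ, smul_eq_mul, card_not_true]
  rw [h1, h2]

lemma bCnt_succ (n : ℕ) : bCnt (n + 1) = aCnt n * 1 + bCnt n * 1 := by
  rw [bCnt, step_card n false,
    sum_split (fun c : CfgT (n + 1) => lastE c = true)
      (fun c => Fintype.card {v : Fin 3 // Ok (lastE c) false v})]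
  have h1 : (∑ c : {c : CfgT (n + 1) // lastE c = true},
      Fintype.card {v : Fin 3 // Ok (lastE c.1) false v}) = aCnt n * 1 := by
    rw [Finset.sum_congr rfl (fun c _ => by rw [okCard, if_pos c.2]),
      Finset.sum_const, Finset.card_univ, smul_eq_mul]
    rfl
  have h2 : (∑ c : {c : CfgT (n + 1) // ¬ lastE c = true},
      Fintype.card {v : Fin 3 // Ok (lastE c.1) false v}) = bCnt n * 1 := by
    rw [Finset.sum_congr rfl (fun c _ => by
        rw [okCard, if_neg c.2, if_neg Bool.false_ne_true]),
      Finset.sum_const, Finset.card_univ, smul_eq_mul, card_not_true]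
  rw [h1, h2]

lemma base_card (bb : Bool) : Fintype.card {c : CfgT 1 // lastE c = bb} = 1 := by
  rw [Fintype.card_eq_one_iff]
  refine ⟨⟨⟨⟨fun _ => bb, fun j => Fin.elim0 j⟩, fun j hj => absurd hj (by omega)⟩, rfl⟩, ?_⟩
  rintro ⟨⟨⟨ε, t⟩, hval⟩, hlast⟩
  apply Subtype.ext
  apply Subtype.ext
  apply Prod.ext
  · funext i
    have hi : i = Fin.last 0 := Fin.ext (by omega)
    rw [hi]
    exact hlast
  · funext j
    exact Fin.elim0 j

lemma aCnt_zero : aCnt 0 = 1 := base_card true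
lemma bCnt_zero : bCnt 0 = 1 := base_card false

lemma pell_count (n : ℕ) :
    aCnt n + bCnt n = pellN (n + 2) ∧ bCnt n = pellN (n + 1) := by
  induction n with
  | zero =>
      rw [aCnt_zero, bCnt_zero]
      constructor <;> rfl
  | succ n ih =>
      have h3 : pellN (n + 3) = 2 * pellN (n + 2) + pellN (n + 1) := rfl
      rw [aCnt_succ, bCnt_succ]
      simp only [show n + 1 + 2 = n + 3 from rfl, show n + 1 + 1 = n + 2 from rfl]
      omega

end PellAux

/-- For every `d ≥ 1`, the pellytope `𝒫_d` has exactly `n_{d+1}` vertices, i.e. the set of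
its extreme points has cardinality the Pell number `n_{d+1}`. -/
theorem pellytope_ncard_extremePoints (d : ℕ) (hd : 1 ≤ d) :
    (Set.extremePoints ℝ (pellytope d)).ncard = pellN (d + 1) := by
  obtain ⟨n, rfl⟩ : ∃ n, d = n + 1 := ⟨d - 1, by omega⟩
  rw [show Set.extremePoints ℝ (pellytope (n + 1)) = (pellytope (n + 1)).extremePoints ℝ from rfl,
    PellAux.ncard_extremePoints_eq_card, PellAux.cfg_card, ← (PellAux.pell_count n).1]
end

section
/- Let d ≥ 1 and (a,b,c) ∈ ℤ^d × ℤ^d × ℤ^{d-1}. The following are equivalent: (i) T_{(a,b,c)}(Y) ≥ 0 for all Y ∈ ℝ^d and T_{(a,b,c)}(Y*) > 0 for at least one Y* ∈ ℝ^d; (ii) T_{(a,b,c)}(V_j) ≥ 0 for all j ∈ {1,…,3d−1} and T_{(a,b,c)}(V_{j*}) > 0 for at least one j* ∈ {1,…,3d−1}. -/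
open Finset

/-- The tropicalization `T_{(a,b,c)}(Y) = Σ a_i Y_i + Σ b_i min{0, Y_i}
+ Σ c_i min{0, Y_i, Y_i + Y_{i+1}}` (0-indexed). -/
noncomputable def tropChar (d : ℕ) (a b : Fin d → ℤ) (c : Fin (d - 1) → ℤ)
    (Y : Fin d → ℝ) : ℝ :=
  (∑ i, (a i : ℝ) * Y i) + (∑ i, (b i : ℝ) * min 0 (Y i)) +
    ∑ i : Fin (d - 1), (c i : ℝ) *
      min 0 (min (Y ⟨i.val, by have := i.isLt; omega⟩)
        (Y ⟨i.val, by have := i.isLt; omega⟩ + Y ⟨i.val + 1, by have := i.isLt; omega⟩))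

/-- The primitive ray generators `V_1, …, V_{3d-1}` of the normal fan of the pellytope:
`e_1, …, e_d, -e_1, …, -e_d, e_1 - e_2, …, e_{d-1} - e_d` (0-indexed: `V_j` for
`0 ≤ j < 3d - 1`). -/
noncomputable def rayGen (d j : ℕ) : Fin d → ℝ := fun k =>
  if j < d then (if (k : ℕ) = j then 1 else 0)
  else if j < 2 * d then (if (k : ℕ) = j - d then -1 else 0)
  else (if (k : ℕ) = j - 2 * d then 1 else if (k : ℕ) = j - 2 * d + 1 then -1 else 0)

/-! Auxiliary machinery -/

noncomputable def Bf (y : ℕ → ℝ) : ℕ → ℝ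
  | 0 => max 0 (-y 0)
  | (m+1) => max 0 (max (-y m) (-y m - y (m+1))) - max 0 (-y m)

noncomputable def Gf (y : ℕ → ℝ) (i : ℕ) : ℝ := max 0 (-y (i+1)) - Bf y (i+1)

noncomputable def Af (d : ℕ) (y : ℕ → ℝ) (k : ℕ) : ℝ :=
  max 0 (y k) - (if k < d - 1 then Gf y k else 0)

lemma Bf_nonneg (y : ℕ → ℝ) (k : ℕ) : 0 ≤ Bf y k := by
  cases k with
  | zero => simpa [Bf] using le_max_left (0:ℝ) (-y 0)
  | succ m =>
    simp only [Bf, sub_nonneg]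
    exact max_le_max le_rfl (le_max_left _ _)

lemma Bf_le (y : ℕ → ℝ) (m : ℕ) : Bf y (m+1) ≤ max 0 (-y (m+1)) := by
  simp only [Bf]
  have h1 : max 0 (max (-y m) (-y m - y (m+1))) ≤ max 0 (-y m) + max 0 (-y (m+1)) := by
    apply max_le (by positivity)
    apply max_le
    · exact le_add_of_le_of_nonneg (le_max_right _ _) (le_max_left _ _)
    · have h2 : -y m + -y (m+1) ≤ max 0 (-y m) + max 0 (-y (m+1)) :=
        add_le_add (le_max_right _ _) (le_max_right _ _)
      linarith
  linarith

lemma Gf_nonneg (y : ℕ → ℝ) (i : ℕ) : 0 ≤ Gf y i := sub_nonneg.2 (Bf_le y i)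

lemma M3 (x z : ℝ) : max 0 (-z) + max 0 (-x) ≤ max 0 x + max 0 (max (-x) (-x - z)) := by
  have h1 : x ≤ max 0 x := le_max_right _ _
  have h2 : (0:ℝ) ≤ max 0 x := le_max_left _ _
  have h3 : -x - z ≤ max 0 (max (-x) (-x - z)) := le_trans (le_max_right _ _) (le_max_right _ _)
  have h4 : -x ≤ max 0 (max (-x) (-x - z)) := le_trans (le_max_left _ _) (le_max_right _ _)
  have h5 : (0:ℝ) ≤ max 0 (max (-x) (-x - z)) := le_max_left _ _
  rcases max_cases 0 (-z) with ⟨e1, _⟩ | ⟨e1, _⟩ <;> rcases max_cases 0 (-x) with ⟨e2, _⟩ | ⟨e2, _⟩ <;>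
    rw [e1, e2] <;> linarith

lemma Af_nonneg (d : ℕ) (y : ℕ → ℝ) (k : ℕ) : 0 ≤ Af d y k := by
  unfold Af
  split_ifs with h
  · have h3 := M3 (y k) (y (k+1))
    have h2 : Bf y (k+1) = max 0 (max (-y k) (-y k - y (k+1))) - max 0 (-y k) := rfl
    unfold Gf
    linarith
  · simpa using le_max_left (0:ℝ) (y k)

lemma min0_eq_neg_max (x : ℝ) : min 0 x = -max 0 (-x) := by
  rcases le_total 0 x with h|h
  · rw [min_eq_left h, max_eq_left (by linarith), neg_zero]
  · rw [min_eq_right h, max_eq_right (by linarith), neg_neg]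

lemma minmin_eq (x z : ℝ) : min 0 (min x (x + z)) = -max 0 (max (-x) (-x - z)) := by
  simp only [min_def, max_def]
  split_ifs <;> linarith

lemma pB (y : ℕ → ℝ) (k : ℕ) :
    -Bf y k - (if 1 ≤ k then Gf y (k-1) else 0) = min 0 (y k) := by
  cases k with
  | zero => simp [Bf, min0_eq_neg_max]
  | succ m =>
    have h : -Bf y (m+1) - Gf y m = -max 0 (-y (m+1)) := by unfold Gf; ring
    rw [if_pos (by omega : 1 ≤ m+1), Nat.add_sub_cancel, h, ← min0_eq_neg_max]

lemma pC (y : ℕ → ℝ) (i : ℕ) :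
    -Bf y i - Bf y (i+1) - (if 1 ≤ i then Gf y (i-1) else 0)
      = min 0 (min (y i) (y i + y (i+1))) := by
  have h := pB y i
  have h2 : Bf y (i+1) = max 0 (max (-y i) (-y i - y (i+1))) - max 0 (-y i) := rfl
  have h3 := min0_eq_neg_max (y i)
  rw [minmin_eq]
  linarith

lemma pA (d : ℕ) (y : ℕ → ℝ) (k : ℕ) :
    Af d y k - Bf y k + (if k < d - 1 then Gf y k else 0)
      - (if 1 ≤ k then Gf y (k-1) else 0) = y k := by
  have h := pB y k
  have h2 : max 0 (y k) + min 0 (y k) = 0 + y k := max_add_min 0 (y k)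
  unfold Af
  linarith

lemma sum_shiftTop (n : ℕ) (f : ℕ → ℝ) :
    ∑ l ∈ range n, (if l < n - 1 then f l else 0) = ∑ l ∈ range (n-1), f l := by
  cases n with
  | zero => simp
  | succ m =>
    rw [Nat.add_sub_cancel, Finset.sum_range_succ, if_neg (lt_irrefl m), add_zero]
    exact Finset.sum_congr rfl fun l hl => if_pos (mem_range.mp hl)

lemma sum_shiftLow (n : ℕ) (f : ℕ → ℝ) :
    ∑ l ∈ range n, (if 1 ≤ l then f (l-1) else 0) = ∑ l ∈ range (n-1), f l := by
  cases n with
  | zero => simp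
  | succ m =>
    rw [Finset.sum_range_succ', Nat.add_sub_cancel]
    simp

noncomputable def Sval (d : ℕ) (A B C y : ℕ → ℝ) : ℝ :=
  (∑ k ∈ range d, A k * y k) + (∑ k ∈ range d, B k * min 0 (y k)) +
    ∑ i ∈ range (d-1), C i * min 0 (min (y i) (y i + y (i+1)))

def eeF (l k : ℕ) : ℝ := if k = l then 1 else 0
def neF (l k : ℕ) : ℝ := if k = l then -1 else 0
def deF (l k : ℕ) : ℝ := if k = l then 1 else if k = l + 1 then -1 else 0

lemma Sval_ee (d : ℕ) (A B C : ℕ → ℝ) (l : ℕ) (hl : l < d) : Sval d A B C (eeF l) = A l := by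
  unfold Sval
  have h1 : ∑ k ∈ range d, A k * eeF l k = A l := by
    rw [Finset.sum_congr rfl (fun k _ => show A k * eeF l k = if k = l then A k else 0 from by
      unfold eeF; split_ifs <;> ring), Finset.sum_ite_eq' (range d) l A]
    simp [hl]
  have h2 : ∑ k ∈ range d, B k * min 0 (eeF l k) = 0 :=
    Finset.sum_eq_zero fun k _ => by unfold eeF; split_ifs <;> norm_num [min_def]
  have h3 : ∑ i ∈ range (d-1), C i * min 0 (min (eeF l i) (eeF l i + eeF l (i+1))) = 0 :=
    Finset.sum_eq_zero fun i _ => by unfold eeF; split_ifs <;> norm_num [min_def]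
  rw [h1, h2, h3]; ring

lemma Sval_ne (d : ℕ) (A B C : ℕ → ℝ) (l : ℕ) (hl : l < d) :
    Sval d A B C (neF l)
      = -A l - B l - (if l < d - 1 then C l else 0) - (if 1 ≤ l then C (l-1) else 0) := by
  unfold Sval
  have h1 : ∑ k ∈ range d, A k * neF l k = -A l := by
    rw [Finset.sum_congr rfl (fun k _ => show A k * neF l k = if k = l then -A k else 0 from by
      unfold neF; split_ifs <;> ring), Finset.sum_ite_eq' (range d) l (fun k => -A k)]
    simp [hl]
  have h2 : ∑ k ∈ range d, B k * min 0 (neF l k) = -B l := by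
    rw [Finset.sum_congr rfl (fun k _ => show B k * min 0 (neF l k) = if k = l then -B k else 0 from by
      unfold neF; split_ifs <;> norm_num [min_def]),
      Finset.sum_ite_eq' (range d) l (fun k => -B k)]
    simp [hl]
  have h3 : ∑ i ∈ range (d-1), C i * min 0 (min (neF l i) (neF l i + neF l (i+1)))
      = -(if l < d - 1 then C l else 0) - (if 1 ≤ l then C (l-1) else 0) := by
    have step : ∀ i ∈ range (d-1), C i * min 0 (min (neF l i) (neF l i + neF l (i+1)))
        = (if i = l then -C i else 0) + (if i + 1 = l then -C i else 0) := by
      intro i _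
      unfold neF
      split_ifs <;> first | (exfalso; omega) | norm_num [min_def]
    rw [Finset.sum_congr rfl step, Finset.sum_add_distrib,
      Finset.sum_ite_eq' (range (d-1)) l (fun i => -C i)]
    have hsplit : ∑ i ∈ range (d-1), (if i + 1 = l then -C i else 0)
        = (if 1 ≤ l then -C (l-1) else 0) := by
      cases l with
      | zero => simp
      | succ m =>
        rw [Finset.sum_congr rfl (fun i _ =>
          show (if i + 1 = m + 1 then -C i else 0) = (if i = m then -C i else 0) from by
            rcases eq_or_ne i m with rfl | h
            · simp
            · rw [if_neg (by omega), if_neg h]),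
          Finset.sum_ite_eq' (range (d-1)) m (fun i => -C i),
          if_pos (mem_range.mpr (by omega : m < d - 1))]
        simp
    rw [hsplit]
    simp only [mem_range]
    split_ifs <;> ring
  rw [h1, h2, h3]; ring

lemma Sval_de (d : ℕ) (A B C : ℕ → ℝ) (l : ℕ) (hl : l < d - 1) :
    Sval d A B C (deF l)
      = A l - A (l+1) - B (l+1) - (if l + 1 < d - 1 then C (l+1) else 0) := by
  unfold Sval
  have hld : l < d := by omega
  have hl1 : l + 1 < d := by omega
  have h1 : ∑ k ∈ range d, A k * deF l k = A l - A (l+1) := by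
    rw [Finset.sum_congr rfl (fun k _ =>
      show A k * deF l k = (if k = l then A k else 0) + (if k = l + 1 then -A k else 0) from by
        unfold deF; split_ifs <;> first | (exfalso; omega) | ring),
      Finset.sum_add_distrib, Finset.sum_ite_eq' (range d) l A,
      Finset.sum_ite_eq' (range d) (l+1) (fun k => -A k),
      if_pos (mem_range.mpr hld), if_pos (mem_range.mpr hl1)]
    ring
  have h2 : ∑ k ∈ range d, B k * min 0 (deF l k) = -B (l+1) := by
    rw [Finset.sum_congr rfl (fun k _ =>
      show B k * min 0 (deF l k) = (if k = l + 1 then -B k else 0) from by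
        unfold deF; split_ifs <;> first | (exfalso; omega) | norm_num [min_def]),
      Finset.sum_ite_eq' (range d) (l+1) (fun k => -B k), if_pos (mem_range.mpr hl1)]
  have h3 : ∑ i ∈ range (d-1), C i * min 0 (min (deF l i) (deF l i + deF l (i+1)))
      = -(if l + 1 < d - 1 then C (l+1) else 0) := by
    rw [Finset.sum_congr rfl (fun i _ =>
      show C i * min 0 (min (deF l i) (deF l i + deF l (i+1)))
          = (if i = l + 1 then -C i else 0) from by
        unfold deF; split_ifs <;> first | (exfalso; omega) | norm_num [min_def]),
      Finset.sum_ite_eq' (range (d-1)) (l+1) (fun i => -C i)]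
    simp only [mem_range]
    split_ifs <;> ring
  rw [h1, h2, h3]; ring

lemma key (d : ℕ) (A B C y : ℕ → ℝ) :
    Sval d A B C y
      = (∑ l ∈ range d, Af d y l * Sval d A B C (eeF l))
        + (∑ l ∈ range d, Bf y l * Sval d A B C (neF l))
        + (∑ l ∈ range (d-1), Gf y l * Sval d A B C (deF l)) := by
  have e1 : ∑ l ∈ range d, Af d y l * Sval d A B C (eeF l)
      = ∑ l ∈ range d, Af d y l * A l :=
    Finset.sum_congr rfl fun l hl => by rw [Sval_ee d A B C l (mem_range.mp hl)]
  have e2 : ∑ l ∈ range d, Bf y l * Sval d A B C (neF l)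
      = ∑ l ∈ range d, (-(Bf y l * A l) - Bf y l * B l
          - (if l < d - 1 then Bf y l * C l else 0)
          - (if 1 ≤ l then Bf y l * C (l-1) else 0)) :=
    Finset.sum_congr rfl fun l hl => by
      rw [Sval_ne d A B C l (mem_range.mp hl)]; split_ifs <;> ring
  have e3 : ∑ l ∈ range (d-1), Gf y l * Sval d A B C (deF l)
      = ∑ l ∈ range (d-1), (Gf y l * A l - Gf y l * A (l+1) - Gf y l * B (l+1)
          - (if l + 1 < d - 1 then Gf y l * C (l+1) else 0)) :=
    Finset.sum_congr rfl fun l hl => by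
      rw [Sval_de d A B C l (mem_range.mp hl)]; split_ifs <;> ring
  rw [e1, e2, e3]
  simp only [Finset.sum_sub_distrib, Finset.sum_neg_distrib]
  -- shift lemmas
  have s4 : ∑ l ∈ range d, (if l < d - 1 then Bf y l * C l else 0)
      = ∑ l ∈ range (d-1), Bf y l * C l := sum_shiftTop d _
  have s5 : ∑ l ∈ range d, (if 1 ≤ l then Bf y l * C (l-1) else 0)
      = ∑ l ∈ range (d-1), Bf y (l+1) * C l := by
    rw [Finset.sum_congr rfl (fun l (_ : l ∈ range d) =>
      show (if 1 ≤ l then Bf y l * C (l-1) else 0)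
          = (if 1 ≤ l then Bf y ((l-1)+1) * C (l-1) else 0) from by
        split_ifs with h
        · rw [Nat.sub_add_cancel h]
        · rfl)]
    exact sum_shiftLow d (fun u => Bf y (u+1) * C u)
  have s6 : ∑ l ∈ range (d-1), Gf y l * A l
      = ∑ l ∈ range d, (if l < d - 1 then Gf y l * A l else 0) := (sum_shiftTop d _).symm
  have s7 : ∑ l ∈ range (d-1), Gf y l * A (l+1)
      = ∑ l ∈ range d, (if 1 ≤ l then Gf y (l-1) * A l else 0) := by
    rw [← sum_shiftLow d (fun u => Gf y u * A (u+1))]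
    exact (Finset.sum_congr rfl fun l _ => by
      split_ifs with h
      · rw [Nat.sub_add_cancel h]
      · rfl).symm
  have s8 : ∑ l ∈ range (d-1), Gf y l * B (l+1)
      = ∑ l ∈ range d, (if 1 ≤ l then Gf y (l-1) * B l else 0) := by
    rw [← sum_shiftLow d (fun u => Gf y u * B (u+1))]
    exact (Finset.sum_congr rfl fun l _ => by
      split_ifs with h
      · rw [Nat.sub_add_cancel h]
      · rfl).symm
  have s9 : ∑ l ∈ range (d-1), (if l + 1 < d - 1 then Gf y l * C (l+1) else 0)
      = ∑ i ∈ range (d-1), (if 1 ≤ i then Gf y (i-1) * C i else 0) := by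
    have L : ∑ l ∈ range (d-1), (if l + 1 < d - 1 then Gf y l * C (l+1) else 0)
        = ∑ l ∈ range ((d-1)-1), Gf y l * C (l+1) := by
      rw [Finset.sum_congr rfl (fun l (_ : l ∈ range (d-1)) =>
        show (if l + 1 < d - 1 then Gf y l * C (l+1) else 0)
            = (if l < (d-1) - 1 then Gf y l * C (l+1) else 0) from by
          by_cases h : l + 1 < d - 1
          · rw [if_pos h, if_pos (by omega)]
          · rw [if_neg h, if_neg (by omega)])]
      exact sum_shiftTop (d-1) (fun l => Gf y l * C (l+1))
    have R : ∑ i ∈ range (d-1), (if 1 ≤ i then Gf y (i-1) * C i else 0)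
        = ∑ l ∈ range ((d-1)-1), Gf y l * C (l+1) := by
      rw [Finset.sum_congr rfl (fun i (_ : i ∈ range (d-1)) =>
        show (if 1 ≤ i then Gf y (i-1) * C i else 0)
            = (if 1 ≤ i then Gf y (i-1) * C ((i-1)+1) else 0) from by
          split_ifs with h
          · rw [Nat.sub_add_cancel h]
          · rfl)]
      exact sum_shiftLow (d-1) (fun u => Gf y u * C (u+1))
    rw [L, R]
  rw [s4, s5, s6, s7, s8, s9]
  -- final per-coefficient identities
  have FA : ∑ k ∈ range d, A k * y k
      = ∑ l ∈ range d, Af d y l * A l - ∑ l ∈ range d, Bf y l * A l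
        + ∑ l ∈ range d, (if l < d - 1 then Gf y l * A l else 0)
        - ∑ l ∈ range d, (if 1 ≤ l then Gf y (l-1) * A l else 0) := by
    rw [← Finset.sum_sub_distrib, ← Finset.sum_add_distrib, ← Finset.sum_sub_distrib]
    refine Finset.sum_congr rfl fun k _ => ?_
    have h := pA d y k
    rw [show (if k < d - 1 then Gf y k * A k else 0) = (if k < d - 1 then Gf y k else 0) * A k
        from by split_ifs <;> ring,
      show (if 1 ≤ k then Gf y (k-1) * A k else 0) = (if 1 ≤ k then Gf y (k-1) else 0) * A k
        from by split_ifs <;> ring, ← h]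
    ring
  have FB : ∑ k ∈ range d, B k * min 0 (y k)
      = -∑ l ∈ range d, Bf y l * B l
        - ∑ l ∈ range d, (if 1 ≤ l then Gf y (l-1) * B l else 0) := by
    rw [← Finset.sum_neg_distrib, ← Finset.sum_sub_distrib]
    refine Finset.sum_congr rfl fun k _ => ?_
    have h := pB y k
    rw [show (if 1 ≤ k then Gf y (k-1) * B k else 0) = (if 1 ≤ k then Gf y (k-1) else 0) * B k
        from by split_ifs <;> ring, ← h]
    ring
  have FC : ∑ i ∈ range (d-1), C i * min 0 (min (y i) (y i + y (i+1)))
      = -∑ l ∈ range (d-1), Bf y l * C l - ∑ l ∈ range (d-1), Bf y (l+1) * C l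
        - ∑ i ∈ range (d-1), (if 1 ≤ i then Gf y (i-1) * C i else 0) := by
    rw [← Finset.sum_neg_distrib, ← Finset.sum_sub_distrib, ← Finset.sum_sub_distrib]
    refine Finset.sum_congr rfl fun i _ => ?_
    have h := pC y i
    rw [show (if 1 ≤ i then Gf y (i-1) * C i else 0) = (if 1 ≤ i then Gf y (i-1) else 0) * C i
        from by split_ifs <;> ring, ← h]
    ring
  unfold Sval
  rw [FA, FB, FC]
  ring

lemma trop_eq_Sval (d : ℕ) (a b : Fin d → ℤ) (c : Fin (d - 1) → ℤ)
    (Y : Fin d → ℝ) (y : ℕ → ℝ) (hy : ∀ k (h : k < d), y k = Y ⟨k, h⟩) :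
    tropChar d a b c Y
      = Sval d (fun k => if h : k < d then (a ⟨k, h⟩ : ℝ) else 0)
          (fun k => if h : k < d then (b ⟨k, h⟩ : ℝ) else 0)
          (fun i => if h : i < d - 1 then (c ⟨i, h⟩ : ℝ) else 0) y := by
  have hy' : ∀ i : Fin (d-1), i.val < d := fun i => by have := i.isLt; omega
  have hy'' : ∀ i : Fin (d-1), i.val + 1 < d := fun i => by have := i.isLt; omega
  unfold tropChar Sval
  congr 1
  · congr 1
    · rw [← Fin.sum_univ_eq_sum_range
        (fun k => (if h : k < d then (a ⟨k, h⟩ : ℝ) else 0) * y k) d]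
      exact Finset.sum_congr rfl fun i _ => by
        rw [dif_pos i.isLt, hy i.val i.isLt]
    · rw [← Fin.sum_univ_eq_sum_range
        (fun k => (if h : k < d then (b ⟨k, h⟩ : ℝ) else 0) * min 0 (y k)) d]
      exact Finset.sum_congr rfl fun i _ => by
        rw [dif_pos i.isLt, hy i.val i.isLt]
  · rw [← Fin.sum_univ_eq_sum_range
      (fun i => (if h : i < d - 1 then (c ⟨i, h⟩ : ℝ) else 0)
        * min 0 (min (y i) (y i + y (i+1)))) (d-1)]
    exact Finset.sum_congr rfl fun i _ => by
      rw [dif_pos i.isLt, hy i.val (hy' i), hy (i.val + 1) (hy'' i)]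

/-- For `d ≥ 1` and `(a,b,c) ∈ ℤ^d × ℤ^d × ℤ^{d-1}`, the following are equivalent:
(i) `T_{(a,b,c)}(Y) ≥ 0` for all `Y ∈ ℝ^d` and `T_{(a,b,c)}(Y*) > 0` for some `Y*`;
(ii) `T_{(a,b,c)}(V_j) ≥ 0` for all `j` and `T_{(a,b,c)}(V_{j*}) > 0` for some `j*`. -/
theorem trop_nonneg_pos_iff_on_rays (d : ℕ) (hd : 1 ≤ d)
    (a b : Fin d → ℤ) (c : Fin (d - 1) → ℤ) :
    ((∀ Y : Fin d → ℝ, 0 ≤ tropChar d a b c Y) ∧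
        ∃ Y : Fin d → ℝ, 0 < tropChar d a b c Y) ↔
      ((∀ j : Fin (3 * d - 1), 0 ≤ tropChar d a b c (rayGen d j.val)) ∧
        ∃ j : Fin (3 * d - 1), 0 < tropChar d a b c (rayGen d j.val)) := by
  set A : ℕ → ℝ := fun k => if h : k < d then (a ⟨k, h⟩ : ℝ) else 0 with hA
  set B : ℕ → ℝ := fun k => if h : k < d then (b ⟨k, h⟩ : ℝ) else 0 with hB
  set C : ℕ → ℝ := fun i => if h : i < d - 1 then (c ⟨i, h⟩ : ℝ) else 0 with hC
  have bridge : ∀ Y : Fin d → ℝ,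
      tropChar d a b c Y = Sval d A B C (fun k => if h : k < d then Y ⟨k, h⟩ else 0) :=
    fun Y => trop_eq_Sval d a b c Y _ (fun k h => dif_pos h)
  have ray_ee : ∀ l, l < d → Sval d A B C (eeF l) = tropChar d a b c (rayGen d l) := by
    intro l hl
    refine (trop_eq_Sval d a b c (rayGen d l) (eeF l) ?_).symm
    intro k h
    simp [eeF, rayGen, hl]
  have ray_ne : ∀ l, l < d → Sval d A B C (neF l) = tropChar d a b c (rayGen d (d + l)) := by
    intro l hl
    refine (trop_eq_Sval d a b c (rayGen d (d + l)) (neF l) ?_).symm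
    intro k h
    simp [neF, rayGen, (by omega : ¬ (d + l < d)), (by omega : d + l < 2 * d),
      Nat.add_sub_cancel_left]
  have ray_de : ∀ l, l < d - 1 →
      Sval d A B C (deF l) = tropChar d a b c (rayGen d (2 * d + l)) := by
    intro l hl
    refine (trop_eq_Sval d a b c (rayGen d (2 * d + l)) (deF l) ?_).symm
    intro k h
    simp [deF, rayGen, (by omega : ¬ (2 * d + l < d)), (by omega : ¬ (2 * d + l < 2 * d)),
      (by omega : 2 * d + l - 2 * d = l)]
    exact fun h' => absurd h' (by omega)
  constructor
  · rintro ⟨hpos, Y, hY⟩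
    refine ⟨fun j => hpos _, ?_⟩
    by_contra hne
    push_neg at hne
    have hzero : ∀ j : Fin (3 * d - 1), tropChar d a b c (rayGen d j.val) = 0 :=
      fun j => le_antisymm (hne j) (hpos _)
    rw [bridge Y, key d A B C _] at hY
    have z1 : ∑ l ∈ range d, Af d (fun k => if h : k < d then Y ⟨k, h⟩ else 0) l
        * Sval d A B C (eeF l) = 0 :=
      Finset.sum_eq_zero fun l hl => by
        have hl' := mem_range.mp hl
        rw [ray_ee l hl', hzero ⟨l, by omega⟩, mul_zero]
    have z2 : ∑ l ∈ range d, Bf (fun k => if h : k < d then Y ⟨k, h⟩ else 0) l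
        * Sval d A B C (neF l) = 0 :=
      Finset.sum_eq_zero fun l hl => by
        have hl' := mem_range.mp hl
        rw [ray_ne l hl', hzero ⟨d + l, by omega⟩, mul_zero]
    have z3 : ∑ l ∈ range (d-1), Gf (fun k => if h : k < d then Y ⟨k, h⟩ else 0) l
        * Sval d A B C (deF l) = 0 :=
      Finset.sum_eq_zero fun l hl => by
        have hl' := mem_range.mp hl
        rw [ray_de l hl', hzero ⟨2 * d + l, by omega⟩, mul_zero]
    rw [z1, z2, z3] at hY
    norm_num at hY
  · rintro ⟨hpos, j, hj⟩
    refine ⟨fun Y => ?_, ⟨rayGen d j.val, hj⟩⟩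
    rw [bridge Y, key d A B C _]
    have n1 : 0 ≤ ∑ l ∈ range d, Af d (fun k => if h : k < d then Y ⟨k, h⟩ else 0) l
        * Sval d A B C (eeF l) :=
      Finset.sum_nonneg fun l hl => by
        have hl' := mem_range.mp hl
        refine mul_nonneg (Af_nonneg _ _ _) ?_
        rw [ray_ee l hl']
        exact hpos ⟨l, by omega⟩
    have n2 : 0 ≤ ∑ l ∈ range d, Bf (fun k => if h : k < d then Y ⟨k, h⟩ else 0) l
        * Sval d A B C (neF l) :=
      Finset.sum_nonneg fun l hl => by
        have hl' := mem_range.mp hl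
        refine mul_nonneg (Bf_nonneg _ _) ?_
        rw [ray_ne l hl']
        exact hpos ⟨d + l, by omega⟩
    have n3 : 0 ≤ ∑ l ∈ range (d-1), Gf (fun k => if h : k < d then Y ⟨k, h⟩ else 0) l
        * Sval d A B C (deF l) :=
      Finset.sum_nonneg fun l hl => by
        have hl' := mem_range.mp hl
        refine mul_nonneg (Gf_nonneg _ _) ?_
        rw [ray_de l hl']
        exact hpos ⟨2 * d + l, by omega⟩
    linarith
end

section
/- Let d ≥ 1 and (a,b,c) ∈ ℤ^d × ℤ^d × ℤ^{d-1}. Then T_{(a,b,c)}(Y) = 0 for all Y ∈ ℝ^d if and only if (a,b,c) = 0. -/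
private lemma sum_ite_val {n : ℕ} (f : Fin n → ℝ) (p : ℕ) :
    (∑ i : Fin n, if i.val = p then f i else 0) = if h : p < n then f ⟨p, h⟩ else 0 := by
  by_cases h : p < n
  · rw [dif_pos h]
    calc (∑ i : Fin n, if i.val = p then f i else 0)
        = ∑ i : Fin n, if i = ⟨p, h⟩ then f i else 0 := by
          refine Finset.sum_congr rfl fun i _ => ?_
          simp [Fin.ext_iff]
      _ = f ⟨p, h⟩ := by simp
  · rw [dif_neg h]
    refine Finset.sum_eq_zero fun i _ => ?_
    rw [if_neg]
    have := i.isLt; omega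

private lemma sum_one_val {n : ℕ} (f : Fin n → ℝ) (p : ℕ)
    (hf : ∀ i : Fin n, i.val ≠ p → f i = 0) :
    ∑ i, f i = if h : p < n then f ⟨p, h⟩ else 0 := by
  rw [← sum_ite_val f p]
  refine Finset.sum_congr rfl fun i _ => ?_
  by_cases h : i.val = p
  · rw [if_pos h]
  · rw [if_neg h, hf i h]

private lemma sum_two_val {n : ℕ} (f : Fin n → ℝ) (p q : ℕ) (hpq : p ≠ q)
    (hf : ∀ i : Fin n, i.val ≠ p → i.val ≠ q → f i = 0) :
    ∑ i, f i = (if h : p < n then f ⟨p, h⟩ else 0) + (if h : q < n then f ⟨q, h⟩ else 0) := by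
  have key : ∀ i : Fin n, f i =
      (if i.val = p then f i else 0) + (if i.val = q then f i else 0) := by
    intro i
    by_cases h1 : i.val = p
    · rw [if_pos h1, if_neg (by omega), add_zero]
    · rw [if_neg h1]
      by_cases h2 : i.val = q
      · rw [if_pos h2, zero_add]
      · rw [if_neg h2, hf i h1 h2, add_zero]
  rw [Finset.sum_congr rfl fun i _ => key i, Finset.sum_add_distrib,
    sum_ite_val f p, sum_ite_val f q]

/-- For `d ≥ 1` and `(a,b,c) ∈ ℤ^d × ℤ^d × ℤ^{d-1}`, we have `T_{(a,b,c)}(Y) = 0` for all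
`Y ∈ ℝ^d` if and only if `(a,b,c) = 0`. -/
theorem trop_eq_zero_iff (d : ℕ) (hd : 1 ≤ d)
    (a b : Fin d → ℤ) (c : Fin (d - 1) → ℤ) :
    (∀ Y : Fin d → ℝ, tropChar d a b c Y = 0) ↔ (a = 0 ∧ b = 0 ∧ c = 0) := by
  constructor
  · intro h
    -- Step 1 : evaluate at the all-ones vector
    have h1s : (∑ i, (a i : ℝ)) = 0 := by
      have := h (fun _ => 1)
      simp only [tropChar, mul_one] at this
      have e1 : min (0:ℝ) 1 = 0 := by norm_num
      have e2 : min (0:ℝ) (min 1 (1+1)) = 0 := by norm_num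
      simpa [e1, e2] using this
    -- Step 2 : a = 0
    have haR : ∀ j : Fin d, (a j : ℝ) = 0 := by
      intro j
      have hj := h (fun m => if m = j then 2 else 1)
      simp only [tropChar] at hj
      have hb0 : (∑ i, (b i : ℝ) * min 0 (if i = j then (2:ℝ) else 1)) = 0 := by
        refine Finset.sum_eq_zero fun i _ => ?_
        by_cases hi : i = j <;> simp [hi] <;> norm_num
      have hc0 : (∑ i : Fin (d-1), (c i : ℝ) *
          min 0 (min ((fun m => if m = j then (2:ℝ) else 1) ⟨i.val, by have := i.isLt; omega⟩)
            ((fun m => if m = j then (2:ℝ) else 1) ⟨i.val, by have := i.isLt; omega⟩ +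
             (fun m => if m = j then (2:ℝ) else 1) ⟨i.val + 1, by have := i.isLt; omega⟩))) = 0 := by
        refine Finset.sum_eq_zero fun i _ => ?_
        by_cases h1 : (⟨i.val, by have := i.isLt; omega⟩ : Fin d) = j <;>
          by_cases h2 : (⟨i.val + 1, by have := i.isLt; omega⟩ : Fin d) = j <;>
          simp [h1, h2] <;> norm_num
      have ha2 : (∑ i, (a i : ℝ) * (if i = j then (2:ℝ) else 1)) =
          (∑ i, (a i : ℝ)) + (a j : ℝ) := by
        have : ∀ i : Fin d, (a i : ℝ) * (if i = j then (2:ℝ) else 1) =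
            (a i : ℝ) + (if i = j then (a i : ℝ) else 0) := by
          intro i; by_cases hi : i = j <;> simp [hi] <;> ring
        rw [Finset.sum_congr rfl fun i _ => this i, Finset.sum_add_distrib,
          Finset.sum_ite_eq' Finset.univ j]
        simp
      rw [ha2, hb0, hc0] at hj
      rw [h1s] at hj
      linarith
    -- with a = 0, the remaining equation
    have hbc : ∀ Y : Fin d → ℝ,
        (∑ i, (b i : ℝ) * min 0 (Y i)) +
        (∑ i : Fin (d-1), (c i : ℝ) *
          min 0 (min (Y ⟨i.val, by have := i.isLt; omega⟩)
            (Y ⟨i.val, by have := i.isLt; omega⟩ + Y ⟨i.val + 1, by have := i.isLt; omega⟩))) = 0 := by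
      intro Y
      have := h Y
      simp only [tropChar, haR, zero_mul, Finset.sum_const_zero, zero_add] at this
      exact this
    -- E1 : from Y_j = -1/2, others 1
    have E1 : ∀ j : Fin d,
        (b j : ℝ) + (if h' : j.val < d - 1 then (c ⟨j.val, h'⟩ : ℝ) else 0) = 0 := by
      intro j
      have hj := hbc (fun m => if m = j then (-(1/2) : ℝ) else 1)
      have hb1 : (∑ i, (b i : ℝ) * min 0 (if i = j then (-(1/2):ℝ) else 1)) =
          (b j : ℝ) * (-(1/2)) := by
        rw [Fintype.sum_eq_single j]
        · simp <;> norm_num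
        · intro i hi; simp [hi] <;> norm_num
      have hc1 : (∑ i : Fin (d-1), (c i : ℝ) *
          min 0 (min ((fun m => if m = j then (-(1/2):ℝ) else 1) ⟨i.val, by have := i.isLt; omega⟩)
            ((fun m => if m = j then (-(1/2):ℝ) else 1) ⟨i.val, by have := i.isLt; omega⟩ +
             (fun m => if m = j then (-(1/2):ℝ) else 1) ⟨i.val + 1, by have := i.isLt; omega⟩))) =
          (if h' : j.val < d - 1 then (c ⟨j.val, h'⟩ : ℝ) * (-(1/2)) else 0) := by
        rw [sum_one_val _ j.val]
        · by_cases h' : j.val < d - 1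
          · rw [dif_pos h', dif_pos h']
            have e0 : (⟨(⟨j.val, h'⟩ : Fin (d-1)).val, by omega⟩ : Fin d) = j := by
              apply Fin.ext; simp
            have e1 : (⟨(⟨j.val, h'⟩ : Fin (d-1)).val + 1, by omega⟩ : Fin d) ≠ j := by
              simp [Fin.ext_iff]
            simp [e0, e1] <;> norm_num
          · rw [dif_neg h', dif_neg h']
        · intro i hi
          have e0 : (⟨i.val, by have := i.isLt; omega⟩ : Fin d) ≠ j := by
            simp [Fin.ext_iff]; omega
          by_cases h2 : (⟨i.val + 1, by have := i.isLt; omega⟩ : Fin d) = j <;>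
            simp [e0, h2] <;> norm_num
      rw [hb1, hc1] at hj
      by_cases h' : j.val < d - 1
      · rw [dif_pos h'] at hj; rw [dif_pos h']; linarith
      · rw [dif_neg h'] at hj; rw [dif_neg h']; linarith
    -- E2 : from Y_j = -2, others 1, for j ≥ 1
    have E2 : ∀ j : Fin d, ∀ hj1 : 1 ≤ j.val,
        2 * (b j : ℝ) + 2 * (if h' : j.val < d - 1 then (c ⟨j.val, h'⟩ : ℝ) else 0) +
          (c ⟨j.val - 1, by have := j.isLt; omega⟩ : ℝ) = 0 := by
      intro j hj1
      have hj := hbc (fun m => if m = j then (-2 : ℝ) else 1)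
      have hb1 : (∑ i, (b i : ℝ) * min 0 (if i = j then (-2:ℝ) else 1)) =
          (b j : ℝ) * (-2) := by
        rw [Fintype.sum_eq_single j]
        · simp <;> norm_num
        · intro i hi; simp [hi] <;> norm_num
      have hc1 : (∑ i : Fin (d-1), (c i : ℝ) *
          min 0 (min ((fun m => if m = j then (-2:ℝ) else 1) ⟨i.val, by have := i.isLt; omega⟩)
            ((fun m => if m = j then (-2:ℝ) else 1) ⟨i.val, by have := i.isLt; omega⟩ +
             (fun m => if m = j then (-2:ℝ) else 1) ⟨i.val + 1, by have := i.isLt; omega⟩))) =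
          (if h' : j.val < d - 1 then (c ⟨j.val, h'⟩ : ℝ) * (-2) else 0) +
          (c ⟨j.val - 1, by have := j.isLt; omega⟩ : ℝ) * (-1) := by
        rw [sum_two_val _ j.val (j.val - 1) (by omega)]
        · congr 1
          · by_cases h' : j.val < d - 1
            · rw [dif_pos h', dif_pos h']
              have e0 : (⟨(⟨j.val, h'⟩ : Fin (d-1)).val, by omega⟩ : Fin d) = j := by
                apply Fin.ext; simp
              have e1 : (⟨(⟨j.val, h'⟩ : Fin (d-1)).val + 1, by omega⟩ : Fin d) ≠ j := by
                simp [Fin.ext_iff]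
              simp [e0, e1] <;> norm_num
            · rw [dif_neg h', dif_neg h']
          · have hq : j.val - 1 < d - 1 := by have := j.isLt; omega
            rw [dif_pos hq]
            have e0 : (⟨(⟨j.val - 1, hq⟩ : Fin (d-1)).val, by omega⟩ : Fin d) ≠ j := by
              simp [Fin.ext_iff]; omega
            have e1 : (⟨(⟨j.val - 1, hq⟩ : Fin (d-1)).val + 1, by omega⟩ : Fin d) = j := by
              apply Fin.ext; simp; omega
            simp [e0, e1] <;> norm_num
        · intro i hip hiq
          have e0 : (⟨i.val, by have := i.isLt; omega⟩ : Fin d) ≠ j := by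
            simp [Fin.ext_iff]; omega
          have e1 : (⟨i.val + 1, by have := i.isLt; omega⟩ : Fin d) ≠ j := by
            simp [Fin.ext_iff]; omega
          simp [e0, e1] <;> norm_num
      rw [hb1, hc1] at hj
      by_cases h' : j.val < d - 1
      · rw [dif_pos h'] at hj ⊢; linarith
      · rw [dif_neg h'] at hj ⊢; linarith
    -- c = 0
    have hcR : ∀ k : Fin (d - 1), (c k : ℝ) = 0 := by
      intro k
      have hk : k.val + 1 < d := by have := k.isLt; omega
      have e2 := E2 ⟨k.val + 1, hk⟩ (by simp)
      have e1 := E1 ⟨k.val + 1, hk⟩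
      have ek : (⟨(⟨k.val + 1, hk⟩ : Fin d).val - 1, by omega⟩ : Fin (d-1)) = k := by
        apply Fin.ext; simp
      rw [ek] at e2
      by_cases h' : (⟨k.val + 1, hk⟩ : Fin d).val < d - 1
      · rw [dif_pos h'] at e1 e2; linarith
      · rw [dif_neg h'] at e1 e2; linarith
    -- b = 0
    have hbR : ∀ j : Fin d, (b j : ℝ) = 0 := by
      intro j
      have e1 := E1 j
      by_cases h' : j.val < d - 1
      · rw [dif_pos h', hcR] at e1; linarith
      · rw [dif_neg h'] at e1; linarith
    refine ⟨funext fun j => ?_, funext fun j => ?_, funext fun k => ?_⟩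
    · exact_mod_cast haR j
    · exact_mod_cast hbR j
    · exact_mod_cast hcR k
  · rintro ⟨rfl, rfl, rfl⟩
    intro Y
    simp [tropChar]
end

section
/- For every integer d ≥ 1, the matrix M_d is invertible over ℤ, and its inverse is the matrix whose i-th row is β_i for 1 ≤ i ≤ 3d−1; that is, if N is the integer matrix with rows β_1,…,β_{3d−1}, then N · M_d = M_d · N = Id. -/
/-- Coordinate `k` (0-indexed) of the primitive ray generator `V_j` (0-indexed, integer
version): the vectors `e_1, …, e_d, -e_1, …, -e_d, e_1 - e_2, …, e_{d-1} - e_d`. -/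
def rayGenZ (d j k : ℕ) : ℤ :=
  if j < d then (if k = j then 1 else 0)
  else if j < 2 * d then (if k = j - d then -1 else 0)
  else (if k = j - 2 * d then 1 else if k = j - 2 * d + 1 then -1 else 0)

/-- The `(3d-1) × (3d-1)` integer matrix `M_d` with entries `m_{ij} = trop(F_i)(V_j)` where
`(F_1,…,F_{3d-1}) = (y_1,…,y_d, p_1,…,p_d, q_1,…,q_{d-1})` (0-indexed): for `i < d` the
entry is `(V_j)_i`, for `d ≤ i < 2d` it is `min{0, (V_j)_{i-d}}`, and for `2d ≤ i` it is
`min{0, (V_j)_{i-2d}, (V_j)_{i-2d} + (V_j)_{i-2d+1}}`. -/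
def pellMatrix (d : ℕ) : Matrix (Fin (3 * d - 1)) (Fin (3 * d - 1)) ℤ := fun i j =>
  if (i : ℕ) < d then rayGenZ d j.val i.val
  else if (i : ℕ) < 2 * d then min 0 (rayGenZ d j.val (i.val - d))
  else min 0 (min (rayGenZ d j.val (i.val - 2 * d))
    (rayGenZ d j.val (i.val - 2 * d) + rayGenZ d j.val (i.val - 2 * d + 1)))

/-- Entry `k` of the vector `β_r` (all 0-indexed; in the 1-indexed notation of the paper:
`β_i = ε_i + ε_{d+i+1} − ε_{2d+i}` for `1 ≤ i ≤ d−1`, `β_d = ε_d − ε_{2d}`,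
`β_{d+1} = −ε_{d+1}`, `β_{d+j} = ε_{d+j−1} − ε_{2d+j−1}` for `2 ≤ j ≤ d`, and
`β_{2d+i} = −ε_{d+i} − ε_{d+i+1} + ε_{2d+i}` for `1 ≤ i ≤ d−1`). -/
def betaEnt (d r k : ℕ) : ℤ :=
  if r < d - 1 then
    (if k = r then 1 else 0) + (if k = d + r + 1 then 1 else 0)
      - (if k = 2 * d + r then 1 else 0)
  else if r = d - 1 then
    (if k = d - 1 then 1 else 0) - (if k = 2 * d - 1 then 1 else 0)
  else if r = d then
    -(if k = d then 1 else 0)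
  else if r < 2 * d then
    (if k = r - 1 then 1 else 0) - (if k = r + d - 1 then 1 else 0)
  else
    -(if k = r - d then 1 else 0) - (if k = r - d + 1 then 1 else 0)
      + (if k = r then 1 else 0)

/-- The matrix `N` whose `r`-th row is `β_r`. -/
def betaMatrix (d : ℕ) : Matrix (Fin (3 * d - 1)) (Fin (3 * d - 1)) ℤ := fun r k =>
  betaEnt d r.val k.val

/-- Explicit formula for the rows `i < d` of `pellMatrix`. -/
lemma pell_apply₁ (d : ℕ) (i j : Fin (3 * d - 1)) (h : (i : ℕ) < d) :
    pellMatrix d i j =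
      (if (j : ℕ) = (i : ℕ) then 1 else 0) - (if (j : ℕ) = d + (i : ℕ) then 1 else 0)
      + (if (j : ℕ) = 2 * d + (i : ℕ) then 1 else 0)
      - (if 1 ≤ (i : ℕ) ∧ (j : ℕ) + 1 = 2 * d + (i : ℕ) then 1 else 0) := by
  have hj := j.isLt
  unfold pellMatrix rayGenZ
  split_ifs <;> omega

/-- Explicit formula for the rows `d ≤ i < 2d` of `pellMatrix`. -/
lemma pell_apply₂ (d : ℕ) (i j : Fin (3 * d - 1)) (h : d ≤ (i : ℕ)) (h' : (i : ℕ) < 2 * d) :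
    pellMatrix d i j =
      -(if (j : ℕ) = (i : ℕ) then 1 else 0)
      - (if d + 1 ≤ (i : ℕ) ∧ (j : ℕ) + 1 = d + (i : ℕ) then 1 else 0) := by
  have hj := j.isLt
  unfold pellMatrix rayGenZ
  split_ifs <;> omega

/-- Explicit formula for the rows `2d ≤ i` of `pellMatrix`. -/
lemma pell_apply₃ (d : ℕ) (i j : Fin (3 * d - 1)) (h : 2 * d ≤ (i : ℕ)) :
    pellMatrix d i j =
      -(if (j : ℕ) + d = (i : ℕ) then 1 else 0) - (if (j : ℕ) + d = (i : ℕ) + 1 then 1 else 0)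
      - (if 2 * d + 1 ≤ (i : ℕ) ∧ (j : ℕ) + 1 = (i : ℕ) then 1 else 0) := by
  have hi := i.isLt
  have hj := j.isLt
  unfold pellMatrix rayGenZ
  split_ifs <;> omega

/-- Summing an indicator `δ_{k,t}` against a function picks out the value at `t`. -/
lemma delta_sum {n : ℕ} (t : ℕ) (ht : t < n) (g : Fin n → ℤ) :
    (∑ k : Fin n, (if (k : ℕ) = t then (1:ℤ) else 0) * g k) = g ⟨t, ht⟩ := by
  have h : ∀ k : Fin n, (if (k : ℕ) = t then (1:ℤ) else 0) * g k
      = if k = ⟨t, ht⟩ then g k else 0 := by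
    intro k
    by_cases h : k = ⟨t, ht⟩
    · subst h; simp
    · rw [if_neg fun hh => h (Fin.ext hh), if_neg h, zero_mul]
  rw [Finset.sum_congr rfl fun k _ => h k]
  simp

set_option maxHeartbeats 4000000 in
/-- For every `d ≥ 1`, the matrix `M_d` is invertible over `ℤ` with inverse the matrix `N`
whose rows are `β_1, …, β_{3d-1}`: we have `N · M_d = M_d · N = Id`. -/
theorem betaMatrix_mul_pellMatrix (d : ℕ) (hd : 1 ≤ d) :
    betaMatrix d * pellMatrix d = 1 ∧ pellMatrix d * betaMatrix d = 1 := by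
  have key : betaMatrix d * pellMatrix d = 1 := by
    ext r j
    have hr := r.isLt
    have hj := j.isLt
    rw [Matrix.mul_apply]
    have hone : (1 : Matrix (Fin (3 * d - 1)) (Fin (3 * d - 1)) ℤ) r j
        = if (r : ℕ) = (j : ℕ) then 1 else 0 := by
      simp [Matrix.one_apply, Fin.ext_iff]
    rw [hone]
    simp only [betaMatrix]
    by_cases h1 : (r : ℕ) < d - 1
    · simp only [betaEnt, if_pos h1, add_mul, sub_mul, one_mul]
      rw [Finset.sum_sub_distrib, Finset.sum_add_distrib,
        delta_sum (r : ℕ) (by omega), delta_sum (d + (r : ℕ) + 1) (by omega),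
        delta_sum (2 * d + (r : ℕ)) (by omega),
        pell_apply₁ d _ j (by simp only [Fin.val_mk]; omega),
        pell_apply₂ d _ j (by simp only [Fin.val_mk]; omega)
          (by simp only [Fin.val_mk]; omega),
        pell_apply₃ d _ j (by simp only [Fin.val_mk]; omega)]
      simp only [Fin.val_mk]
      split_ifs <;> omega
    · by_cases h2 : (r : ℕ) = d - 1
      · simp only [betaEnt, if_neg h1, if_pos h2, sub_mul, one_mul]
        rw [Finset.sum_sub_distrib,
          delta_sum (d - 1) (by omega), delta_sum (2 * d - 1) (by omega),
          pell_apply₁ d _ j (by simp only [Fin.val_mk]; omega),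
          pell_apply₂ d _ j (by simp only [Fin.val_mk]; omega)
            (by simp only [Fin.val_mk]; omega)]
        simp only [Fin.val_mk]
        split_ifs <;> omega
      · by_cases h3 : (r : ℕ) = d
        · simp only [betaEnt, if_neg h1, if_neg h2, if_pos h3, neg_mul, one_mul]
          rw [Finset.sum_neg_distrib, delta_sum d (by omega),
            pell_apply₂ d _ j (by simp only [Fin.val_mk]; omega)
              (by simp only [Fin.val_mk]; omega)]
          simp only [Fin.val_mk]
          split_ifs <;> omega
        · by_cases h4 : (r : ℕ) < 2 * d
          · simp only [betaEnt, if_neg h1, if_neg h2, if_neg h3, if_pos h4, sub_mul, one_mul]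
            rw [Finset.sum_sub_distrib,
              delta_sum ((r : ℕ) - 1) (by omega), delta_sum ((r : ℕ) + d - 1) (by omega),
              pell_apply₂ d _ j (by simp only [Fin.val_mk]; omega)
                (by simp only [Fin.val_mk]; omega),
              pell_apply₃ d _ j (by simp only [Fin.val_mk]; omega)]
            simp only [Fin.val_mk]
            split_ifs <;> omega
          · simp only [betaEnt, if_neg h1, if_neg h2, if_neg h3, if_neg h4, add_mul, sub_mul,
              neg_mul, one_mul]
            rw [Finset.sum_add_distrib, Finset.sum_sub_distrib, Finset.sum_neg_distrib,
              delta_sum ((r : ℕ) - d) (by omega), delta_sum ((r : ℕ) - d + 1) (by omega),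
              delta_sum (r : ℕ) (by omega),
              pell_apply₂ d _ j (by simp only [Fin.val_mk]; omega)
                (by simp only [Fin.val_mk]; omega),
              pell_apply₂ d _ j (by simp only [Fin.val_mk]; omega)
                (by simp only [Fin.val_mk]; omega),
              pell_apply₃ d _ j (by simp only [Fin.val_mk]; omega)]
            simp only [Fin.val_mk]
            split_ifs <;> omega
  exact ⟨key, mul_eq_one_comm.mpr key⟩
end

section
/- Let d ≥ 1 and let α ∈ ℤ^{3d−1} be written as (a,b,c) ∈ ℤ^d × ℤ^d × ℤ^{d−1}. Then α ∈ Γ if and only if the row vector α · M_d has all entries nonnegative; equivalently, T_{(a,b,c)}(Y) ≥ 0 for all Y ∈ ℝ^d if and only if T_{(a,b,c)}(V_j) ≥ 0 for all j ∈ {1,…,3d−1}. -/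
/- ########## auxiliary definitions ########## -/

/-- Extension of a `Fin d`-indexed integer vector to `ℕ`, by zero, as reals. -/
noncomputable def extF {d : ℕ} (a : Fin d → ℤ) : ℕ → ℝ :=
  fun i => if h : i < d then (a ⟨i, h⟩ : ℝ) else 0

/-- Extension of a `Fin d`-indexed real vector to `ℕ`, by zero. -/
noncomputable def extY {d : ℕ} (Y : Fin d → ℝ) : ℕ → ℝ :=
  fun i => if h : i < d then Y ⟨i, h⟩ else 0

noncomputable def mval (y : ℕ → ℝ) (i : ℕ) : ℝ := min 0 (y i)
noncomputable def m3val (y : ℕ → ℝ) (i : ℕ) : ℝ := min 0 (min (y i) (y i + y (i + 1)))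
noncomputable def nuval (y : ℕ → ℝ) (k : ℕ) : ℝ := m3val y k - mval y k - mval y (k + 1)
noncomputable def muval (y : ℕ → ℝ) : ℕ → ℝ
  | 0 => -mval y 0
  | (i + 1) => mval y i - m3val y i
noncomputable def lamval (y : ℕ → ℝ) (i : ℕ) : ℝ := y i - mval y i - nuval y i

lemma mval_nonpos (y : ℕ → ℝ) (i : ℕ) : mval y i ≤ 0 := min_le_left _ _
lemma mval_le (y : ℕ → ℝ) (i : ℕ) : mval y i ≤ y i := min_le_right _ _

lemma mu_nonneg (y : ℕ → ℝ) (i : ℕ) : 0 ≤ muval y i := by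
  cases i with
  | zero => simp [muval]; exact mval_nonpos y 0
  | succ i =>
      show 0 ≤ mval y i - m3val y i
      have h1 : m3val y i ≤ 0 := min_le_left _ _
      have h2 : m3val y i ≤ y i := le_trans (min_le_right _ _) (min_le_left _ _)
      have : m3val y i ≤ mval y i := le_min h1 h2
      linarith

lemma nu_nonneg (y : ℕ → ℝ) (k : ℕ) : 0 ≤ nuval y k := by
  have h0 : mval y k + mval y (k + 1) ≤ 0 :=
    add_nonpos (mval_nonpos y k) (mval_nonpos y (k + 1))
  have h1 : mval y k + mval y (k + 1) ≤ y k := by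
    have := mval_le y k; have := mval_nonpos y (k + 1); linarith
  have h2 : mval y k + mval y (k + 1) ≤ y k + y (k + 1) :=
    add_le_add (mval_le y k) (mval_le y (k + 1))
  have : mval y k + mval y (k + 1) ≤ m3val y k := le_min h0 (le_min h1 h2)
  unfold nuval; linarith

lemma lam_nonneg (y : ℕ → ℝ) (i : ℕ) : 0 ≤ lamval y i := by
  have h1 : m3val y i ≤ min (y i) (y i + y (i + 1)) := min_le_right _ _
  have h2 : min (y i) (y i + y (i + 1)) = y i + min 0 (y (i + 1)) := by
    rw [← min_add_add_left]; ring_nf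
  have : m3val y i ≤ y i + mval y (i + 1) := by
    rw [h2] at h1; exact h1
  unfold lamval nuval; linarith

/-- The key telescoping decomposition identity. -/
lemma claim (A B C y : ℕ → ℝ) (n : ℕ) :
    (∑ i ∈ Finset.range (n + 1),
        (lamval y i * A i
          + muval y i * (-(A i) - B i - C i - (if i = 0 then 0 else C (i - 1)))))
      + ∑ k ∈ Finset.range n,
          (nuval y k * (A k - A (k + 1) - B (k + 1) - C (k + 1)))
    = (∑ i ∈ Finset.range (n + 1), (A i * y i + B i * mval y i))
      + (∑ k ∈ Finset.range n, C k * m3val y k)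
      + (-(nuval y n * A n) + mval y n * C n) := by
  induction n with
  | zero =>
      simp only [zero_add, Finset.sum_range_one, Finset.sum_range_zero, if_pos rfl,
        eq_self_iff_true, if_true]
      have hmu : muval y 0 = -mval y 0 := rfl
      rw [hmu]
      unfold lamval nuval
      ring
  | succ n ih =>
      have e1 := Finset.sum_range_succ (fun i => lamval y i * A i
        + muval y i * (-(A i) - B i - C i - (if i = 0 then 0 else C (i - 1)))) (n + 1)
      have e2 := Finset.sum_range_succ
        (fun k => nuval y k * (A k - A (k + 1) - B (k + 1) - C (k + 1))) n
      have e3 := Finset.sum_range_succ (fun i => A i * y i + B i * mval y i) (n + 1)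
      have e4 := Finset.sum_range_succ (fun k => C k * m3val y k) n
      beta_reduce at e1 e2 e3 e4
      rw [e1, e2, e3, e4]
      have hmu : muval y (n + 1) = mval y n - m3val y n := rfl
      have hif : (if n + 1 = 0 then (0:ℝ) else C (n + 1 - 1)) = C n := by simp
      rw [hmu, hif]
      simp only [lamval, nuval] at ih ⊢
      linear_combination ih

/-- Delta-sum helper. -/
lemma sum_delta {n : ℕ} (f : Fin n → ℝ) (i : ℕ) :
    (∑ k : Fin n, if (k : ℕ) = i then f k else 0)
      = if h : i < n then f ⟨i, h⟩ else 0 := by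
  split_ifs with h
  · rw [Fintype.sum_eq_single (⟨i, h⟩ : Fin n)]
    · simp
    · intro k hk
      rw [if_neg]
      intro hki
      exact hk (Fin.ext hki)
  · apply Finset.sum_eq_zero
    intro k _
    rw [if_neg]
    intro hki
    exact h (hki ▸ k.isLt)

lemma rayGen_cast (d j : ℕ) (k : Fin d) :
    rayGen d j k = ((rayGenZ d j k.val : ℤ) : ℝ) := by
  unfold rayGen rayGenZ
  split_ifs <;> norm_num

lemma rayGen_lo (d j : ℕ) (hj : j < d) (k : Fin d) :
    rayGen d j k = if (k : ℕ) = j then 1 else 0 := by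
  simp [rayGen, hj]

lemma rayGen_mid (d i : ℕ) (hi : i < d) (k : Fin d) :
    rayGen d (d + i) k = if (k : ℕ) = i then -1 else 0 := by
  have h1 : ¬ (d + i < d) := by omega
  have h2 : d + i < 2 * d := by omega
  simp [rayGen, h1, h2]

lemma rayGen_hi (d k0 : ℕ) (hk : k0 < d - 1) (k : Fin d) :
    rayGen d (2 * d + k0) k
      = if (k : ℕ) = k0 then 1 else if (k : ℕ) = k0 + 1 then -1 else 0 := by
  have h1 : ¬ (2 * d + k0 < d) := by omega
  have h2 : ¬ (2 * d + k0 < 2 * d) := by omega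
  simp [rayGen, h1, h2]

/- ########## evaluation of tropChar on the rays ########## -/

lemma evalE1 (d : ℕ) (a b : Fin d → ℤ) (c : Fin (d - 1) → ℤ) (i : ℕ) (hi : i < d) :
    tropChar d a b c (rayGen d i) = extF a i := by
  unfold tropChar
  have s1 : (∑ k, (a k : ℝ) * rayGen d i k) = extF a i := by
    have : ∀ k : Fin d, (a k : ℝ) * rayGen d i k
        = if (k : ℕ) = i then ((a k : ℝ)) else 0 := by
      intro k; rw [rayGen_lo d i hi]; split_ifs <;> ring
    rw [Finset.sum_congr rfl (fun k _ => this k), sum_delta]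
    simp [extF, hi]
  have s2 : (∑ k, (b k : ℝ) * min 0 (rayGen d i k)) = 0 := by
    apply Finset.sum_eq_zero
    intro k _
    rw [rayGen_lo d i hi]
    split_ifs <;> norm_num
  have s3 : (∑ k : Fin (d - 1), (c k : ℝ) *
      min 0 (min (rayGen d i ⟨k.val, by have := k.isLt; omega⟩)
        (rayGen d i ⟨k.val, by have := k.isLt; omega⟩
          + rayGen d i ⟨k.val + 1, by have := k.isLt; omega⟩))) = 0 := by
    apply Finset.sum_eq_zero
    intro k _
    rw [rayGen_lo d i hi, rayGen_lo d i hi]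
    split_ifs <;> norm_num
  rw [s1, s2, s3]; ring

lemma evalE2 (d : ℕ) (a b : Fin d → ℤ) (c : Fin (d - 1) → ℤ) (i : ℕ) (hi : i < d) :
    tropChar d a b c (rayGen d (d + i))
      = -(extF a i) - extF b i - extF c i - (if i = 0 then 0 else extF c (i - 1)) := by
  unfold tropChar
  have s1 : (∑ k, (a k : ℝ) * rayGen d (d + i) k) = -(extF a i) := by
    have : ∀ k : Fin d, (a k : ℝ) * rayGen d (d + i) k
        = if (k : ℕ) = i then (-(a k : ℝ)) else 0 := by
      intro k; rw [rayGen_mid d i hi]; split_ifs <;> ring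
    rw [Finset.sum_congr rfl (fun k _ => this k), sum_delta]
    simp [extF, hi]
  have s2 : (∑ k, (b k : ℝ) * min 0 (rayGen d (d + i) k)) = -(extF b i) := by
    have : ∀ k : Fin d, (b k : ℝ) * min 0 (rayGen d (d + i) k)
        = if (k : ℕ) = i then (-(b k : ℝ)) else 0 := by
      intro k; rw [rayGen_mid d i hi]; split_ifs <;> norm_num
    rw [Finset.sum_congr rfl (fun k _ => this k), sum_delta]
    simp [extF, hi]
  have s3 : (∑ k : Fin (d - 1), (c k : ℝ) *
      min 0 (min (rayGen d (d + i) ⟨k.val, by have := k.isLt; omega⟩)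
        (rayGen d (d + i) ⟨k.val, by have := k.isLt; omega⟩
          + rayGen d (d + i) ⟨k.val + 1, by have := k.isLt; omega⟩)))
      = -(extF c i) - (if i = 0 then 0 else extF c (i - 1)) := by
    have hterm : ∀ k : Fin (d - 1), (c k : ℝ) *
        min 0 (min (rayGen d (d + i) ⟨k.val, by have := k.isLt; omega⟩)
          (rayGen d (d + i) ⟨k.val, by have := k.isLt; omega⟩
            + rayGen d (d + i) ⟨k.val + 1, by have := k.isLt; omega⟩))
        = (if (k : ℕ) = i then (-(c k : ℝ)) else 0)
          + (if (k : ℕ) = i - 1 ∧ i ≠ 0 then (-(c k : ℝ)) else 0) := by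
      intro k
      rw [rayGen_mid d i hi, rayGen_mid d i hi]
      simp only [Fin.val_mk]
      rcases eq_or_ne (k : ℕ) i with h1 | h1
      · have h2 : ¬ ((k : ℕ) + 1 = i) := by omega
        have h3 : ¬ ((k : ℕ) = i - 1 ∧ i ≠ 0) := by omega
        rw [if_pos h1, if_neg h2, if_neg h3, if_pos h1]
        norm_num
      · rcases eq_or_ne ((k : ℕ) + 1) i with h2 | h2
        · have h3 : (k : ℕ) = i - 1 ∧ i ≠ 0 := by omega
          rw [if_neg h1, if_pos h2, if_pos h3, if_neg h1]
          norm_num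
        · have h3 : ¬ ((k : ℕ) = i - 1 ∧ i ≠ 0) := by omega
          rw [if_neg h1, if_neg h2, if_neg h3, if_neg h1]
          norm_num
    rw [Finset.sum_congr rfl (fun k _ => hterm k), Finset.sum_add_distrib]
    have d1 : (∑ k : Fin (d - 1), if (k : ℕ) = i then (-(c k : ℝ)) else 0)
        = -(extF c i) := by
      rw [sum_delta]
      unfold extF
      split_ifs with h
      · rfl
      · norm_num
    have d2 : (∑ k : Fin (d - 1), if (k : ℕ) = i - 1 ∧ i ≠ 0 then (-(c k : ℝ)) else 0)
        = -(if i = 0 then 0 else extF c (i - 1)) := by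
      rcases eq_or_ne i 0 with h0 | h0
      · rw [if_pos h0]
        rw [Finset.sum_eq_zero]
        · norm_num
        · intro k _; rw [if_neg]; simp [h0]
      · rw [if_neg h0]
        have : ∀ k : Fin (d - 1), (if (k : ℕ) = i - 1 ∧ i ≠ 0 then (-(c k : ℝ)) else 0)
            = if (k : ℕ) = i - 1 then (-(c k : ℝ)) else 0 := by
          intro k
          rcases eq_or_ne (k : ℕ) (i - 1) with h | h
          · rw [if_pos ⟨h, h0⟩, if_pos h]
          · rw [if_neg (fun hh => h hh.1), if_neg h]
        rw [Finset.sum_congr rfl (fun k _ => this k), sum_delta]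
        unfold extF
        split_ifs with h
        · rfl
        · norm_num
    rw [d1, d2]
    ring
  rw [s1, s2, s3]; ring

lemma evalE3 (d : ℕ) (a b : Fin d → ℤ) (c : Fin (d - 1) → ℤ) (k0 : ℕ) (hk : k0 < d - 1) :
    tropChar d a b c (rayGen d (2 * d + k0))
      = extF a k0 - extF a (k0 + 1) - extF b (k0 + 1) - extF c (k0 + 1) := by
  have hk0d : k0 < d := by omega
  have hk1d : k0 + 1 < d := by omega
  unfold tropChar
  have s1 : (∑ k, (a k : ℝ) * rayGen d (2 * d + k0) k)
      = extF a k0 - extF a (k0 + 1) := by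
    have : ∀ k : Fin d, (a k : ℝ) * rayGen d (2 * d + k0) k
        = (if (k : ℕ) = k0 then ((a k : ℝ)) else 0)
          + (if (k : ℕ) = k0 + 1 then (-(a k : ℝ)) else 0) := by
      intro k; rw [rayGen_hi d k0 hk]
      rcases eq_or_ne (k : ℕ) k0 with h1 | h1
      · have h2 : ¬ ((k : ℕ) = k0 + 1) := by omega
        simp only [if_pos h1, if_neg h2]; ring
      · rcases eq_or_ne (k : ℕ) (k0 + 1) with h2 | h2
        · simp only [if_neg h1, if_pos h2]; ring
        · simp only [if_neg h1, if_neg h2]; ring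
    rw [Finset.sum_congr rfl (fun k _ => this k), Finset.sum_add_distrib, sum_delta, sum_delta]
    simp only [extF, dif_pos hk0d, dif_pos hk1d]
    ring
  have s2 : (∑ k, (b k : ℝ) * min 0 (rayGen d (2 * d + k0) k)) = -(extF b (k0 + 1)) := by
    have : ∀ k : Fin d, (b k : ℝ) * min 0 (rayGen d (2 * d + k0) k)
        = if (k : ℕ) = k0 + 1 then (-(b k : ℝ)) else 0 := by
      intro k; rw [rayGen_hi d k0 hk]
      rcases eq_or_ne (k : ℕ) k0 with h1 | h1
      · have h2 : ¬ ((k : ℕ) = k0 + 1) := by omega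
        simp only [if_pos h1, if_neg h2]; norm_num
      · rcases eq_or_ne (k : ℕ) (k0 + 1) with h2 | h2
        · simp only [if_neg h1, if_pos h2]; norm_num
        · simp only [if_neg h1, if_neg h2]; norm_num
    rw [Finset.sum_congr rfl (fun k _ => this k), sum_delta]
    simp [extF, hk1d]
  have s3 : (∑ k : Fin (d - 1), (c k : ℝ) *
      min 0 (min (rayGen d (2 * d + k0) ⟨k.val, by have := k.isLt; omega⟩)
        (rayGen d (2 * d + k0) ⟨k.val, by have := k.isLt; omega⟩
          + rayGen d (2 * d + k0) ⟨k.val + 1, by have := k.isLt; omega⟩)))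
      = -(extF c (k0 + 1)) := by
    have hterm : ∀ k : Fin (d - 1), (c k : ℝ) *
        min 0 (min (rayGen d (2 * d + k0) ⟨k.val, by have := k.isLt; omega⟩)
          (rayGen d (2 * d + k0) ⟨k.val, by have := k.isLt; omega⟩
            + rayGen d (2 * d + k0) ⟨k.val + 1, by have := k.isLt; omega⟩))
        = if (k : ℕ) = k0 + 1 then (-(c k : ℝ)) else 0 := by
      intro k
      rw [rayGen_hi d k0 hk, rayGen_hi d k0 hk]
      simp only [Fin.val_mk]
      rcases eq_or_ne (k : ℕ) k0 with h1 | h1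
      · have h2 : ¬ ((k : ℕ) = k0 + 1) := by omega
        have h3 : (k : ℕ) + 1 = k0 + 1 := by omega
        have h4 : ¬ ((k : ℕ) + 1 = k0) := by omega
        simp only [if_pos h1, if_neg h2, if_neg h4, if_pos h3]
        norm_num
      · rcases eq_or_ne (k : ℕ) (k0 + 1) with h2 | h2
        · have h3 : ¬ ((k : ℕ) + 1 = k0) := by omega
          have h4 : ¬ ((k : ℕ) + 1 = k0 + 1) := by omega
          simp only [if_neg h1, if_pos h2, if_neg h3, if_neg h4]
          norm_num
        · rcases eq_or_ne ((k : ℕ) + 1) k0 with h3 | h3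
          · have h4 : ¬ ((k : ℕ) + 1 = k0 + 1) := by omega
            simp only [if_neg h1, if_neg h2, if_pos h3, if_neg h4]
            norm_num
          · rcases eq_or_ne ((k : ℕ) + 1) (k0 + 1) with h4 | h4
            · omega
            · simp only [if_neg h1, if_neg h2, if_neg h3, if_neg h4]
              norm_num
    rw [Finset.sum_congr rfl (fun k _ => hterm k), sum_delta]
    unfold extF
    by_cases h : k0 + 1 < d - 1
    · rw [dif_pos h, dif_pos h]
    · rw [dif_neg h, dif_neg h]; ring
  rw [s1, s2, s3]; ring

/- ########## tropChar as range sums ########## -/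

lemma tropChar_eq_range (d : ℕ) (a b : Fin d → ℤ) (c : Fin (d - 1) → ℤ) (Y : Fin d → ℝ) :
    tropChar d a b c Y
      = (∑ i ∈ Finset.range d, (extF a i * extY Y i + extF b i * mval (extY Y) i))
        + ∑ k ∈ Finset.range (d - 1), extF c k * m3val (extY Y) k := by
  unfold tropChar
  rw [← Finset.sum_add_distrib]
  congr 1
  · rw [← Fin.sum_univ_eq_sum_range
      (fun i => extF a i * extY Y i + extF b i * mval (extY Y) i) d]
    apply Finset.sum_congr rfl
    intro i _
    have hi : (i : ℕ) < d := i.isLt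
    simp only [extF, extY, mval, dif_pos hi]
  · rw [← Fin.sum_univ_eq_sum_range (fun k => extF c k * m3val (extY Y) k) (d - 1)]
    apply Finset.sum_congr rfl
    intro k _
    have hk : (k : ℕ) < d - 1 := k.isLt
    have hk1 : (k : ℕ) < d := by omega
    have hk2 : (k : ℕ) + 1 < d := by omega
    simp only [extF, extY, m3val, dif_pos hk, dif_pos hk1, dif_pos hk2]

/- ########## hard direction ########## -/

lemma back_dir (d : ℕ) (hd : 1 ≤ d) (a b : Fin d → ℤ) (c : Fin (d - 1) → ℤ)
    (h : ∀ j : Fin (3 * d - 1), 0 ≤ tropChar d a b c (rayGen d j.val))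
    (Y : Fin d → ℝ) : 0 ≤ tropChar d a b c Y := by
  set y : ℕ → ℝ := extY Y with hy
  have hyd : y d = 0 := by simp [hy, extY]
  have hnu : nuval y (d - 1) = 0 := by
    have h1 : d - 1 + 1 = d := by omega
    unfold nuval m3val mval
    rw [h1, hyd]
    simp
  have hC : extF c (d - 1) = 0 := by
    unfold extF
    rw [dif_neg (by omega)]
  have hrange : tropChar d a b c Y
      = (∑ i ∈ Finset.range d, (extF a i * y i + extF b i * mval y i))
        + ∑ k ∈ Finset.range (d - 1), extF c k * m3val y k := tropChar_eq_range d a b c Y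
  have hd1 : d - 1 + 1 = d := by omega
  have hclaim := claim (extF a) (extF b) (extF c) y (d - 1)
  rw [hd1] at hclaim
  rw [hnu, hC] at hclaim
  have key : tropChar d a b c Y
      = (∑ i ∈ Finset.range d,
          (lamval y i * extF a i
            + muval y i * (-(extF a i) - extF b i - extF c i
              - (if i = 0 then 0 else extF c (i - 1)))))
        + ∑ k ∈ Finset.range (d - 1),
            (nuval y k * (extF a k - extF a (k + 1) - extF b (k + 1) - extF c (k + 1))) := by
    rw [hrange, hclaim]; ring
  rw [key]
  apply add_nonneg
  · apply Finset.sum_nonneg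
    intro i hi
    have hid : i < d := Finset.mem_range.mp hi
    apply add_nonneg
    · apply mul_nonneg (lam_nonneg y i)
      rw [← evalE1 d a b c i hid]
      exact h ⟨i, by omega⟩
    · apply mul_nonneg (mu_nonneg y i)
      rw [← evalE2 d a b c i hid]
      exact h ⟨d + i, by omega⟩
  · apply Finset.sum_nonneg
    intro k hk
    have hkd : k < d - 1 := Finset.mem_range.mp hk
    apply mul_nonneg (nu_nonneg y k)
    rw [← evalE3 d a b c k hkd]
    exact h ⟨2 * d + k, by omega⟩

/- ########## matrix side ########## -/

lemma sum_range_add' (f : ℕ → ℝ) (m n : ℕ) :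
    ∑ i ∈ Finset.range (m + n), f i
      = (∑ i ∈ Finset.range m, f i) + ∑ i ∈ Finset.range n, f (m + i) := by
  induction n with
  | zero => simp
  | succ n ih =>
      rw [← Nat.add_assoc, Finset.sum_range_succ, ih, Finset.sum_range_succ]
      ring

lemma vecMul_eq_trop (d : ℕ) (hd : 1 ≤ d) (a b : Fin d → ℤ) (c : Fin (d - 1) → ℤ)
    (α : Fin (3 * d - 1) → ℤ)
    (hα : ∀ i : Fin (3 * d - 1),
      α i = if h : (i : ℕ) < d then a ⟨i.val, h⟩
        else if h2 : (i : ℕ) < 2 * d then b ⟨i.val - d, Nat.sub_lt_left_of_lt_add (by omega) (by omega)⟩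
        else c ⟨i.val - 2 * d, Nat.sub_lt_left_of_lt_add (by omega) (by have := i.isLt; omega)⟩)
    (j : Fin (3 * d - 1)) :
    ((Matrix.vecMul α (pellMatrix d) j : ℤ) : ℝ) = tropChar d a b c (rayGen d j.val) := by
  have hvm : Matrix.vecMul α (pellMatrix d) j = ∑ i, α i * pellMatrix d i j := by
    simp [Matrix.vecMul, dotProduct]
  rw [hvm]
  push_cast
  -- turn into a range sum
  set g : ℕ → ℝ := fun i =>
    if hi : i < 3 * d - 1 then ((α ⟨i, hi⟩ : ℝ) * ((pellMatrix d ⟨i, hi⟩ j : ℤ) : ℝ)) else 0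
    with hg
  have h1 : (∑ i : Fin (3 * d - 1), (α i : ℝ) * ((pellMatrix d i j : ℤ) : ℝ))
      = ∑ i ∈ Finset.range (3 * d - 1), g i := by
    rw [← Fin.sum_univ_eq_sum_range g (3 * d - 1)]
    apply Finset.sum_congr rfl
    intro i _
    simp only [hg, dif_pos i.isLt]
  rw [h1]
  have hsplit : 3 * d - 1 = d + (d + (d - 1)) := by omega
  conv_lhs => rw [hsplit]
  rw [sum_range_add', sum_range_add']
  unfold tropChar
  conv_rhs => rw [add_assoc]
  congr 1
  · -- first chunk: i < d
    rw [← Fin.sum_univ_eq_sum_range (fun i => g i) d]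
    apply Finset.sum_congr rfl
    intro i _
    have hi : (i : ℕ) < d := i.isLt
    have hi3 : (i : ℕ) < 3 * d - 1 := by omega
    simp only [hg, dif_pos hi3]
    rw [hα ⟨(i : ℕ), hi3⟩]
    simp only [dif_pos hi]
    unfold pellMatrix
    simp only [if_pos hi]
    rw [rayGen_cast]
  congr 1
  · -- second chunk: b part
    rw [← Fin.sum_univ_eq_sum_range (fun i => g (d + i)) d]
    apply Finset.sum_congr rfl
    intro i _
    have hi : (i : ℕ) < d := i.isLt
    have hi3 : d + (i : ℕ) < 3 * d - 1 := by omega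
    have hnlt : ¬ (d + (i : ℕ) < d) := by omega
    have hlt2 : d + (i : ℕ) < 2 * d := by omega
    have hsub : d + (i : ℕ) - d = (i : ℕ) := by omega
    simp only [hg, dif_pos hi3]
    rw [hα ⟨d + (i : ℕ), hi3⟩]
    simp only [dif_neg hnlt, dif_pos hlt2]
    unfold pellMatrix
    simp only [if_neg hnlt, if_pos hlt2]
    simp only [hsub, Fin.eta]
    rw [rayGen_cast]
    push_cast [Int.cast_min]
    ring
  · -- third chunk: c part
    rw [← Fin.sum_univ_eq_sum_range (fun k => g (d + (d + k))) (d - 1)]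
    apply Finset.sum_congr rfl
    intro k _
    have hk : (k : ℕ) < d - 1 := k.isLt
    have heq : d + (d + (k : ℕ)) = 2 * d + (k : ℕ) := by omega
    have hk3 : 2 * d + (k : ℕ) < 3 * d - 1 := by omega
    have hnlt : ¬ (2 * d + (k : ℕ) < d) := by omega
    have hnlt2 : ¬ (2 * d + (k : ℕ) < 2 * d) := by omega
    have hsub : 2 * d + (k : ℕ) - 2 * d = (k : ℕ) := by omega
    rw [heq]
    simp only [hg, dif_pos hk3]
    rw [hα ⟨2 * d + (k : ℕ), hk3⟩]
    simp only [dif_neg hnlt, dif_neg hnlt2]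
    unfold pellMatrix
    simp only [if_neg hnlt, if_neg hnlt2]
    simp only [hsub, Fin.eta]
    rw [rayGen_cast, rayGen_cast]
    push_cast [Int.cast_min]
    simp only [Fin.val_mk]

/- ########## main theorem ########## -/

/-- Let `d ≥ 1` and let `α ∈ ℤ^{3d-1}` be written as `(a,b,c) ∈ ℤ^d × ℤ^d × ℤ^{d-1}`.
Then `α ∈ Γ` (i.e. `T_{(a,b,c)}(Y) ≥ 0` for all `Y ∈ ℝ^d`) if and only if the row vector
`α · M_d` has all entries nonnegative; equivalently, `T_{(a,b,c)}(Y) ≥ 0` for all `Y`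
if and only if `T_{(a,b,c)}(V_j) ≥ 0` for all `j ∈ {1,…,3d-1}`. -/
theorem mem_Gamma_iff_vecMul_nonneg (d : ℕ) (hd : 1 ≤ d)
    (a b : Fin d → ℤ) (c : Fin (d - 1) → ℤ) (α : Fin (3 * d - 1) → ℤ)
    (hα : ∀ i : Fin (3 * d - 1),
      α i = if h : (i : ℕ) < d then a ⟨i.val, h⟩
        else if h2 : (i : ℕ) < 2 * d then b ⟨i.val - d, by omega⟩
        else c ⟨i.val - 2 * d, by have := i.isLt; omega⟩) :
    ((∀ Y : Fin d → ℝ, 0 ≤ tropChar d a b c Y) ↔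
        ∀ j : Fin (3 * d - 1), 0 ≤ Matrix.vecMul α (pellMatrix d) j) ∧
    ((∀ Y : Fin d → ℝ, 0 ≤ tropChar d a b c Y) ↔
        ∀ j : Fin (3 * d - 1), 0 ≤ tropChar d a b c (rayGen d j.val)) := by
  have hEq := vecMul_eq_trop d hd a b c α hα
  have hray : (∀ Y : Fin d → ℝ, 0 ≤ tropChar d a b c Y) ↔
      (∀ j : Fin (3 * d - 1), 0 ≤ tropChar d a b c (rayGen d j.val)) := by
    constructor
    · intro h j; exact h _
    · intro h Y; exact back_dir d hd a b c h Y
  constructor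
  · rw [hray]
    constructor
    · intro h j
      have := h j
      rw [← hEq j] at this
      exact_mod_cast this
    · intro h j
      rw [← hEq j]
      exact_mod_cast h j
  · exact hray
end

section
/- Let d ≥ 1. For each i ∈ {1,…,3d−1}, the vector β_i lies in the semigroup Γ, and β_i is a minimal (irreducible) element of Γ: whenever β_i = α + α′ with α, α′ ∈ Γ, one has α = 0 or α′ = 0. -/
/-- The tropicalization of a vector `α ∈ ℤ^{3d-1}`, identified with a triple
`(a,b,c) ∈ ℤ^d × ℤ^d × ℤ^{d-1}`. -/
noncomputable def tropVec (d : ℕ) (α : Fin (3 * d - 1) → ℤ) (Y : Fin d → ℝ) : ℝ :=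
  tropChar d
    (fun i => α ⟨i.val, by have := i.isLt; omega⟩)
    (fun i => α ⟨d + i.val, by have := i.isLt; omega⟩)
    (fun i => α ⟨2 * d + i.val, by have := i.isLt; omega⟩) Y

/-- The semigroup `Γ ⊂ ℤ^{3d-1}` of (exponent vectors of) bounded characters:
those `α` with `T_α(Y) ≥ 0` for all `Y ∈ ℝ^d`. -/
noncomputable def GammaSet (d : ℕ) : Set (Fin (3 * d - 1) → ℤ) :=
  {α | ∀ Y : Fin d → ℝ, 0 ≤ tropVec d α Y}

/-- The vector `β_r ∈ ℤ^{3d-1}`. -/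
def betaVec (d r : ℕ) : Fin (3 * d - 1) → ℤ := fun k => betaEnt d r k.val

namespace BetaAux


/-- padded `a`-part -/
def Aof (d : ℕ) (x : Fin (3 * d - 1) → ℤ) (k : ℕ) : ℤ :=
  if h : k < d then x ⟨k, by omega⟩ else 0

def Bof (d : ℕ) (x : Fin (3 * d - 1) → ℤ) (k : ℕ) : ℤ :=
  if h : k < d then x ⟨d + k, by omega⟩ else 0

def Cof (d : ℕ) (x : Fin (3 * d - 1) → ℤ) (k : ℕ) : ℤ :=
  if h : k + 1 < d then x ⟨2 * d + k, by omega⟩ else 0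

def Qv (d : ℕ) (x : Fin (3 * d - 1) → ℤ) (k : ℕ) : ℤ :=
  -(Aof d x k) - Bof d x k - (if k = 0 then 0 else Cof d x (k - 1)) - Cof d x k

def Rv (d : ℕ) (x : Fin (3 * d - 1) → ℤ) (k : ℕ) : ℤ :=
  Aof d x k - 2 * Aof d x (k + 1) - 2 * Bof d x (k + 1) - Cof d x k - 2 * Cof d x (k + 1)

def Gv (d : ℕ) (x : Fin (3 * d - 1) → ℤ) (k : ℕ) : ℤ :=
  2 * Aof d x k - 3 * Aof d x (k + 1) - 3 * Bof d x (k + 1) - Cof d x k - 3 * Cof d x (k + 1)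

lemma sum_ite_val {n : ℕ} (k : ℕ) (f : Fin n → ℝ) :
    (∑ i : Fin n, if i.val = k then f i else 0) = if h : k < n then f ⟨k, h⟩ else 0 := by
  split_ifs with h
  · calc (∑ i : Fin n, if i.val = k then f i else 0)
        = ∑ i : Fin n, if i = ⟨k, h⟩ then f i else 0 := by
          apply Finset.sum_congr rfl; intro j _
          simp [Fin.ext_iff]
    _ = f ⟨k, h⟩ := by rw [Finset.sum_ite_eq' Finset.univ]; simp
  · apply Finset.sum_eq_zero; intro j _
    rw [if_neg]; have := j.isLt; omega

lemma sum_ite_val' {n : ℕ} (k : ℕ) (f : Fin n → ℝ) :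
    (∑ i : Fin n, if i.val + 1 = k then f i else 0) =
      if h : k - 1 < n ∧ 1 ≤ k then f ⟨k - 1, h.1⟩ else 0 := by
  split_ifs with h
  · calc (∑ i : Fin n, if i.val + 1 = k then f i else 0)
        = ∑ i : Fin n, if i.val = k - 1 then f i else 0 := by
          apply Finset.sum_congr rfl; intro j _
          congr 1
          simp only [eq_iff_iff]; omega
    _ = f ⟨k - 1, h.1⟩ := by rw [sum_ite_val]; simp [h.1]
  · apply Finset.sum_eq_zero; intro j _
    rw [if_neg]; have := j.isLt; omega

lemma tropVec_eq (d : ℕ) (x : Fin (3 * d - 1) → ℤ) (Y : Fin d → ℝ) :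
    tropVec d x Y = tropChar d (fun i => Aof d x i.val) (fun i => Bof d x i.val)
      (fun i => Cof d x i.val) Y := by
  unfold tropVec tropChar
  congr 1
  · congr 1
    · apply Finset.sum_congr rfl; intro j _
      have hj := j.isLt
      simp [Aof, hj]
    · apply Finset.sum_congr rfl; intro j _
      have hj := j.isLt
      simp [Bof, hj]
  · apply Finset.sum_congr rfl; intro j _
    have hj := j.isLt
    have h2 : j.val + 1 < d := by omega
    simp [Cof, h2]


lemma sum_ite_const {n : ℕ} (k : ℕ) (c : ℝ) :
    (∑ i : Fin n, if i.val = k then c else 0) = if k < n then c else 0 := by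
  rw [sum_ite_val k (fun _ => c)]
  split_ifs with h1 h2 h2 <;> first | rfl | omega

lemma sum_ite_const' {n : ℕ} (k : ℕ) (c : ℝ) :
    (∑ i : Fin n, if i.val + 1 = k then c else 0) = if 1 ≤ k ∧ k - 1 < n then c else 0 := by
  rw [sum_ite_val' k (fun _ => c)]
  split_ifs with h1 h2 h2 <;> first | rfl | (exfalso; omega)

lemma Aof_pad (d : ℕ) (x : Fin (3 * d - 1) → ℤ) (k : ℕ) (h : ¬ k < d) : Aof d x k = 0 :=
  dif_neg h

lemma Bof_pad (d : ℕ) (x : Fin (3 * d - 1) → ℤ) (k : ℕ) (h : ¬ k < d) : Bof d x k = 0 :=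
  dif_neg h

lemma Cof_pad (d : ℕ) (x : Fin (3 * d - 1) → ℤ) (k : ℕ) (h : ¬ k + 1 < d) : Cof d x k = 0 :=
  dif_neg h

lemma eval_master (d : ℕ) (x : Fin (3 * d - 1) → ℤ) (k : ℕ) (hk : k < d) (s t : ℝ) :
    tropVec d x (fun m => if m.val = k then s else if m.val = k + 1 then t else 0) =
      (Aof d x k : ℝ) * s + (Aof d x (k + 1) : ℝ) * t + (Bof d x k : ℝ) * min 0 s +
      (Bof d x (k + 1) : ℝ) * min 0 t +
      (if k = 0 then 0 else (Cof d x (k - 1) : ℝ) * min 0 s) +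
      (Cof d x k : ℝ) * min 0 (min s (s + t)) + (Cof d x (k + 1) : ℝ) * min 0 t := by
  rw [tropVec_eq]
  unfold tropChar
  have e1 : ∀ j : Fin d,
      (Aof d x j.val : ℝ) * (if j.val = k then s else if j.val = k + 1 then t else 0)
      = (if j.val = k then (Aof d x k : ℝ) * s else 0)
        + (if j.val = k + 1 then (Aof d x (k + 1) : ℝ) * t else 0) := by
    intro j
    by_cases h1 : j.val = k
    · have h2 : ¬ (j.val = k + 1) := by omega
      simp [h1, h2]
    · by_cases h2 : j.val = k + 1 <;> simp [h1, h2]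
  have e2 : ∀ j : Fin d,
      (Bof d x j.val : ℝ) * min 0 (if j.val = k then s else if j.val = k + 1 then t else 0)
      = (if j.val = k then (Bof d x k : ℝ) * min 0 s else 0)
        + (if j.val = k + 1 then (Bof d x (k + 1) : ℝ) * min 0 t else 0) := by
    intro j
    by_cases h1 : j.val = k
    · have h2 : ¬ (j.val = k + 1) := by omega
      simp [h1, h2]
    · by_cases h2 : j.val = k + 1 <;> simp [h1, h2]
  have e3 : ∀ j : Fin (d - 1),
      (Cof d x j.val : ℝ) *
        min 0 (min (if j.val = k then s else if j.val = k + 1 then t else 0)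
          ((if j.val = k then s else if j.val = k + 1 then t else 0)
            + (if j.val + 1 = k then s else if j.val + 1 = k + 1 then t else 0)))
      = (if j.val + 1 = k then (Cof d x (k - 1) : ℝ) * min 0 s else 0)
        + (if j.val = k then (Cof d x k : ℝ) * min 0 (min s (s + t)) else 0)
        + (if j.val = k + 1 then (Cof d x (k + 1) : ℝ) * min 0 t else 0) := by
    intro j
    by_cases h1 : j.val + 1 = k
    · have h2 : ¬ (j.val = k) := by omega
      have h3 : ¬ (j.val = k + 1) := by omega
      rw [if_neg h2, if_neg h3, if_pos h1, if_pos h1, if_neg h2, if_neg h3]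
      rw [show (j.val : ℕ) = k - 1 from by omega]
      rw [zero_add, ← min_assoc, min_self, add_zero, add_zero]
    · by_cases h2 : j.val = k
      · have h3 : ¬ (j.val = k + 1) := by omega
        have h4 : j.val + 1 = k + 1 := by omega
        rw [if_pos h2, if_neg h1, if_pos h4, if_neg h3, if_neg h1, if_pos h2]
        rw [show (j.val : ℕ) = k from h2, zero_add, add_zero]
      · by_cases h3 : j.val = k + 1
        · have h4 : ¬ (j.val + 1 = k + 1) := by omega
          rw [if_neg h2, if_pos h3, if_neg h1, if_neg h4, if_neg h1, if_neg h2, if_pos h3]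
          rw [show (j.val : ℕ) = k + 1 from h3, add_zero, min_self, zero_add, zero_add]
        · have h4 : ¬ (j.val + 1 = k + 1) := by omega
          rw [if_neg h2, if_neg h3, if_neg h1, if_neg h4, if_neg h1, if_neg h2, if_neg h3]
          simp
  rw [Finset.sum_congr rfl (fun j _ => e1 j), Finset.sum_congr rfl (fun j _ => e2 j),
      Finset.sum_congr rfl (fun j _ => e3 j)]
  rw [Finset.sum_add_distrib, Finset.sum_add_distrib, Finset.sum_add_distrib,
      Finset.sum_add_distrib]
  rw [sum_ite_const k, sum_ite_const (k + 1), sum_ite_const k, sum_ite_const (k + 1),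
      sum_ite_const' k, sum_ite_const k, sum_ite_const (k + 1)]
  rw [if_pos hk, if_pos hk]
  have hA1 : (if k + 1 < d then (Aof d x (k + 1) : ℝ) * t else 0)
      = (Aof d x (k + 1) : ℝ) * t := by
    split_ifs with h
    · rfl
    · rw [Aof_pad d x (k + 1) h]; simp
  have hB1 : (if k + 1 < d then (Bof d x (k + 1) : ℝ) * min 0 t else 0)
      = (Bof d x (k + 1) : ℝ) * min 0 t := by
    split_ifs with h
    · rfl
    · rw [Bof_pad d x (k + 1) h]; simp
  have hC0 : (if 1 ≤ k ∧ k - 1 < d - 1 then (Cof d x (k - 1) : ℝ) * min 0 s else 0)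
      = (if k = 0 then 0 else (Cof d x (k - 1) : ℝ) * min 0 s) := by
    split_ifs with h h2 h2
    · omega
    · rfl
    · rfl
    · omega
  have hC1 : (if k < d - 1 then (Cof d x k : ℝ) * min 0 (min s (s + t)) else 0)
      = (Cof d x k : ℝ) * min 0 (min s (s + t)) := by
    split_ifs with h
    · rfl
    · rw [Cof_pad d x k (by omega)]; simp
  have hC2 : (if k + 1 < d - 1 then (Cof d x (k + 1) : ℝ) * min 0 t else 0)
      = (Cof d x (k + 1) : ℝ) * min 0 t := by
    split_ifs with h
    · rfl
    · rw [Cof_pad d x (k + 1) (by omega)]; simp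
  rw [hA1, hB1, hC0, hC1, hC2]
  ring


lemma gam_A (d : ℕ) (x : Fin (3 * d - 1) → ℤ) (hx : x ∈ GammaSet d) (k : ℕ) (hk : k < d) :
    0 ≤ Aof d x k := by
  have h := hx (fun m => if m.val = k then (1 : ℝ) else if m.val = k + 1 then 0 else 0)
  rw [eval_master d x k hk 1 0] at h
  have e : min (0:ℝ) 1 = 0 := by norm_num [min_def]
  have e2 : min (0:ℝ) 0 = 0 := by norm_num [min_def]
  have e3 : min (0:ℝ) (min 1 (1 + 0)) = 0 := by norm_num [min_def]
  rw [e, e2, e3] at h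
  simp at h
  exact_mod_cast h

lemma gam_Q (d : ℕ) (x : Fin (3 * d - 1) → ℤ) (hx : x ∈ GammaSet d) (k : ℕ) (hk : k < d) :
    0 ≤ Qv d x k := by
  have h := hx (fun m => if m.val = k then (-1 : ℝ) else if m.val = k + 1 then 0 else 0)
  rw [eval_master d x k hk (-1) 0] at h
  have e : min (0:ℝ) (-1) = -1 := by norm_num [min_def]
  have e2 : min (0:ℝ) 0 = 0 := by norm_num [min_def]
  have e3 : min (0:ℝ) (min (-1) (-1 + 0)) = -1 := by norm_num [min_def]
  rw [e, e2, e3] at h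
  by_cases h0 : k = 0
  · subst h0
    rw [if_pos rfl] at h
    have h' : (0:ℝ) ≤ ((Qv d x 0 : ℤ) : ℝ) := by
      push_cast [Qv]
      push_cast at h
      linarith
    exact_mod_cast h'
  · rw [if_neg h0] at h
    have h' : (0:ℝ) ≤ ((Qv d x k : ℤ) : ℝ) := by
      push_cast [Qv, if_neg h0]
      push_cast at h
      linarith
    exact_mod_cast h'

lemma gam_R (d : ℕ) (x : Fin (3 * d - 1) → ℤ) (hx : x ∈ GammaSet d) (k : ℕ) (hk : k < d) :
    0 ≤ Rv d x k := by
  have h := hx (fun m => if m.val = k then (1 : ℝ) else if m.val = k + 1 then -2 else 0)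
  rw [eval_master d x k hk 1 (-2)] at h
  have e : min (0:ℝ) 1 = 0 := by norm_num [min_def]
  have e2 : min (0:ℝ) (-2) = -2 := by norm_num [min_def]
  have e3 : min (0:ℝ) (min 1 (1 + -2)) = -1 := by norm_num [min_def]
  rw [e, e2, e3] at h
  have hif : (if k = 0 then (0:ℝ) else (Cof d x (k - 1) : ℝ) * 0) = 0 := by
    split_ifs <;> simp
  rw [hif] at h
  have h' : (0:ℝ) ≤ ((Rv d x k : ℤ) : ℝ) := by
    push_cast [Rv]
    push_cast at h
    linarith
  exact_mod_cast h'

lemma gam_G (d : ℕ) (x : Fin (3 * d - 1) → ℤ) (hx : x ∈ GammaSet d) (k : ℕ) (hk : k < d) :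
    0 ≤ Gv d x k := by
  have h := hx (fun m => if m.val = k then (2 : ℝ) else if m.val = k + 1 then -3 else 0)
  rw [eval_master d x k hk 2 (-3)] at h
  have e : min (0:ℝ) 2 = 0 := by norm_num [min_def]
  have e2 : min (0:ℝ) (-3) = -3 := by norm_num [min_def]
  have e3 : min (0:ℝ) (min 2 (2 + -3)) = -1 := by norm_num [min_def]
  rw [e, e2, e3] at h
  have hif : (if k = 0 then (0:ℝ) else (Cof d x (k - 1) : ℝ) * 0) = 0 := by
    split_ifs <;> simp
  rw [hif] at h
  have h' : (0:ℝ) ≤ ((Gv d x k : ℤ) : ℝ) := by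
    push_cast [Gv]
    push_cast at h
    linarith
  exact_mod_cast h'

lemma Cof_identity (d : ℕ) (x : Fin (3 * d - 1) → ℤ) (k : ℕ) :
    Cof d x k = Rv d x k - 2 * Qv d x (k + 1) - Aof d x k := by
  simp only [Rv, Qv, Nat.add_sub_cancel, if_neg (Nat.succ_ne_zero k)]
  ring

lemma Bof_identity (d : ℕ) (x : Fin (3 * d - 1) → ℤ) (k : ℕ) :
    Bof d x k = -(Qv d x k) - Aof d x k - (if k = 0 then 0 else Cof d x (k - 1)) - Cof d x k := by
  simp only [Qv]
  ring

lemma Aof_add (d : ℕ) (x y : Fin (3 * d - 1) → ℤ) (k : ℕ) :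
    Aof d (x + y) k = Aof d x k + Aof d y k := by
  unfold Aof; split_ifs <;> simp

lemma Bof_add (d : ℕ) (x y : Fin (3 * d - 1) → ℤ) (k : ℕ) :
    Bof d (x + y) k = Bof d x k + Bof d y k := by
  unfold Bof; split_ifs <;> simp

lemma Cof_add (d : ℕ) (x y : Fin (3 * d - 1) → ℤ) (k : ℕ) :
    Cof d (x + y) k = Cof d x k + Cof d y k := by
  unfold Cof; split_ifs <;> simp

lemma Qv_add (d : ℕ) (x y : Fin (3 * d - 1) → ℤ) (k : ℕ) :
    Qv d (x + y) k = Qv d x k + Qv d y k := by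
  simp only [Qv, Aof_add, Bof_add, Cof_add]
  split_ifs <;> ring

lemma Rv_add (d : ℕ) (x y : Fin (3 * d - 1) → ℤ) (k : ℕ) :
    Rv d (x + y) k = Rv d x k + Rv d y k := by
  simp only [Rv, Aof_add, Bof_add, Cof_add]; ring

lemma Qv_pad (d : ℕ) (x : Fin (3 * d - 1) → ℤ) (k : ℕ) (h : d ≤ k) : Qv d x k = 0 := by
  have h1 : Aof d x k = 0 := Aof_pad d x k (by omega)
  have h2 : Bof d x k = 0 := Bof_pad d x k (by omega)
  have h3 : Cof d x k = 0 := Cof_pad d x k (by omega)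
  by_cases h0 : k = 0
  · simp only [Qv, h1, h2, h3, if_pos h0]; ring
  · have h4 : Cof d x (k - 1) = 0 := Cof_pad d x (k - 1) (by omega)
    simp only [Qv, h1, h2, h3, h4, if_neg h0]; ring

lemma eq_zero_of_vanish (d : ℕ) (hd : 1 ≤ d) (x : Fin (3 * d - 1) → ℤ)
    (hA : ∀ k, k < d → Aof d x k = 0)
    (hQ : ∀ k, k < d → Qv d x k = 0)
    (hR : ∀ k, k + 1 < d → Rv d x k = 0) : x = 0 := by
  have hA' : ∀ k, Aof d x k = 0 := by
    intro k
    by_cases h : k < d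
    · exact hA k h
    · exact Aof_pad d x k h
  have hQ' : ∀ k, Qv d x k = 0 := by
    intro k
    by_cases h : k < d
    · exact hQ k h
    · exact Qv_pad d x k (by omega)
  have hR' : ∀ k, Rv d x k = 0 := by
    intro k
    by_cases h : k + 1 < d
    · exact hR k h
    · have h1 : Aof d x (k + 1) = 0 := Aof_pad d x (k + 1) (by omega)
      have h2 : Bof d x (k + 1) = 0 := Bof_pad d x (k + 1) (by omega)
      have h3 : Cof d x k = 0 := Cof_pad d x k (by omega)
      have h4 : Cof d x (k + 1) = 0 := Cof_pad d x (k + 1) (by omega)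
      simp only [Rv, h1, h2, h3, h4, hA' k]; ring
  have hC : ∀ k, Cof d x k = 0 := by
    intro k
    rw [Cof_identity, hR' k, hQ' (k + 1), hA' k]; ring
  have hB : ∀ k, Bof d x k = 0 := by
    intro k
    rw [Bof_identity, hQ' k, hA' k, hC k]
    split_ifs <;> simp [hC]
  funext m
  have hm := m.isLt
  show x m = 0
  rcases Nat.lt_or_ge m.val d with h | h
  · have := hA' m.val
    rw [Aof, dif_pos h] at this
    rwa [Fin.eta] at this
  · rcases Nat.lt_or_ge m.val (2 * d) with h2 | h2
    · have := hB (m.val - d)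
      rw [Bof, dif_pos (show m.val - d < d by omega)] at this
      rw [show (⟨d + (m.val - d), by omega⟩ : Fin (3 * d - 1)) = m from Fin.ext (by simp; omega)] at this
      exact this
    · have := hC (m.val - 2 * d)
      rw [Cof, dif_pos (show (m.val - 2 * d) + 1 < d by omega)] at this
      rw [show (⟨2 * d + (m.val - 2 * d), by omega⟩ : Fin (3 * d - 1)) = m from Fin.ext (by simp; omega)] at this
      exact this




def sgl (d j : ℕ) : Fin (3 * d - 1) → ℤ := fun m => if m.val = j then 1 else 0

lemma tropVec_add (d : ℕ) (x y : Fin (3 * d - 1) → ℤ) (Y : Fin d → ℝ) :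
    tropVec d (x + y) Y = tropVec d x Y + tropVec d y Y := by
  unfold tropVec tropChar
  simp only [Pi.add_apply, Int.cast_add, add_mul]
  rw [Finset.sum_add_distrib, Finset.sum_add_distrib, Finset.sum_add_distrib]
  ring

lemma tropVec_neg (d : ℕ) (x : Fin (3 * d - 1) → ℤ) (Y : Fin d → ℝ) :
    tropVec d (-x) Y = -(tropVec d x Y) := by
  unfold tropVec tropChar
  simp only [Pi.neg_apply, Int.cast_neg, neg_mul]
  rw [Finset.sum_neg_distrib, Finset.sum_neg_distrib, Finset.sum_neg_distrib]
  ring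

lemma tropVec_sglA (d : ℕ) (k : ℕ) (hk : k < d) (Y : Fin d → ℝ) :
    tropVec d (sgl d k) Y = Y ⟨k, hk⟩ := by
  rw [tropVec_eq]
  unfold tropChar
  have eA : ∀ j : Fin d, (Aof d (sgl d k) j.val : ℝ) * Y j
      = if j.val = k then Y ⟨k, hk⟩ else 0 := by
    intro j
    have hj := j.isLt
    by_cases h1 : j.val = k
    · simp [Aof, sgl, hj, h1, hk, show j = ⟨k, hk⟩ from Fin.ext h1]
    · simp [Aof, sgl, hj, h1]
  have eB : ∀ j : Fin d, (Bof d (sgl d k) j.val : ℝ) * min 0 (Y j) = 0 := by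
    intro j
    have hj := j.isLt
    simp [Bof, sgl, hj, show ¬(d + j.val = k) from by omega]
  have eC : ∀ j : Fin (d - 1), (Cof d (sgl d k) j.val : ℝ) *
      min 0 (min (Y ⟨j.val, by have := j.isLt; omega⟩)
        (Y ⟨j.val, by have := j.isLt; omega⟩ + Y ⟨j.val + 1, by have := j.isLt; omega⟩)) = 0 := by
    intro j
    have hj : j.val + 1 < d := by have := j.isLt; omega
    simp [Cof, sgl, hj, show ¬(2 * d + j.val = k) from by omega]
  rw [Finset.sum_congr rfl (fun j _ => eA j), Finset.sum_congr rfl (fun j _ => eB j),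
      Finset.sum_congr rfl (fun j _ => eC j)]
  rw [sum_ite_const k (Y ⟨k, hk⟩), if_pos hk]
  simp

lemma tropVec_sglB (d : ℕ) (k : ℕ) (hk : k < d) (Y : Fin d → ℝ) :
    tropVec d (sgl d (d + k)) Y = min 0 (Y ⟨k, hk⟩) := by
  rw [tropVec_eq]
  unfold tropChar
  have eA : ∀ j : Fin d, (Aof d (sgl d (d + k)) j.val : ℝ) * Y j = 0 := by
    intro j
    have hj := j.isLt
    simp [Aof, sgl, hj, show ¬(j.val = d + k) from by omega]
  have eB : ∀ j : Fin d, (Bof d (sgl d (d + k)) j.val : ℝ) * min 0 (Y j)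
      = if j.val = k then min 0 (Y ⟨k, hk⟩) else 0 := by
    intro j
    have hj := j.isLt
    by_cases h1 : j.val = k
    · simp [Bof, sgl, hj, h1, hk, show j = ⟨k, hk⟩ from Fin.ext h1]
    · simp [Bof, sgl, hj, h1, show ¬(d + j.val = d + k) from by omega]
  have eC : ∀ j : Fin (d - 1), (Cof d (sgl d (d + k)) j.val : ℝ) *
      min 0 (min (Y ⟨j.val, by have := j.isLt; omega⟩)
        (Y ⟨j.val, by have := j.isLt; omega⟩ + Y ⟨j.val + 1, by have := j.isLt; omega⟩)) = 0 := by
    intro j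
    have hj : j.val + 1 < d := by have := j.isLt; omega
    simp [Cof, sgl, hj, show ¬(2 * d + j.val = d + k) from by omega]
  rw [Finset.sum_congr rfl (fun j _ => eA j), Finset.sum_congr rfl (fun j _ => eB j),
      Finset.sum_congr rfl (fun j _ => eC j)]
  rw [sum_ite_const k (min 0 (Y ⟨k, hk⟩)), if_pos hk]
  simp

lemma tropVec_sglC (d : ℕ) (k : ℕ) (hk : k + 1 < d) (Y : Fin d → ℝ) :
    tropVec d (sgl d (2 * d + k)) Y
      = min 0 (min (Y ⟨k, by omega⟩) (Y ⟨k, by omega⟩ + Y ⟨k + 1, hk⟩)) := by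
  rw [tropVec_eq]
  unfold tropChar
  have eA : ∀ j : Fin d, (Aof d (sgl d (2 * d + k)) j.val : ℝ) * Y j = 0 := by
    intro j
    have hj := j.isLt
    simp [Aof, sgl, hj, show ¬(j.val = 2 * d + k) from by omega]
  have eB : ∀ j : Fin d, (Bof d (sgl d (2 * d + k)) j.val : ℝ) * min 0 (Y j) = 0 := by
    intro j
    have hj := j.isLt
    simp [Bof, sgl, hj, show ¬(d + j.val = 2 * d + k) from by omega]
  have eC : ∀ j : Fin (d - 1), (Cof d (sgl d (2 * d + k)) j.val : ℝ) *
      min 0 (min (Y ⟨j.val, by have := j.isLt; omega⟩)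
        (Y ⟨j.val, by have := j.isLt; omega⟩ + Y ⟨j.val + 1, by have := j.isLt; omega⟩))
      = if j.val = k then
          min 0 (min (Y ⟨k, by omega⟩) (Y ⟨k, by omega⟩ + Y ⟨k + 1, hk⟩)) else 0 := by
    intro j
    have hj : j.val + 1 < d := by have := j.isLt; omega
    by_cases h1 : j.val = k
    · rw [if_pos h1]
      have hmk1 : (⟨j.val, by have := j.isLt; omega⟩ : Fin d) = ⟨k, by omega⟩ := Fin.ext h1
      have hmk2 : (⟨j.val + 1, by have := j.isLt; omega⟩ : Fin d) = ⟨k + 1, hk⟩ :=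
        Fin.ext (by simp [h1])
      rw [hmk1, hmk2]
      simp [Cof, sgl, hj, h1, hk]
    · rw [if_neg h1]
      simp [Cof, sgl, hj, show ¬(2 * d + j.val = 2 * d + k) from by omega]
      exact fun h => absurd h h1
  rw [Finset.sum_congr rfl (fun j _ => eA j), Finset.sum_congr rfl (fun j _ => eB j),
      Finset.sum_congr rfl (fun j _ => eC j)]
  rw [sum_ite_const k (min 0 (min (Y ⟨k, by omega⟩) (Y ⟨k, by omega⟩ + Y ⟨k + 1, hk⟩))),
      if_pos (show k < d - 1 by omega)]
  simp

lemma ineqA (A B : ℝ) : 0 ≤ A + min 0 B - min 0 (min A (A + B)) := by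
  simp only [min_def]; split_ifs <;> linarith

lemma ineqB (A : ℝ) : 0 ≤ A - min 0 A := by
  simp only [min_def]; split_ifs <;> linarith

lemma ineqC (A : ℝ) : 0 ≤ -(min 0 A) := by
  simp only [min_def]; split_ifs <;> linarith

lemma ineqD (A B : ℝ) : 0 ≤ min 0 A - min 0 (min A (A + B)) := by
  simp only [min_def]; split_ifs <;> linarith

lemma ineqE (A B : ℝ) : 0 ≤ -(min 0 A) - min 0 B + min 0 (min A (A + B)) := by
  simp only [min_def]; split_ifs <;> linarith

lemma beta_mem (d : ℕ) (hd : 1 ≤ d) (r : ℕ) (hr : r < 3 * d - 1) :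
    betaVec d r ∈ GammaSet d := by
  intro Y
  by_cases h1 : r < d - 1
  · have hdec : betaVec d r = sgl d r + sgl d (d + (r + 1)) + -(sgl d (2 * d + r)) := by
      funext m
      simp only [betaVec, betaEnt, sgl, Pi.add_apply, Pi.neg_apply, if_pos h1]
      split_ifs <;> first | contradiction | omega
    rw [hdec, tropVec_add, tropVec_add, tropVec_neg, tropVec_sglA d r (by omega),
        tropVec_sglB d (r + 1) (by omega), tropVec_sglC d r (by omega)]
    have := ineqA (Y ⟨r, by omega⟩) (Y ⟨r + 1, by omega⟩)
    linarith
  · by_cases h2 : r = d - 1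
    · have hdec : betaVec d r = sgl d (d - 1) + -(sgl d (d + (d - 1))) := by
        funext m
        simp only [betaVec, betaEnt, sgl, Pi.add_apply, Pi.neg_apply, if_neg h1, if_pos h2]
        split_ifs <;> first | contradiction | omega
      rw [hdec, tropVec_add, tropVec_neg, tropVec_sglA d (d - 1) (by omega),
          tropVec_sglB d (d - 1) (by omega)]
      have := ineqB (Y ⟨d - 1, by omega⟩)
      linarith
    · by_cases h3 : r = d
      · have hdec : betaVec d r = -(sgl d (d + 0)) := by
          funext m
          simp only [betaVec, betaEnt, sgl, Pi.neg_apply, if_neg h1, if_neg h2, if_pos h3]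
          split_ifs <;> first | contradiction | omega
        rw [hdec, tropVec_neg, tropVec_sglB d 0 (by omega)]
        have := ineqC (Y ⟨0, by omega⟩)
        linarith
      · by_cases h4 : r < 2 * d
        · have hdec : betaVec d r = sgl d (d + (r - d - 1)) + -(sgl d (2 * d + (r - d - 1))) := by
            funext m
            simp only [betaVec, betaEnt, sgl, Pi.add_apply, Pi.neg_apply, if_neg h1, if_neg h2,
              if_neg h3, if_pos h4]
            split_ifs <;> first | contradiction | omega
          rw [hdec, tropVec_add, tropVec_neg, tropVec_sglB d (r - d - 1) (by omega),
              tropVec_sglC d (r - d - 1) (by omega)]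
          have := ineqD (Y ⟨r - d - 1, by omega⟩) (Y ⟨r - d - 1 + 1, by omega⟩)
          linarith
        · have hdec : betaVec d r = -(sgl d (d + (r - 2 * d))) + -(sgl d (d + (r - 2 * d + 1)))
              + sgl d (2 * d + (r - 2 * d)) := by
            funext m
            simp only [betaVec, betaEnt, sgl, Pi.add_apply, Pi.neg_apply, if_neg h1, if_neg h2,
              if_neg h3, if_neg h4]
            split_ifs <;> first | contradiction | omega
          rw [hdec, tropVec_add, tropVec_add, tropVec_neg, tropVec_neg,
              tropVec_sglB d (r - 2 * d) (by omega), tropVec_sglB d (r - 2 * d + 1) (by omega),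
              tropVec_sglC d (r - 2 * d) (by omega)]
          have := ineqE (Y ⟨r - 2 * d, by omega⟩) (Y ⟨r - 2 * d + 1, by omega⟩)
          linarith


lemma bA_A (d r : ℕ) (hd : 1 ≤ d) (hr : r < 3 * d - 1) (hc : r < d - 1) :
    ∀ k, Aof d (betaVec d r) k = (if k = r then 1 else 0) := by
  intro k
  simp only [Aof, betaVec, betaEnt, if_pos hc]
  split_ifs <;> first | contradiction | omega

lemma bB_A (d r : ℕ) (hd : 1 ≤ d) (hr : r < 3 * d - 1) (hc : r < d - 1) :
    ∀ k, Bof d (betaVec d r) k = (if k = r + 1 then 1 else 0) := by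
  intro k
  simp only [Bof, betaVec, betaEnt, if_pos hc]
  split_ifs <;> first | contradiction | omega

lemma bC_A (d r : ℕ) (hd : 1 ≤ d) (hr : r < 3 * d - 1) (hc : r < d - 1) :
    ∀ k, Cof d (betaVec d r) k = (if k = r then -1 else 0) := by
  intro k
  simp only [Cof, betaVec, betaEnt, if_pos hc]
  split_ifs <;> first | contradiction | omega

lemma bA_B (d r : ℕ) (hd : 1 ≤ d) (hr : r < 3 * d - 1) (hc : r = d - 1) :
    ∀ k, Aof d (betaVec d r) k = (if k = d - 1 then 1 else 0) := by
  intro k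
  simp only [Aof, betaVec, betaEnt, show ¬ r < d - 1 by omega, if_false, if_pos hc]
  split_ifs <;> first | contradiction | omega

lemma bB_B (d r : ℕ) (hd : 1 ≤ d) (hr : r < 3 * d - 1) (hc : r = d - 1) :
    ∀ k, Bof d (betaVec d r) k = (if k = d - 1 then -1 else 0) := by
  intro k
  simp only [Bof, betaVec, betaEnt, show ¬ r < d - 1 by omega, if_false, if_pos hc]
  split_ifs <;> first | contradiction | omega

lemma bC_B (d r : ℕ) (hd : 1 ≤ d) (hr : r < 3 * d - 1) (hc : r = d - 1) :
    ∀ k, Cof d (betaVec d r) k = (0 : ℤ) := by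
  intro k
  simp only [Cof, betaVec, betaEnt, show ¬ r < d - 1 by omega, if_false, if_pos hc]
  split_ifs <;> first | contradiction | omega

lemma bA_C (d r : ℕ) (hd : 1 ≤ d) (hr : r < 3 * d - 1) (hc : r = d) :
    ∀ k, Aof d (betaVec d r) k = (0 : ℤ) := by
  intro k
  simp only [Aof, betaVec, betaEnt, show ¬ r < d - 1 by omega, show ¬ r = d - 1 by omega, if_false, if_pos hc]
  split_ifs <;> first | contradiction | omega

lemma bB_C (d r : ℕ) (hd : 1 ≤ d) (hr : r < 3 * d - 1) (hc : r = d) :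
    ∀ k, Bof d (betaVec d r) k = (if k = 0 then -1 else 0) := by
  intro k
  simp only [Bof, betaVec, betaEnt, show ¬ r < d - 1 by omega, show ¬ r = d - 1 by omega, if_false, if_pos hc]
  split_ifs <;> first | contradiction | omega

lemma bC_C (d r : ℕ) (hd : 1 ≤ d) (hr : r < 3 * d - 1) (hc : r = d) :
    ∀ k, Cof d (betaVec d r) k = (0 : ℤ) := by
  intro k
  simp only [Cof, betaVec, betaEnt, show ¬ r < d - 1 by omega, show ¬ r = d - 1 by omega, if_false, if_pos hc]
  split_ifs <;> first | contradiction | omega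

lemma bA_D (d r : ℕ) (hd : 1 ≤ d) (hr : r < 3 * d - 1) (hc1 : d < r) (hc2 : r < 2 * d) :
    ∀ k, Aof d (betaVec d r) k = (0 : ℤ) := by
  intro k
  simp only [Aof, betaVec, betaEnt, show ¬ r < d - 1 by omega, show ¬ r = d - 1 by omega, show ¬ r = d by omega, if_false, if_pos hc2]
  split_ifs <;> first | contradiction | omega

lemma bB_D (d r : ℕ) (hd : 1 ≤ d) (hr : r < 3 * d - 1) (hc1 : d < r) (hc2 : r < 2 * d) :
    ∀ k, Bof d (betaVec d r) k = (if k + d + 1 = r then 1 else 0) := by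
  intro k
  simp only [Bof, betaVec, betaEnt, show ¬ r < d - 1 by omega, show ¬ r = d - 1 by omega, show ¬ r = d by omega, if_false, if_pos hc2]
  split_ifs <;> first | contradiction | omega

lemma bC_D (d r : ℕ) (hd : 1 ≤ d) (hr : r < 3 * d - 1) (hc1 : d < r) (hc2 : r < 2 * d) :
    ∀ k, Cof d (betaVec d r) k = (if k + d + 1 = r then -1 else 0) := by
  intro k
  simp only [Cof, betaVec, betaEnt, show ¬ r < d - 1 by omega, show ¬ r = d - 1 by omega, show ¬ r = d by omega, if_false, if_pos hc2]
  split_ifs <;> first | contradiction | omega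

lemma bA_E (d r : ℕ) (hd : 1 ≤ d) (hr : r < 3 * d - 1) (hc : 2 * d ≤ r) :
    ∀ k, Aof d (betaVec d r) k = (0 : ℤ) := by
  intro k
  simp only [Aof, betaVec, betaEnt, show ¬ r < d - 1 by omega, show ¬ r = d - 1 by omega, show ¬ r = d by omega, show ¬ r < 2 * d by omega, if_false]
  split_ifs <;> first | contradiction | omega

lemma bB_E (d r : ℕ) (hd : 1 ≤ d) (hr : r < 3 * d - 1) (hc : 2 * d ≤ r) :
    ∀ k, Bof d (betaVec d r) k = (if k + 2 * d = r ∨ k + 2 * d = r + 1 then -1 else 0) := by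
  intro k
  simp only [Bof, betaVec, betaEnt, show ¬ r < d - 1 by omega, show ¬ r = d - 1 by omega, show ¬ r = d by omega, show ¬ r < 2 * d by omega, if_false]
  split_ifs <;> first | contradiction | omega

lemma bC_E (d r : ℕ) (hd : 1 ≤ d) (hr : r < 3 * d - 1) (hc : 2 * d ≤ r) :
    ∀ k, Cof d (betaVec d r) k = (if k + 2 * d = r then 1 else 0) := by
  intro k
  simp only [Cof, betaVec, betaEnt, show ¬ r < d - 1 by omega, show ¬ r = d - 1 by omega, show ¬ r = d by omega, show ¬ r < 2 * d by omega, if_false]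
  split_ifs <;> first | contradiction | omega

lemma bQ_A (d r : ℕ) (hd : 1 ≤ d) (hr : r < 3 * d - 1) (hc : r < d - 1) :
    ∀ k, Qv d (betaVec d r) k = (0 : ℤ) := by
  intro k
  simp only [Qv, bA_A d r hd hr hc, bB_A d r hd hr hc, bC_A d r hd hr hc]
  split_ifs <;> first | contradiction | omega

lemma bR_A (d r : ℕ) (hd : 1 ≤ d) (hr : r < 3 * d - 1) (hc : r < d - 1) :
    ∀ k, Rv d (betaVec d r) k = (0 : ℤ) := by
  intro k
  simp only [Rv, bA_A d r hd hr hc, bB_A d r hd hr hc, bC_A d r hd hr hc]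
  split_ifs <;> first | contradiction | omega

lemma bQ_B (d r : ℕ) (hd : 1 ≤ d) (hr : r < 3 * d - 1) (hc : r = d - 1) :
    ∀ k, Qv d (betaVec d r) k = (0 : ℤ) := by
  intro k
  simp only [Qv, bA_B d r hd hr hc, bB_B d r hd hr hc, bC_B d r hd hr hc]
  split_ifs <;> first | contradiction | omega

lemma bR_B (d r : ℕ) (hd : 1 ≤ d) (hr : r < 3 * d - 1) (hc : r = d - 1) :
    ∀ k, Rv d (betaVec d r) k = (if k = d - 1 then 1 else 0) := by
  intro k
  simp only [Rv, bA_B d r hd hr hc, bB_B d r hd hr hc, bC_B d r hd hr hc]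
  split_ifs <;> first | contradiction | omega

lemma bQ_C (d r : ℕ) (hd : 1 ≤ d) (hr : r < 3 * d - 1) (hc : r = d) :
    ∀ k, Qv d (betaVec d r) k = (if k = 0 then 1 else 0) := by
  intro k
  simp only [Qv, bA_C d r hd hr hc, bB_C d r hd hr hc, bC_C d r hd hr hc]
  split_ifs <;> first | contradiction | omega

lemma bR_C (d r : ℕ) (hd : 1 ≤ d) (hr : r < 3 * d - 1) (hc : r = d) :
    ∀ k, Rv d (betaVec d r) k = (0 : ℤ) := by
  intro k
  simp only [Rv, bA_C d r hd hr hc, bB_C d r hd hr hc, bC_C d r hd hr hc]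
  split_ifs <;> first | contradiction | omega

lemma bQ_D (d r : ℕ) (hd : 1 ≤ d) (hr : r < 3 * d - 1) (hc1 : d < r) (hc2 : r < 2 * d) :
    ∀ k, Qv d (betaVec d r) k = (if k + d = r then 1 else 0) := by
  intro k
  simp only [Qv, bA_D d r hd hr hc1 hc2, bB_D d r hd hr hc1 hc2, bC_D d r hd hr hc1 hc2]
  split_ifs <;> first | contradiction | omega

lemma bR_D (d r : ℕ) (hd : 1 ≤ d) (hr : r < 3 * d - 1) (hc1 : d < r) (hc2 : r < 2 * d) :
    ∀ k, Rv d (betaVec d r) k = (if k + d + 1 = r then 1 else 0) := by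
  intro k
  simp only [Rv, bA_D d r hd hr hc1 hc2, bB_D d r hd hr hc1 hc2, bC_D d r hd hr hc1 hc2]
  split_ifs <;> first | contradiction | omega

lemma bQ_E (d r : ℕ) (hd : 1 ≤ d) (hr : r < 3 * d - 1) (hc : 2 * d ≤ r) :
    ∀ k, Qv d (betaVec d r) k = (0 : ℤ) := by
  intro k
  simp only [Qv, bA_E d r hd hr hc, bB_E d r hd hr hc, bC_E d r hd hr hc]
  split_ifs <;> first | contradiction | omega

lemma bR_E (d r : ℕ) (hd : 1 ≤ d) (hr : r < 3 * d - 1) (hc : 2 * d ≤ r) :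
    ∀ k, Rv d (betaVec d r) k = (if k + 2 * d = r then 1 else 0) := by
  intro k
  simp only [Rv, bA_E d r hd hr hc, bB_E d r hd hr hc, bC_E d r hd hr hc]
  split_ifs <;> first | contradiction | omega


lemma beta_min (d : ℕ) (hd : 1 ≤ d) (r : ℕ) (hr : r < 3 * d - 1)
    (α α' : Fin (3 * d - 1) → ℤ) (hα : α ∈ GammaSet d) (hα' : α' ∈ GammaSet d)
    (hsum : betaVec d r = α + α') : α = 0 ∨ α' = 0 := by
  have hAsum : ∀ k, Aof d (betaVec d r) k = Aof d α k + Aof d α' k := by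
    intro k; rw [hsum, Aof_add]
  have hQsum : ∀ k, Qv d (betaVec d r) k = Qv d α k + Qv d α' k := by
    intro k; rw [hsum, Qv_add]
  have hRsum : ∀ k, Rv d (betaVec d r) k = Rv d α k + Rv d α' k := by
    intro k; rw [hsum, Rv_add]
  by_cases b1 : r < d
  · -- cases A and B
    have hQ0 : ∀ k, k < d → Qv d α k = 0 ∧ Qv d α' k = 0 := by
      intro k hk
      have h1 := gam_Q d α hα k hk
      have h2 := gam_Q d α' hα' k hk
      have h3 := hQsum k
      by_cases b2 : r < d - 1
      · rw [bQ_A d r hd hr b2 k] at h3; omega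
      · rw [bQ_B d r hd hr (by omega) k] at h3; omega
    have hR0 : ∀ k, k + 1 < d → Rv d α k = 0 ∧ Rv d α' k = 0 := by
      intro k hk
      have h1 := gam_R d α hα k (by omega)
      have h2 := gam_R d α' hα' k (by omega)
      have h3 := hRsum k
      by_cases b2 : r < d - 1
      · rw [bR_A d r hd hr b2 k] at h3; omega
      · rw [bR_B d r hd hr (by omega) k, if_neg (by omega)] at h3; omega
    have hAval : ∀ k, Aof d (betaVec d r) k = if k = r then 1 else 0 := by
      intro k
      by_cases b2 : r < d - 1
      · rw [bA_A d r hd hr b2 k]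
      · rw [bA_B d r hd hr (by omega) k, show d - 1 = r from by omega]
    have hAoff : ∀ k, k < d → k ≠ r → Aof d α k = 0 ∧ Aof d α' k = 0 := by
      intro k hk hkr
      have h1 := gam_A d α hα k hk
      have h2 := gam_A d α' hα' k hk
      have h3 := hAsum k
      rw [hAval k, if_neg hkr] at h3; omega
    have hAr : Aof d α r = 0 ∨ Aof d α' r = 0 := by
      have h1 := gam_A d α hα r b1
      have h2 := gam_A d α' hα' r b1
      have h3 := hAsum r
      rw [hAval r, if_pos rfl] at h3; omega
    rcases hAr with h | h
    · left
      refine eq_zero_of_vanish d hd α ?_ (fun k hk => (hQ0 k hk).1) (fun k hk => (hR0 k hk).1)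
      intro k hk
      by_cases hkr : k = r
      · rw [hkr]; exact h
      · exact (hAoff k hk hkr).1
    · right
      refine eq_zero_of_vanish d hd α' ?_ (fun k hk => (hQ0 k hk).2) (fun k hk => (hR0 k hk).2)
      intro k hk
      by_cases hkr : k = r
      · rw [hkr]; exact h
      · exact (hAoff k hk hkr).2
  · by_cases b2 : r = d
    · -- case C
      have hA0 : ∀ k, k < d → Aof d α k = 0 ∧ Aof d α' k = 0 := by
        intro k hk
        have h1 := gam_A d α hα k hk
        have h2 := gam_A d α' hα' k hk
        have h3 := hAsum k
        rw [bA_C d r hd hr b2 k] at h3; omega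
      have hR0 : ∀ k, k + 1 < d → Rv d α k = 0 ∧ Rv d α' k = 0 := by
        intro k hk
        have h1 := gam_R d α hα k (by omega)
        have h2 := gam_R d α' hα' k (by omega)
        have h3 := hRsum k
        rw [bR_C d r hd hr b2 k] at h3; omega
      have hQoff : ∀ k, k < d → k ≠ 0 → Qv d α k = 0 ∧ Qv d α' k = 0 := by
        intro k hk hk0
        have h1 := gam_Q d α hα k hk
        have h2 := gam_Q d α' hα' k hk
        have h3 := hQsum k
        rw [bQ_C d r hd hr b2 k, if_neg hk0] at h3; omega
      have hQ0r : Qv d α 0 = 0 ∨ Qv d α' 0 = 0 := by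
        have h1 := gam_Q d α hα 0 (by omega)
        have h2 := gam_Q d α' hα' 0 (by omega)
        have h3 := hQsum 0
        rw [bQ_C d r hd hr b2 0, if_pos rfl] at h3; omega
      rcases hQ0r with h | h
      · left
        refine eq_zero_of_vanish d hd α (fun k hk => (hA0 k hk).1) ?_
          (fun k hk => (hR0 k hk).1)
        intro k hk
        by_cases hk0 : k = 0
        · rw [hk0]; exact h
        · exact (hQoff k hk hk0).1
      · right
        refine eq_zero_of_vanish d hd α' (fun k hk => (hA0 k hk).2) ?_
          (fun k hk => (hR0 k hk).2)
        intro k hk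
        by_cases hk0 : k = 0
        · rw [hk0]; exact h
        · exact (hQoff k hk hk0).2
    · by_cases b3 : r < 2 * d
      · -- case D
        have hdr : d < r := by omega
        have hA0 : ∀ k, k < d → Aof d α k = 0 ∧ Aof d α' k = 0 := by
          intro k hk
          have h1 := gam_A d α hα k hk
          have h2 := gam_A d α' hα' k hk
          have h3 := hAsum k
          rw [bA_D d r hd hr hdr b3 k] at h3; omega
        have hA0a : ∀ k, Aof d α k = 0 := by
          intro k
          by_cases hk : k < d
          · exact (hA0 k hk).1
          · exact Aof_pad d α k hk
        have hA0a' : ∀ k, Aof d α' k = 0 := by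
          intro k
          by_cases hk : k < d
          · exact (hA0 k hk).2
          · exact Aof_pad d α' k hk
        have hQoff : ∀ k, k < d → k + d ≠ r → Qv d α k = 0 ∧ Qv d α' k = 0 := by
          intro k hk hkk
          have h1 := gam_Q d α hα k hk
          have h2 := gam_Q d α' hα' k hk
          have h3 := hQsum k
          rw [bQ_D d r hd hr hdr b3 k, if_neg hkk] at h3; omega
        have hQz : ∀ k, k + d ≠ r → Qv d α k = 0 := by
          intro k hkk
          by_cases hk : k < d
          · exact (hQoff k hk hkk).1
          · exact Qv_pad d α k (by omega)
        have hQz' : ∀ k, k + d ≠ r → Qv d α' k = 0 := by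
          intro k hkk
          by_cases hk : k < d
          · exact (hQoff k hk hkk).2
          · exact Qv_pad d α' k (by omega)
        have hRoff : ∀ k, k + 1 < d → k + d + 1 ≠ r → Rv d α k = 0 ∧ Rv d α' k = 0 := by
          intro k hk hkk
          have h1 := gam_R d α hα k (by omega)
          have h2 := gam_R d α' hα' k (by omega)
          have h3 := hRsum k
          rw [bR_D d r hd hr hdr b3 k, if_neg hkk] at h3; omega
        have hRzA : ∀ k, k + d + 1 ≠ r → Rv d α k = 0 := by
          intro k hkk
          by_cases hk : k + 1 < d
          · exact (hRoff k hk hkk).1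
          · have p1 : Aof d α (k + 1) = 0 := Aof_pad _ _ _ (by omega)
            have p2 : Bof d α (k + 1) = 0 := Bof_pad _ _ _ (by omega)
            have p3 : Cof d α k = 0 := Cof_pad _ _ _ (by omega)
            have p4 : Cof d α (k + 1) = 0 := Cof_pad _ _ _ (by omega)
            simp only [Rv, p1, p2, p3, p4, hA0a k]; ring
        have hRzA' : ∀ k, k + d + 1 ≠ r → Rv d α' k = 0 := by
          intro k hkk
          by_cases hk : k + 1 < d
          · exact (hRoff k hk hkk).2
          · have p1 : Aof d α' (k + 1) = 0 := Aof_pad _ _ _ (by omega)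
            have p2 : Bof d α' (k + 1) = 0 := Bof_pad _ _ _ (by omega)
            have p3 : Cof d α' k = 0 := Cof_pad _ _ _ (by omega)
            have p4 : Cof d α' (k + 1) = 0 := Cof_pad _ _ _ (by omega)
            simp only [Rv, p1, p2, p3, p4, hA0a' k]; ring
        have hsQj : Qv d α (r - d) + Qv d α' (r - d) = 1 := by
          have h3 := hQsum (r - d)
          rw [bQ_D d r hd hr hdr b3 (r - d), if_pos (by omega)] at h3; omega
        have hsRj : Rv d α (r - d - 1) + Rv d α' (r - d - 1) = 1 := by
          have h3 := hRsum (r - d - 1)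
          rw [bR_D d r hd hr hdr b3 (r - d - 1), if_pos (by omega)] at h3; omega
        have hCj : Cof d α (r - d - 1)
            = Rv d α (r - d - 1) - 2 * Qv d α (r - d) - Aof d α (r - d - 1) := by
          have h := Cof_identity d α (r - d - 1)
          rwa [show r - d - 1 + 1 = r - d from by omega] at h
        have hCj' : Cof d α' (r - d - 1)
            = Rv d α' (r - d - 1) - 2 * Qv d α' (r - d) - Aof d α' (r - d - 1) := by
          have h := Cof_identity d α' (r - d - 1)
          rwa [show r - d - 1 + 1 = r - d from by omega] at h
        have hCj1 : Cof d α (r - d) = 0 := by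
          have h := Cof_identity d α (r - d)
          rw [hRzA (r - d) (by omega), hQz (r - d + 1) (by omega), hA0a (r - d)] at h
          omega
        have hCj1' : Cof d α' (r - d) = 0 := by
          have h := Cof_identity d α' (r - d)
          rw [hRzA' (r - d) (by omega), hQz' (r - d + 1) (by omega), hA0a' (r - d)] at h
          omega
        have hBj1 : Bof d α (r - d) = -(Qv d α (r - d)) - Cof d α (r - d - 1) := by
          have h := Bof_identity d α (r - d)
          rw [if_neg (show ¬ (r - d = 0) from by omega), hA0a (r - d), hCj1] at h
          omega
        have hBj1' : Bof d α' (r - d) = -(Qv d α' (r - d)) - Cof d α' (r - d - 1) := by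
          have h := Bof_identity d α' (r - d)
          rw [if_neg (show ¬ (r - d = 0) from by omega), hA0a' (r - d), hCj1'] at h
          omega
        have hGj : Gv d α (r - d - 1) = 2 * Rv d α (r - d - 1) - Qv d α (r - d) := by
          simp only [Gv]
          rw [show r - d - 1 + 1 = r - d from by omega]
          rw [hBj1, hCj, hCj1, hA0a (r - d - 1), hA0a (r - d)]
          ring
        have hGj' : Gv d α' (r - d - 1) = 2 * Rv d α' (r - d - 1) - Qv d α' (r - d) := by
          simp only [Gv]
          rw [show r - d - 1 + 1 = r - d from by omega]
          rw [hBj1', hCj', hCj1', hA0a' (r - d - 1), hA0a' (r - d)]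
          ring
        have hg1 := gam_G d α hα (r - d - 1) (by omega)
        have hg2 := gam_G d α' hα' (r - d - 1) (by omega)
        rw [hGj] at hg1
        rw [hGj'] at hg2
        have hq1 := gam_Q d α hα (r - d) (by omega)
        have hq2 := gam_Q d α' hα' (r - d) (by omega)
        have hr1 := gam_R d α hα (r - d - 1) (by omega)
        have hr2 := gam_R d α' hα' (r - d - 1) (by omega)
        have key : (Qv d α (r - d) = 0 ∧ Rv d α (r - d - 1) = 0) ∨
            (Qv d α' (r - d) = 0 ∧ Rv d α' (r - d - 1) = 0) := by omega
        rcases key with ⟨hs, ht⟩ | ⟨hs, ht⟩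
        · left
          refine eq_zero_of_vanish d hd α (fun k hk => (hA0 k hk).1) ?_ ?_
          · intro k hk
            by_cases hkj : k + d = r
            · rw [show k = r - d from by omega]; exact hs
            · exact hQz k hkj
          · intro k hk
            by_cases hkj : k + d + 1 = r
            · rw [show k = r - d - 1 from by omega]; exact ht
            · exact hRzA k hkj
        · right
          refine eq_zero_of_vanish d hd α' (fun k hk => (hA0 k hk).2) ?_ ?_
          · intro k hk
            by_cases hkj : k + d = r
            · rw [show k = r - d from by omega]; exact hs
            · exact hQz' k hkj
          · intro k hk
            by_cases hkj : k + d + 1 = r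
            · rw [show k = r - d - 1 from by omega]; exact ht
            · exact hRzA' k hkj
      · -- case E
        have hce : 2 * d ≤ r := by omega
        have hA0 : ∀ k, k < d → Aof d α k = 0 ∧ Aof d α' k = 0 := by
          intro k hk
          have h1 := gam_A d α hα k hk
          have h2 := gam_A d α' hα' k hk
          have h3 := hAsum k
          rw [bA_E d r hd hr hce k] at h3; omega
        have hQ0 : ∀ k, k < d → Qv d α k = 0 ∧ Qv d α' k = 0 := by
          intro k hk
          have h1 := gam_Q d α hα k hk
          have h2 := gam_Q d α' hα' k hk
          have h3 := hQsum k
          rw [bQ_E d r hd hr hce k] at h3; omega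
        have hRoff : ∀ k, k + 1 < d → k + 2 * d ≠ r → Rv d α k = 0 ∧ Rv d α' k = 0 := by
          intro k hk hkk
          have h1 := gam_R d α hα k (by omega)
          have h2 := gam_R d α' hα' k (by omega)
          have h3 := hRsum k
          rw [bR_E d r hd hr hce k, if_neg hkk] at h3; omega
        have hRj : Rv d α (r - 2 * d) = 0 ∨ Rv d α' (r - 2 * d) = 0 := by
          have h1 := gam_R d α hα (r - 2 * d) (by omega)
          have h2 := gam_R d α' hα' (r - 2 * d) (by omega)
          have h3 := hRsum (r - 2 * d)
          rw [bR_E d r hd hr hce (r - 2 * d), if_pos (by omega)] at h3; omega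
        rcases hRj with h | h
        · left
          refine eq_zero_of_vanish d hd α (fun k hk => (hA0 k hk).1)
            (fun k hk => (hQ0 k hk).1) ?_
          intro k hk
          by_cases hkj : k + 2 * d = r
          · rw [show k = r - 2 * d from by omega]; exact h
          · exact (hRoff k hk hkj).1
        · right
          refine eq_zero_of_vanish d hd α' (fun k hk => (hA0 k hk).2)
            (fun k hk => (hQ0 k hk).2) ?_
          intro k hk
          by_cases hkj : k + 2 * d = r
          · rw [show k = r - 2 * d from by omega]; exact h
          · exact (hRoff k hk hkj).2

end BetaAux

/-- For `d ≥ 1` and each `i ∈ {1,…,3d-1}`, the vector `β_i` lies in the semigroup `Γ` and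
is a minimal (irreducible) element of `Γ`: whenever `β_i = α + α'` with `α, α' ∈ Γ`,
one has `α = 0` or `α' = 0`. -/
theorem betaVec_mem_Gamma_and_minimal (d : ℕ) (hd : 1 ≤ d) (i : Fin (3 * d - 1)) :
    betaVec d i.val ∈ GammaSet d ∧
      ∀ α α' : Fin (3 * d - 1) → ℤ, α ∈ GammaSet d → α' ∈ GammaSet d →
        betaVec d i.val = α + α' → α = 0 ∨ α' = 0 := by
  exact ⟨BetaAux.beta_mem d hd i.val i.isLt,
    fun α α' hα hα' hsum => BetaAux.beta_min d hd i.val i.isLt α α' hα hα' hsum⟩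
end

section
/- Let d ≥ 1. The vectors β_1,…,β_{3d−1} generate the semigroup Γ: every element of Γ equals Σ_{i=1}^{3d−1} λ_i β_i for some nonnegative integers λ_i. Moreover, β_1,…,β_{3d−1} form a ℤ-basis of the lattice ℤ^{3d−1}. -/
open Finset in
lemma sum_ite_eq_pt {M : Type*} [AddCommMonoid M] (s : Finset ℕ) (P : ℕ → Prop)
    [DecidablePred P] (f : ℕ → M) (a : ℕ) (ha : a ∈ s) (hP : ∀ r ∈ s, P r ↔ r = a) :
    ∑ r ∈ s, (if P r then f r else 0) = f a := by
  rw [Finset.sum_eq_single_of_mem a ha]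
  · rw [if_pos ((hP a ha).mpr rfl)]
  · intro b hb hba
    rw [if_neg (fun h => hba ((hP b hb).mp h))]

open Finset in
lemma deltaI {M : Type*} [AddCommMonoid M] (a b u v : ℕ) (f : ℕ → M) :
    (∑ r ∈ Finset.Ico a b, if u = r + v then f r else 0)
      = if a + v ≤ u ∧ u < b + v then f (u - v) else 0 := by
  split_ifs with h
  · exact sum_ite_eq_pt _ _ _ (u - v) (by simp [Finset.mem_Ico]; omega)
      (by intro r hr; simp [Finset.mem_Ico] at hr; omega)
  · apply Finset.sum_eq_zero
    intro r hr; simp [Finset.mem_Ico] at hr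
    rw [if_neg (by omega)]

/-- Explicit formula for `∑ r, l r * betaEnt d r k` (valid for `d ≥ 2`). -/
def Eform (d : ℕ) (l : ℕ → ℤ) (k : ℕ) : ℤ :=
  if k < d then l k
  else if k = d then -(l d) + l (d + 1) - l (2 * d)
  else if k < 2 * d - 1 then l (k - (d + 1)) + l (k + 1) - l (k + d - 1) - l (k + d)
  else if k = 2 * d - 1 then l (d - 2) - l (d - 1) - l (3 * d - 2)
  else -(l (k - 2 * d)) - l (k + 1 - d) + l k

set_option maxHeartbeats 2000000 in
lemma sumS (d : ℕ) (hd : 2 ≤ d) (l : ℕ → ℤ) (k : ℕ) (hk : k < 3 * d - 1) :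
    ∑ r ∈ Finset.range (3 * d - 1), l r * betaEnt d r k = Eform d l k := by
  rw [Finset.range_eq_Ico,
    ← Finset.sum_Ico_consecutive _ (show 0 ≤ 2*d by omega) (show 2*d ≤ 3*d-1 by omega),
    ← Finset.sum_Ico_consecutive _ (show 0 ≤ d+1 by omega) (show d+1 ≤ 2*d by omega),
    ← Finset.sum_Ico_consecutive _ (show 0 ≤ d by omega) (show d ≤ d+1 by omega),
    ← Finset.sum_Ico_consecutive _ (show 0 ≤ d-1 by omega) (show d-1 ≤ d by omega)]
  have hs2 : Finset.Ico (d-1) d = {d-1} := by ext x; simp only [Finset.mem_Ico, Finset.mem_singleton]; omega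
  have hs3 : Finset.Ico d (d+1) = {d} := by ext x; simp only [Finset.mem_Ico, Finset.mem_singleton]; omega
  rw [hs2, hs3, Finset.sum_singleton, Finset.sum_singleton]
  have hch1 : ∑ r ∈ Finset.Ico 0 (d-1), l r * betaEnt d r k
      = ((∑ r ∈ Finset.Ico 0 (d-1), if k = r + 0 then l r else 0)
        + ∑ r ∈ Finset.Ico 0 (d-1), if k = r + (d+1) then l r else 0)
        - ∑ r ∈ Finset.Ico 0 (d-1), if k = r + 2*d then l r else 0 := by
    rw [← Finset.sum_add_distrib, ← Finset.sum_sub_distrib]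
    apply Finset.sum_congr rfl
    intro r hr; simp [Finset.mem_Ico] at hr
    rw [betaEnt, if_pos (by omega)]
    split_ifs <;> omega
  have hch4 : ∑ r ∈ Finset.Ico (d+1) (2*d), l r * betaEnt d r k
      = (∑ r ∈ Finset.Ico (d+1) (2*d), if k + 1 = r + 0 then l r else 0)
        - ∑ r ∈ Finset.Ico (d+1) (2*d), if k + 1 = r + d then l r else 0 := by
    rw [← Finset.sum_sub_distrib]
    apply Finset.sum_congr rfl
    intro r hr; simp [Finset.mem_Ico] at hr
    rw [betaEnt, if_neg (by omega), if_neg (by omega), if_neg (by omega), if_pos (by omega)]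
    split_ifs <;> omega
  have hch5 : ∑ r ∈ Finset.Ico (2*d) (3*d-1), l r * betaEnt d r k
      = ((-∑ r ∈ Finset.Ico (2*d) (3*d-1), if k + d = r + 0 then l r else 0)
        - ∑ r ∈ Finset.Ico (2*d) (3*d-1), if k + d = r + 1 then l r else 0)
        + ∑ r ∈ Finset.Ico (2*d) (3*d-1), if k = r + 0 then l r else 0 := by
    rw [← Finset.sum_neg_distrib, ← Finset.sum_sub_distrib, ← Finset.sum_add_distrib]
    apply Finset.sum_congr rfl
    intro r hr; simp [Finset.mem_Ico] at hr
    rw [betaEnt, if_neg (by omega), if_neg (by omega), if_neg (by omega), if_neg (by omega)]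
    split_ifs <;> omega
  have hch2 : l (d-1) * betaEnt d (d-1) k
      = (if k = d-1 then l (d-1) else 0) - (if k = 2*d-1 then l (d-1) else 0) := by
    rw [betaEnt, if_neg (by omega), if_pos rfl]
    split_ifs <;> omega
  have hch3 : l d * betaEnt d d k = -(if k = d then l d else 0) := by
    rw [betaEnt, if_neg (by omega), if_neg (by omega), if_pos rfl]
    split_ifs <;> omega
  rw [hch1, hch2, hch3, hch4, hch5, deltaI, deltaI, deltaI, deltaI, deltaI, deltaI, deltaI, deltaI]
  simp only [Nat.sub_zero, Nat.add_zero, Nat.zero_add]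
  rcases (by omega : k < d - 1 ∨ k = d - 1 ∨ k = d ∨ (d+1 ≤ k ∧ k < 2*d-1) ∨ k = 2*d-1 ∨ 2*d ≤ k)
    with h | h | h | h | h | h
  · simp only [Eform]
    omega
  · rw [h]; simp only [Eform, if_true]
    omega
  · rw [h, show d + d = 2 * d from by ring]; simp only [Eform, if_true]
    omega
  · simp only [Eform]
    omega
  · rw [h, show 2*d-1-(d+1) = d - 2 from by omega, show 2*d-1+d-1 = 3*d-2 from by omega]
    simp only [Eform, if_true]
    omega
  · simp only [Eform]
    omega


/-- Explicit inverse: the coordinates of `α` in the basis `β`. -/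
def lamFun (d : ℕ) (α : ℕ → ℤ) (r : ℕ) : ℤ :=
  if r < d then α r
  else if r = d then -(α 0 + α d + α (2 * d))
  else if r < 2 * d - 1 then -(α (r - d) + α r + α (d + r - 1) + α (d + r))
  else if r = 2 * d - 1 then -(α (d - 1) + α (2 * d - 1) + α (3 * d - 2))
  else if r < 3 * d - 2 then α (r - 2 * d) - α (r - 2 * d + 1) - α (r - d + 1) - α (r + 1)
  else α (d - 2) - α (d - 1) - α (2 * d - 1)

section BranchLemmas
variable (d : ℕ) (f : ℕ → ℤ)

lemma lamF1 (r : ℕ) (h : r < d) : lamFun d f r = f r := by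
  rw [lamFun, if_pos h]
lemma lamF2 : lamFun d f d = -(f 0 + f d + f (2 * d)) := by
  rw [lamFun, if_neg (by omega), if_pos rfl]
lemma lamF3 (r : ℕ) (h1 : d < r) (h2 : r < 2 * d - 1) :
    lamFun d f r = -(f (r - d) + f r + f (d + r - 1) + f (d + r)) := by
  rw [lamFun, if_neg (by omega), if_neg (by omega), if_pos h2]
lemma lamF4 (hd : 2 ≤ d) :
    lamFun d f (2 * d - 1) = -(f (d - 1) + f (2 * d - 1) + f (3 * d - 2)) := by
  rw [lamFun, if_neg (by omega), if_neg (by omega), if_neg (by omega), if_pos rfl]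
lemma lamF5 (r : ℕ) (h1 : 2 * d - 1 < r) (h2 : r < 3 * d - 2) :
    lamFun d f r = f (r - 2 * d) - f (r - 2 * d + 1) - f (r - d + 1) - f (r + 1) := by
  rw [lamFun, if_neg (by omega), if_neg (by omega), if_neg (by omega), if_neg (by omega),
    if_pos h2]
lemma lamF6 (hd : 2 ≤ d) :
    lamFun d f (3 * d - 2) = f (d - 2) - f (d - 1) - f (2 * d - 1) := by
  rw [lamFun, if_neg (by omega), if_neg (by omega), if_neg (by omega), if_neg (by omega),
    if_neg (by omega)]

lemma EF1 (k : ℕ) (h : k < d) : Eform d f k = f k := by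
  rw [Eform, if_pos h]
lemma EF2 (hd : 1 ≤ d) : Eform d f d = -(f d) + f (d + 1) - f (2 * d) := by
  rw [Eform, if_neg (by omega), if_pos rfl]
lemma EF3 (k : ℕ) (h1 : d < k) (h2 : k < 2 * d - 1) :
    Eform d f k = f (k - (d + 1)) + f (k + 1) - f (k + d - 1) - f (k + d) := by
  rw [Eform, if_neg (by omega), if_neg (by omega), if_pos h2]
lemma EF4 (hd : 2 ≤ d) :
    Eform d f (2 * d - 1) = f (d - 2) - f (d - 1) - f (3 * d - 2) := by
  rw [Eform, if_neg (by omega), if_neg (by omega), if_neg (by omega), if_pos rfl]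
lemma EF5 (k : ℕ) (hd : 2 ≤ d) (h1 : 2 * d - 1 < k) :
    Eform d f k = -(f (k - 2 * d)) - f (k + 1 - d) + f k := by
  rw [Eform, if_neg (by omega), if_neg (by omega), if_neg (by omega), if_neg (by omega)]
end BranchLemmas

lemma lam_Eform (d : ℕ) (hd : 3 ≤ d) (l : ℕ → ℤ) (S : ℕ → ℤ)
    (hS : ∀ k, S k = if k < 3 * d - 1 then Eform d l k else 0)
    (r : ℕ) (hr : r < 3 * d - 1) : lamFun d S r = l r := by
  have hS' : ∀ k, k < 3 * d - 1 → S k = Eform d l k := fun k hk => by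
    rw [hS, if_pos hk]
  rcases (by omega : r < d ∨ r = d ∨ (d + 1 ≤ r ∧ r ≤ 2*d-2) ∨ r = 2*d-1 ∨
      (2*d ≤ r ∧ r ≤ 3*d-3) ∨ r = 3*d-2) with h | h | h | h | h | h
  · rw [lamF1 _ _ _ h, hS' _ (by omega), EF1 _ _ _ h]
  · rw [h, lamF2, hS' _ (by omega), hS' _ (by omega), hS' _ (by omega),
      EF1 _ _ _ (by omega), EF2 _ _ (by omega), EF5 _ _ _ (by omega) (by omega)]
    simp only [show 2*d-2*d = 0 from by omega, show 2*d+1-d = d+1 from by omega]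
    ring
  · rw [lamF3 _ _ _ (by omega) (by omega), hS' _ (by omega), hS' _ (by omega),
      hS' _ (by omega), hS' _ (by omega),
      EF1 _ _ _ (by omega), EF3 _ _ _ (by omega) (by omega),
      EF5 _ _ (d+r-1) (by omega) (by omega), EF5 _ _ (d+r) (by omega) (by omega)]
    simp only [show d+r-1-2*d = r-(d+1) from by omega, show d+r-1+1-d = r from by omega,
      show d+r-2*d = r-d from by omega, show d+r+1-d = r+1 from by omega,
      show r+d-1 = d+r-1 from by omega, show r+d = d+r from by omega]
    ring
  · rw [h, lamF4 _ _ (by omega), hS' _ (by omega), hS' _ (by omega), hS' _ (by omega),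
      EF1 _ _ _ (by omega), EF4 _ _ (by omega), EF5 _ _ _ (by omega) (by omega)]
    simp only [show 3*d-2-2*d = d-2 from by omega, show 3*d-2+1-d = 2*d-1 from by omega]
    ring
  · rw [lamF5 _ _ _ (by omega) (by omega), hS' _ (by omega), hS' _ (by omega),
      hS' _ (by omega), hS' _ (by omega),
      EF1 _ _ _ (by omega), EF1 _ _ (r-2*d+1) (by omega),
      EF3 _ _ _ (by omega) (by omega), EF5 _ _ (r+1) (by omega) (by omega)]
    simp only [show r-d+1+d-1 = r from by omega]
    simp only [show r-d+1-(d+1) = r-2*d from by omega, show r-d+1+1 = r-d+2 from by omega,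
      show r-d+1+d = r+1 from by omega,
      show r+1-2*d = r-2*d+1 from by omega, show r+1+1-d = r-d+2 from by omega]
    ring
  · rw [h, lamF6 _ _ (by omega), hS' _ (by omega), hS' _ (by omega), hS' _ (by omega),
      EF1 _ _ _ (by omega), EF1 _ _ (d-1) (by omega), EF4 _ _ (by omega)]
    ring

lemma Eform_lam (d : ℕ) (hd : 3 ≤ d) (α : ℕ → ℤ) (k : ℕ) (hk : k < 3 * d - 1) :
    Eform d (lamFun d α) k = α k := by
  rcases (by omega : k < d ∨ k = d ∨ (d + 1 ≤ k ∧ k ≤ 2*d-3) ∨ k = 2*d-2 ∨ k = 2*d-1 ∨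
      (2*d ≤ k ∧ k ≤ 3*d-3) ∨ k = 3*d-2) with h | h | h | h | h | h | h
  · rw [EF1 _ _ _ h, lamF1 _ _ _ h]
  · rw [h, EF2 _ _ (by omega), lamF2, lamF3 _ _ _ (by omega) (by omega),
      lamF5 _ _ _ (by omega) (by omega)]
    simp only [show d+(d+1)-1 = 2*d from by omega, show 2*d-2*d+1 = 1 from by omega]
    simp only [show d+1-d = 1 from by omega,
      show d+(d+1) = 2*d+1 from by omega, show 2*d-2*d = 0 from by omega,
      show 2*d-d+1 = d+1 from by omega]
    ring
  · rw [EF3 _ _ _ (by omega) (by omega), lamF1 _ _ _ (by omega),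
      lamF3 _ _ (k+1) (by omega) (by omega), lamF5 _ _ (k+d-1) (by omega) (by omega),
      lamF5 _ _ (k+d) (by omega) (by omega)]
    simp only [show d+(k+1)-1 = k+d from by omega, show k+d-1-2*d+1 = k-d from by omega,
      show k+d-2*d+1 = k+1-d from by omega, show k+d-1-d+1 = k from by omega,
      show k+d-1+1 = k+d from by omega]
    simp only [show d+(k+1) = k+d+1 from by omega,
      show k+d-1-2*d = k-(d+1) from by omega,
      show k+d-2*d = k-d from by omega,
      show k+d-d+1 = k+1 from by omega, show k+1-d-d = k+1-2*d from by omega]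
    simp only [show k+1-d = k-d+1 from by omega]
    ring
  · rw [h, EF3 _ _ _ (by omega) (by omega), lamF1 _ _ _ (by omega),
      lamF5 _ _ (2*d-2+d-1) (by omega) (by omega)]
    simp only [show 2*d-2+d-1-2*d+1 = d-2 from by omega,
      show 2*d-2+d-1-d+1 = 2*d-2 from by omega, show 2*d-2+d-1+1 = 3*d-2 from by omega]
    simp only [show 2*d-2+d-1-2*d = d-3 from by omega, show 2*d-2-(d+1) = d-3 from by omega]
    rw [show 2*d-2+1 = 2*d-1 from by omega, show 2*d-2+d = 3*d-2 from by omega,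
      lamF4 _ _ (by omega), lamF6 _ _ (by omega)]
    ring
  · rw [h, EF4 _ _ (by omega), lamF1 _ _ _ (by omega), lamF1 _ _ (d-1) (by omega),
      lamF6 _ _ (by omega)]
    ring
  · rw [EF5 _ _ _ (by omega) (by omega), lamF1 _ _ _ (by omega),
      lamF3 _ _ (k+1-d) (by omega) (by omega), lamF5 _ _ k (by omega) (by omega)]
    simp only [show d+(k+1-d)-1 = k from by omega]
    simp only [show k+1-d-d = k+1-2*d from by omega,
      show d+(k+1-d) = k+1 from by omega, show k-2*d+1 = k+1-2*d from by omega,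
      show k-d+1 = k+1-d from by omega]
    ring
  · rw [h, EF5 _ _ _ (by omega) (by omega)]
    rw [show 3*d-2+1-d = 2*d-1 from by omega, show 3*d-2-2*d = d-2 from by omega,
      lamF1 _ _ _ (by omega), lamF4 _ _ (by omega), lamF6 _ _ (by omega)]
    ring

/-- zero-extension of a vector to ℕ -/
def extA (d : ℕ) (α : Fin (3 * d - 1) → ℤ) : ℕ → ℤ :=
  fun m => if h : m < 3 * d - 1 then α ⟨m, h⟩ else 0

lemma extA_lt (d : ℕ) (α : Fin (3 * d - 1) → ℤ) (m : ℕ) (h : m < 3 * d - 1) :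
    extA d α m = α ⟨m, h⟩ := dif_pos h

lemma extA_ge (d : ℕ) (α : Fin (3 * d - 1) → ℤ) (m : ℕ) (h : 3 * d - 1 ≤ m) :
    extA d α m = 0 := dif_neg (by omega)

/-- evaluation at `Y = e_j` gives `a_j`. -/
lemma tropY1 (d : ℕ) (hd : 1 ≤ d) (α : Fin (3 * d - 1) → ℤ) (j : ℕ) (hj : j < d) :
    tropVec d α (fun t => if t.val = j then 1 else 0)
      = ((extA d α j : ℤ) : ℝ) := by
  rw [tropVec, tropChar]
  have e1 : (∑ i : Fin d, ((α ⟨i.val, by have := i.isLt; omega⟩ : ℤ) : ℝ) *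
      (fun t : Fin d => if t.val = j then (1:ℝ) else 0) i)
      = ∑ n ∈ Finset.range d, (if n = j then ((extA d α n : ℤ) : ℝ) else 0) := by
    rw [← Fin.sum_univ_eq_sum_range (fun n => if n = j then ((extA d α n : ℤ) : ℝ) else 0) d]
    apply Finset.sum_congr rfl
    intro i _
    simp only
    rw [extA_lt d α i.val (by have := i.isLt; omega)]
    split_ifs <;> simp
  rw [e1, Finset.sum_ite_eq' (Finset.range d) j, if_pos (Finset.mem_range.mpr hj)]
  have e2 : (∑ i : Fin d, ((α ⟨d + i.val, by have := i.isLt; omega⟩ : ℤ) : ℝ) *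
      min 0 ((fun t : Fin d => if t.val = j then (1:ℝ) else 0) i)) = 0 := by
    apply Finset.sum_eq_zero
    intro i _
    simp only
    split_ifs <;> simp
  rw [e2]
  have e3 : (∑ i : Fin (d - 1), ((α ⟨2 * d + i.val, by have := i.isLt; omega⟩ : ℤ) : ℝ) *
      min 0 (min ((fun t : Fin d => if t.val = j then (1:ℝ) else 0) ⟨i.val, by have := i.isLt; omega⟩)
        ((fun t : Fin d => if t.val = j then (1:ℝ) else 0) ⟨i.val, by have := i.isLt; omega⟩ +
         (fun t : Fin d => if t.val = j then (1:ℝ) else 0) ⟨i.val + 1, by have := i.isLt; omega⟩))) = 0 := by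
    apply Finset.sum_eq_zero
    intro i _
    simp only
    split_ifs <;> norm_num
  rw [e3]
  ring

/-- evaluation at `Y = -e_j`. -/
lemma tropY2 (d : ℕ) (hd : 1 ≤ d) (α : Fin (3 * d - 1) → ℤ) (j : ℕ) (hj : j < d) :
    tropVec d α (fun t => if t.val = j then (-1:ℝ) else 0)
      = -(((extA d α j : ℤ) : ℝ) + ((extA d α (d + j) : ℤ) : ℝ)
          + (if 1 ≤ j then ((extA d α (2 * d + j - 1) : ℤ) : ℝ) else 0)
          + (if j + 1 < d then ((extA d α (2 * d + j) : ℤ) : ℝ) else 0)) := by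
  rw [tropVec, tropChar]
  have e1 : (∑ i : Fin d, ((α ⟨i.val, by have := i.isLt; omega⟩ : ℤ) : ℝ) *
      (fun t : Fin d => if t.val = j then (-1:ℝ) else 0) i)
      = ∑ n ∈ Finset.range d, (if n = j then -((extA d α n : ℤ) : ℝ) else 0) := by
    rw [← Fin.sum_univ_eq_sum_range (fun n => if n = j then -((extA d α n : ℤ) : ℝ) else 0) d]
    apply Finset.sum_congr rfl
    intro i _
    simp only
    rw [extA_lt d α i.val (by have := i.isLt; omega)]
    split_ifs <;> simp
  rw [e1, Finset.sum_ite_eq' (Finset.range d) j, if_pos (Finset.mem_range.mpr hj)]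
  have e2 : (∑ i : Fin d, ((α ⟨d + i.val, by have := i.isLt; omega⟩ : ℤ) : ℝ) *
      min 0 ((fun t : Fin d => if t.val = j then (-1:ℝ) else 0) i))
      = ∑ n ∈ Finset.range d, (if n = j then -((extA d α (d + n) : ℤ) : ℝ) else 0) := by
    rw [← Fin.sum_univ_eq_sum_range (fun n => if n = j then -((extA d α (d + n) : ℤ) : ℝ) else 0) d]
    apply Finset.sum_congr rfl
    intro i _
    simp only
    rw [extA_lt d α (d + i.val) (by have := i.isLt; omega)]
    split_ifs <;> norm_num
  rw [e2, Finset.sum_ite_eq' (Finset.range d) j, if_pos (Finset.mem_range.mpr hj)]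
  have e3 : (∑ i : Fin (d - 1), ((α ⟨2 * d + i.val, by have := i.isLt; omega⟩ : ℤ) : ℝ) *
      min 0 (min ((fun t : Fin d => if t.val = j then (-1:ℝ) else 0) ⟨i.val, by have := i.isLt; omega⟩)
        ((fun t : Fin d => if t.val = j then (-1:ℝ) else 0) ⟨i.val, by have := i.isLt; omega⟩ +
         (fun t : Fin d => if t.val = j then (-1:ℝ) else 0) ⟨i.val + 1, by have := i.isLt; omega⟩)))
      = ∑ n ∈ Finset.range (d - 1),
          ((if n = j then -((extA d α (2 * d + n) : ℤ) : ℝ) else 0)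
            + (if 1 ≤ j ∧ n = j - 1 then -((extA d α (2 * d + n) : ℤ) : ℝ) else 0)) := by
    rw [← Fin.sum_univ_eq_sum_range (fun n =>
      (if n = j then -((extA d α (2 * d + n) : ℤ) : ℝ) else 0)
        + (if 1 ≤ j ∧ n = j - 1 then -((extA d α (2 * d + n) : ℤ) : ℝ) else 0)) (d - 1)]
    apply Finset.sum_congr rfl
    intro i _
    simp only [Fin.val_mk]
    rw [extA_lt d α (2 * d + i.val) (by have := i.isLt; omega)]
    split_ifs <;> first | (exfalso; omega) | norm_num
  rw [e3, Finset.sum_add_distrib]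
  have s1 : ∑ n ∈ Finset.range (d - 1), (if n = j then -((extA d α (2 * d + n) : ℤ) : ℝ) else 0)
      = if j + 1 < d then -((extA d α (2 * d + j) : ℤ) : ℝ) else 0 := by
    rw [Finset.sum_ite_eq' (Finset.range (d - 1)) j (fun n => -((extA d α (2 * d + n) : ℤ) : ℝ))]
    by_cases h2 : j + 1 < d
    · rw [if_pos (Finset.mem_range.mpr (by omega)), if_pos h2]
    · rw [if_neg (fun hm => h2 (by have := Finset.mem_range.mp hm; omega)), if_neg h2]
  have s2 : ∑ n ∈ Finset.range (d - 1),
        (if 1 ≤ j ∧ n = j - 1 then -((extA d α (2 * d + n) : ℤ) : ℝ) else 0)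
      = if 1 ≤ j then -((extA d α (2 * d + j - 1) : ℤ) : ℝ) else 0 := by
    by_cases hj1 : 1 ≤ j
    · have hc : ∀ n ∈ Finset.range (d - 1),
          (if 1 ≤ j ∧ n = j - 1 then -((extA d α (2 * d + n) : ℤ) : ℝ) else 0)
            = (if n = j - 1 then -((extA d α (2 * d + n) : ℤ) : ℝ) else 0) := by
        intro n _
        split_ifs <;> first | rfl | (exfalso; omega)
      rw [Finset.sum_congr rfl hc,
        Finset.sum_ite_eq' (Finset.range (d - 1)) (j - 1)
          (fun n => -((extA d α (2 * d + n) : ℤ) : ℝ)),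
        if_pos (Finset.mem_range.mpr (by omega)), if_pos hj1,
        show 2 * d + (j - 1) = 2 * d + j - 1 from by omega]
    · rw [if_neg hj1]
      apply Finset.sum_eq_zero
      intro n _
      rw [if_neg (by omega)]
  rw [s1, s2]
  split_ifs <;> ring

/-- evaluation at `Y = e_i - e_{i+1}`. -/
lemma tropY3 (d : ℕ) (α : Fin (3 * d - 1) → ℤ) (i : ℕ) (hi : i + 1 < d) :
    tropVec d α (fun t => if t.val = i then (1:ℝ) else if t.val = i + 1 then (-1:ℝ) else 0)
      = ((extA d α i : ℤ) : ℝ) - ((extA d α (i + 1) : ℤ) : ℝ) - ((extA d α (d + i + 1) : ℤ) : ℝ)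
        - (if i + 2 < d then ((extA d α (2 * d + i + 1) : ℤ) : ℝ) else 0) := by
  rw [tropVec, tropChar]
  have e1 : (∑ t : Fin d, ((α ⟨t.val, by have := t.isLt; omega⟩ : ℤ) : ℝ) *
      (fun t : Fin d => if t.val = i then (1:ℝ) else if t.val = i + 1 then (-1:ℝ) else 0) t)
      = ∑ n ∈ Finset.range d, ((if n = i then ((extA d α n : ℤ) : ℝ) else 0)
          + (if n = i + 1 then -((extA d α n : ℤ) : ℝ) else 0)) := by
    rw [← Fin.sum_univ_eq_sum_range (fun n => (if n = i then ((extA d α n : ℤ) : ℝ) else 0)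
          + (if n = i + 1 then -((extA d α n : ℤ) : ℝ) else 0)) d]
    apply Finset.sum_congr rfl
    intro t _
    simp only
    rw [extA_lt d α t.val (by have := t.isLt; omega)]
    split_ifs <;> first | (exfalso; omega) | norm_num
  rw [e1, Finset.sum_add_distrib,
    Finset.sum_ite_eq' (Finset.range d) i (fun n => ((extA d α n : ℤ) : ℝ)),
    Finset.sum_ite_eq' (Finset.range d) (i+1) (fun n => -((extA d α n : ℤ) : ℝ)),
    if_pos (Finset.mem_range.mpr (by omega)), if_pos (Finset.mem_range.mpr (by omega))]
  have e2 : (∑ t : Fin d, ((α ⟨d + t.val, by have := t.isLt; omega⟩ : ℤ) : ℝ) *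
      min 0 ((fun t : Fin d => if t.val = i then (1:ℝ) else if t.val = i + 1 then (-1:ℝ) else 0) t))
      = ∑ n ∈ Finset.range d, (if n = i + 1 then -((extA d α (d + n) : ℤ) : ℝ) else 0) := by
    rw [← Fin.sum_univ_eq_sum_range (fun n =>
      if n = i + 1 then -((extA d α (d + n) : ℤ) : ℝ) else 0) d]
    apply Finset.sum_congr rfl
    intro t _
    simp only
    rw [extA_lt d α (d + t.val) (by have := t.isLt; omega)]
    split_ifs <;> first | (exfalso; omega) | norm_num
  rw [e2, Finset.sum_ite_eq' (Finset.range d) (i+1)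
      (fun n => -((extA d α (d + n) : ℤ) : ℝ)),
    if_pos (Finset.mem_range.mpr (by omega)), show d + (i + 1) = d + i + 1 from by omega]
  have e3 : (∑ t : Fin (d - 1), ((α ⟨2 * d + t.val, by have := t.isLt; omega⟩ : ℤ) : ℝ) *
      min 0 (min ((fun t : Fin d => if t.val = i then (1:ℝ) else if t.val = i + 1 then (-1:ℝ) else 0)
          ⟨t.val, by have := t.isLt; omega⟩)
        ((fun t : Fin d => if t.val = i then (1:ℝ) else if t.val = i + 1 then (-1:ℝ) else 0)
          ⟨t.val, by have := t.isLt; omega⟩ +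
         (fun t : Fin d => if t.val = i then (1:ℝ) else if t.val = i + 1 then (-1:ℝ) else 0)
          ⟨t.val + 1, by have := t.isLt; omega⟩)))
      = ∑ n ∈ Finset.range (d - 1), (if n = i + 1 then -((extA d α (2 * d + n) : ℤ) : ℝ) else 0) := by
    rw [← Fin.sum_univ_eq_sum_range (fun n =>
      if n = i + 1 then -((extA d α (2 * d + n) : ℤ) : ℝ) else 0) (d - 1)]
    apply Finset.sum_congr rfl
    intro t _
    simp only [Fin.val_mk]
    rw [extA_lt d α (2 * d + t.val) (by have := t.isLt; omega)]
    split_ifs <;> first | (exfalso; omega) | norm_num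
  rw [e3, Finset.sum_ite_eq' (Finset.range (d - 1)) (i+1)
      (fun n => -((extA d α (2 * d + n) : ℤ) : ℝ))]
  by_cases h2 : i + 2 < d
  · rw [if_pos (Finset.mem_range.mpr (by omega)), if_pos h2,
      show 2 * d + (i + 1) = 2 * d + i + 1 from by omega]
    ring
  · rw [if_neg (fun hm => h2 (by have := Finset.mem_range.mp hm; omega)), if_neg h2]
    ring

lemma lamFun_nonneg (d : ℕ) (hd : 1 ≤ d) (α : Fin (3 * d - 1) → ℤ)
    (hG : α ∈ GammaSet d) (r : ℕ) (hr : r < 3 * d - 1) :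
    0 ≤ lamFun d (extA d α) r := by
  have h1 : ∀ j, j < d → (0:ℤ) ≤ extA d α j := by
    intro j hj
    have h := hG (fun t => if t.val = j then 1 else 0)
    rw [tropY1 d hd α j hj] at h
    exact_mod_cast h
  have h2 : ∀ j, j < d → (0:ℤ) ≤ -(extA d α j + extA d α (d + j)
      + (if 1 ≤ j then extA d α (2 * d + j - 1) else 0)
      + (if j + 1 < d then extA d α (2 * d + j) else 0)) := by
    intro j hj
    have h := hG (fun t => if t.val = j then (-1:ℝ) else 0)
    rw [tropY2 d hd α j hj] at h
    split_ifs at h ⊢ <;> exact_mod_cast h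
  have h3 : ∀ i, i + 1 < d → (0:ℤ) ≤ extA d α i - extA d α (i + 1) - extA d α (d + i + 1)
      - (if i + 2 < d then extA d α (2 * d + i + 1) else 0) := by
    intro i hi
    have h := hG (fun t => if t.val = i then (1:ℝ) else if t.val = i + 1 then (-1:ℝ) else 0)
    rw [tropY3 d α i hi] at h
    split_ifs at h ⊢ <;> exact_mod_cast h
  rcases (by omega : r < d ∨ r = d ∨ (d < r ∧ r < 2*d-1) ∨ (d < r ∧ r = 2*d-1) ∨
      (2*d-1 < r ∧ r < 3*d-2) ∨ (d < r ∧ r = 3*d-2)) with h | h | h | h | h | h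
  · rw [lamF1 _ _ _ h]; exact h1 r h
  · rw [h, lamF2]
    have ha := h2 0 (by omega)
    simp only [Nat.add_zero] at ha
    by_cases hd2 : 2 ≤ d
    · omega
    · have hz := extA_ge d α (2 * d) (by omega)
      omega
  · rw [lamF3 _ _ _ h.1 h.2]
    have ha := h2 (r - d) (by omega)
    simp only [show d + (r - d) = r from by omega, show 2*d + (r - d) - 1 = d + r - 1 from by omega,
      show 2*d + (r - d) = d + r from by omega] at ha
    omega
  · rw [h.2, lamF4 _ _ (by omega)]
    have ha := h2 (d - 1) (by omega)
    simp only [show d + (d - 1) = 2*d - 1 from by omega,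
      show 2*d + (d - 1) - 1 = 3*d - 2 from by omega] at ha
    omega
  · rw [lamF5 _ _ _ h.1 h.2]
    have ha := h3 (r - 2*d) (by omega)
    simp only [show d + (r - 2*d) + 1 = r - d + 1 from by omega,
      show 2*d + (r - 2*d) + 1 = r + 1 from by omega] at ha
    omega
  · rw [h.2, lamF6 _ _ (by omega)]
    have ha := h3 (d - 2) (by omega)
    simp only [show d - 2 + 1 = d - 1 from by omega,
      show d + (d - 2) + 1 = 2*d - 1 from by omega] at ha
    omega


lemma repr_all (d : ℕ) (hd : 1 ≤ d) (α : ℕ → ℤ) (hz : ∀ m, 3 * d - 1 ≤ m → α m = 0)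
    (k : ℕ) (hk : k < 3 * d - 1) :
    ∑ r ∈ Finset.range (3 * d - 1), lamFun d α r * betaEnt d r k = α k := by
  rcases (by omega : d = 1 ∨ d = 2 ∨ 3 ≤ d) with h | h | h
  · subst h
    have h2 := hz 2 (by norm_num)
    have L0 : lamFun 1 α 0 = α 0 := by norm_num [lamFun]
    have L1 : lamFun 1 α 1 = -(α 0 + α 1 + α 2) := by norm_num [lamFun]
    interval_cases k <;>
      norm_num [Finset.sum_range_succ, betaEnt, L0, L1] <;> omega
  · subst h
    have L0 : lamFun 2 α 0 = α 0 := by norm_num [lamFun]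
    have L1 : lamFun 2 α 1 = α 1 := by norm_num [lamFun]
    have L2 : lamFun 2 α 2 = -(α 0 + α 2 + α 4) := by norm_num [lamFun]
    have L3 : lamFun 2 α 3 = -(α 1 + α 3 + α 4) := by norm_num [lamFun]
    have L4 : lamFun 2 α 4 = α 0 - α 1 - α 3 := by norm_num [lamFun]
    interval_cases k <;>
      norm_num [Finset.sum_range_succ, betaEnt, L0, L1, L2, L3, L4] <;> omega
  · rw [sumS d (by omega) _ k hk, Eform_lam d h α k hk]

lemma uniq_all (d : ℕ) (hd : 1 ≤ d) (l : ℕ → ℤ) (S : ℕ → ℤ)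
    (hS : ∀ k, S k = if k < 3 * d - 1 then
      ∑ r ∈ Finset.range (3 * d - 1), l r * betaEnt d r k else 0)
    (r : ℕ) (hr : r < 3 * d - 1) : lamFun d S r = l r := by
  rcases (by omega : d = 1 ∨ d = 2 ∨ 3 ≤ d) with h | h | h
  · subst h
    have hS0 : S 0 = l 0 := by rw [hS]; norm_num [Finset.sum_range_succ, betaEnt]
    have hS1 : S 1 = -l 0 - l 1 := by rw [hS]; norm_num [Finset.sum_range_succ, betaEnt]; ring
    have hS2 : S 2 = 0 := by rw [hS]; norm_num
    interval_cases r <;> norm_num [lamFun, hS0, hS1, hS2] <;> omega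
  · subst h
    have hS0 : S 0 = l 0 := by rw [hS]; norm_num [Finset.sum_range_succ, betaEnt]
    have hS1 : S 1 = l 1 := by rw [hS]; norm_num [Finset.sum_range_succ, betaEnt]
    have hS2 : S 2 = -l 2 + l 3 - l 4 := by
      rw [hS]; norm_num [Finset.sum_range_succ, betaEnt]; ring
    have hS3 : S 3 = l 0 - l 1 - l 4 := by
      rw [hS]; norm_num [Finset.sum_range_succ, betaEnt]; ring
    have hS4 : S 4 = -l 0 - l 3 + l 4 := by
      rw [hS]; norm_num [Finset.sum_range_succ, betaEnt]; ring
    interval_cases r <;> norm_num [lamFun, hS0, hS1, hS2, hS3, hS4] <;> omega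
  · have hS' : ∀ k, S k = if k < 3 * d - 1 then Eform d l k else 0 := by
      intro k
      by_cases hk : k < 3 * d - 1
      · rw [hS, if_pos hk, if_pos hk, sumS d (by omega) l k hk]
      · rw [hS, if_neg hk, if_neg hk]
    exact lam_Eform d h l S hS' r hr

/-- For `d ≥ 1`, the vectors `β_1, …, β_{3d-1}` generate the semigroup `Γ`: every element
of `Γ` is `Σ λ_i β_i` with nonnegative integer coefficients. Moreover, `β_1, …, β_{3d-1}`
form a `ℤ`-basis of the lattice `ℤ^{3d-1}`: every `α ∈ ℤ^{3d-1}` can be written uniquely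
as a `ℤ`-linear combination of them. -/
theorem betaVec_generate_Gamma_and_basis (d : ℕ) (hd : 1 ≤ d) :
    (∀ α ∈ GammaSet d, ∃ lam : Fin (3 * d - 1) → ℕ,
        α = ∑ i : Fin (3 * d - 1), (lam i : ℤ) • betaVec d i.val) ∧
    (∀ α : Fin (3 * d - 1) → ℤ, ∃! lam : Fin (3 * d - 1) → ℤ,
        α = ∑ i : Fin (3 * d - 1), lam i • betaVec d i.val) := by
  classical
  have key : ∀ (L : ℕ → ℤ) (lam : Fin (3 * d - 1) → ℤ),
      (∀ i : Fin (3 * d - 1), L i.val = lam i) →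
      ∀ k : Fin (3 * d - 1), (∑ i : Fin (3 * d - 1), lam i • betaVec d i.val) k
        = ∑ r ∈ Finset.range (3 * d - 1), L r * betaEnt d r k.val := by
    intro L lam hL k
    rw [Finset.sum_apply,
      ← Fin.sum_univ_eq_sum_range (fun r => L r * betaEnt d r k.val) (3 * d - 1)]
    apply Finset.sum_congr rfl
    intro i _
    simp only [Pi.smul_apply, smul_eq_mul, betaVec, hL i]
  have main : ∀ (α : Fin (3 * d - 1) → ℤ) (lam : Fin (3 * d - 1) → ℤ),
      (∀ i : Fin (3 * d - 1), lam i = lamFun d (extA d α) i.val) →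
      α = ∑ i : Fin (3 * d - 1), lam i • betaVec d i.val := by
    intro α lam hlam
    funext k
    rw [key (fun r => lamFun d (extA d α) r) lam (fun i => (hlam i).symm) k,
      repr_all d hd (extA d α) (fun m hm => extA_ge d α m hm) k.val k.isLt,
      extA_lt d α k.val k.isLt, Fin.eta]
  constructor
  · intro α hα
    refine ⟨fun i => (lamFun d (extA d α) i.val).toNat, ?_⟩
    have hpos : ∀ i : Fin (3 * d - 1),
        (((lamFun d (extA d α) i.val).toNat : ℤ)) = lamFun d (extA d α) i.val :=
      fun i => Int.toNat_of_nonneg (lamFun_nonneg d hd α hα i.val i.isLt)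
    exact main α _ hpos
  · intro α
    refine ⟨fun i => lamFun d (extA d α) i.val, main α _ (fun i => rfl), ?_⟩
    intro lam' hlam'
    funext i
    have hS : ∀ k : ℕ, extA d α k = if k < 3 * d - 1 then
        ∑ r ∈ Finset.range (3 * d - 1),
          (if h : r < 3 * d - 1 then lam' ⟨r, h⟩ else 0) * betaEnt d r k else 0 := by
      intro k
      by_cases hk : k < 3 * d - 1
      · rw [if_pos hk, extA_lt d α k hk]
        conv_lhs => rw [hlam']
        exact key (fun r => if h : r < 3 * d - 1 then lam' ⟨r, h⟩ else 0) lam'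
          (fun i => by simp only [dif_pos i.isLt, Fin.eta]) ⟨k, hk⟩
      · rw [if_neg hk, extA_ge d α k (by omega)]
    have hu := uniq_all d hd (fun r => if h : r < 3 * d - 1 then lam' ⟨r, h⟩ else 0)
      (extA d α) hS i.val i.isLt
    have hbeta : (fun r => if h : r < 3 * d - 1 then lam' ⟨r, h⟩ else 0) i.val = lam' i := by
      simp only [dif_pos i.isLt, Fin.eta]
    exact (hu.trans hbeta).symm
end
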